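/- arXiv:1509.01924 — 8 statements merged into one kernel-verified Lean document; each statement's English description precedes it below -/
import Mathlib

section
/- There exists a metric δ on ℝ³ that is Lipschitz-equivalent to the Euclidean metric (i.e., there are constants 0 < c ≤ C with c·|p − q| ≤ δ(p, q) ≤ C·|p − q| for all p, q ∈ ℝ³) such that every map w_n^{rs}, for r, s ∈ {1,2} and 1 ≤ n ≤ K^{rs}, is a contraction with respect to δ. -/
open Set

noncomputable def eDist (p q : ℝ × ℝ × ℝ) : ℝ :=
  Real.sqrt ((p.1 - q.1) ^ 2 + (p.2.1 - q.2.1) ^ 2 + (p.2.2 - q.2.2) ^ 2)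

/-!
The join-up conditions together with (★) force every horizontal part `L_n^{rs}` to have
slope in `[0, 1)`: it maps an interval `[x_0, x_P]` onto a strictly shorter interval
`[x_{j-1}, x_j]`. Hence each map contracts the first coordinate, while on the last two
coordinates it is controlled by `|α| < 1` and `|β| + |γ| < 1`, up to the coupling terms
`c x` and `e x`. Measuring distances by `θ |Δx| + |Δy| + |Δz|` with a weight `θ` so large
that `|c| + |e| ≤ θ (1 - |a|) / 2` for all finitely many maps, the coupling is absorbed and
every map becomes a contraction; this `ℓ¹`-type metric is equivalent to the Euclidean one.
-/

def weightedDist (θ : ℝ) (p q : ℝ × ℝ × ℝ) : ℝ :=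
  θ * |p.1 - q.1| + |p.2.1 - q.2.1| + |p.2.2 - q.2.2|

def triAffine (a b c d e f α β γ : ℝ) (p : ℝ × ℝ × ℝ) : ℝ × ℝ × ℝ :=
  (a * p.1 + b, c * p.1 + α * p.2.1 + β * p.2.2 + d, e * p.1 + γ * p.2.2 + f)

section WeightedDist

variable {θ : ℝ}

lemma weightedDist_nonneg (hθ : 0 ≤ θ) (p q : ℝ × ℝ × ℝ) : 0 ≤ weightedDist θ p q := by
  unfold weightedDist
  positivity

lemma weightedDist_comm (p q : ℝ × ℝ × ℝ) : weightedDist θ p q = weightedDist θ q p := by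
  rw [weightedDist, weightedDist, abs_sub_comm p.1, abs_sub_comm p.2.1, abs_sub_comm p.2.2]

lemma weightedDist_eq_zero_iff (hθ : 0 < θ) {p q : ℝ × ℝ × ℝ} :
    weightedDist θ p q = 0 ↔ p = q := by
  rw [weightedDist, add_eq_zero_iff_of_nonneg (by positivity) (abs_nonneg _),
    add_eq_zero_iff_of_nonneg (by positivity) (abs_nonneg _)]
  simp [hθ.ne', sub_eq_zero, Prod.ext_iff, and_assoc]

lemma weightedDist_triangle (hθ : 0 ≤ θ) (p q r : ℝ × ℝ × ℝ) :
    weightedDist θ p r ≤ weightedDist θ p q + weightedDist θ q r := by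
  have h1 := mul_le_mul_of_nonneg_left (abs_sub_le p.1 q.1 r.1) hθ
  have h2 := abs_sub_le p.2.1 q.2.1 r.2.1
  have h3 := abs_sub_le p.2.2 q.2.2 r.2.2
  simp only [weightedDist]
  linarith

lemma eDist_le_weightedDist (hθ : 1 ≤ θ) (p q : ℝ × ℝ × ℝ) :
    eDist p q ≤ weightedDist θ p q := by
  have hsum : |p.1 - q.1| + |p.2.1 - q.2.1| + |p.2.2 - q.2.2| ≤ weightedDist θ p q := by
    have := le_mul_of_one_le_left (abs_nonneg (p.1 - q.1)) hθ
    rw [weightedDist]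
    linarith
  refine Real.sqrt_le_iff.2 ⟨weightedDist_nonneg (by linarith) p q, ?_⟩
  calc _ ≤ (|p.1 - q.1| + |p.2.1 - q.2.1| + |p.2.2 - q.2.2|) ^ 2 := by
        nlinarith [sq_abs (p.1 - q.1), sq_abs (p.2.1 - q.2.1), sq_abs (p.2.2 - q.2.2),
          abs_nonneg (p.1 - q.1), abs_nonneg (p.2.1 - q.2.1), abs_nonneg (p.2.2 - q.2.2)]
    _ ≤ _ := pow_le_pow_left₀ (by positivity) hsum 2

lemma weightedDist_le_mul_eDist (hθ : 0 ≤ θ) (p q : ℝ × ℝ × ℝ) :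
    weightedDist θ p q ≤ (θ + 2) * eDist p q := by
  have hu : |p.1 - q.1| ≤ eDist p q := Real.abs_le_sqrt (by nlinarith)
  have hv : |p.2.1 - q.2.1| ≤ eDist p q := Real.abs_le_sqrt (by nlinarith)
  have hw : |p.2.2 - q.2.2| ≤ eDist p q := Real.abs_le_sqrt (by nlinarith)
  have := mul_le_mul_of_nonneg_left hu hθ
  simp only [weightedDist]
  linarith

end WeightedDist

section TriAffine

variable {a b c d e f α β γ θ : ℝ}

lemma weightedDist_triAffine_le (p q : ℝ × ℝ × ℝ) :
    weightedDist θ (triAffine a b c d e f α β γ p) (triAffine a b c d e f α β γ q) ≤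
      (θ * |a| + |c| + |e|) * |p.1 - q.1| + |α| * |p.2.1 - q.2.1| +
        (|β| + |γ|) * |p.2.2 - q.2.2| := by
  set u := p.1 - q.1
  set v := p.2.1 - q.2.1
  set w := p.2.2 - q.2.2
  have hx : a * p.1 + b - (a * q.1 + b) = a * u := by ring
  have hy : c * p.1 + α * p.2.1 + β * p.2.2 + d - (c * q.1 + α * q.2.1 + β * q.2.2 + d) =
      c * u + α * v + β * w := by ring
  have hz : e * p.1 + γ * p.2.2 + f - (e * q.1 + γ * q.2.2 + f) = e * u + γ * w := by ring
  have hy' : |c * u + α * v + β * w| ≤ |c| * |u| + |α| * |v| + |β| * |w| := by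
    simpa only [abs_mul] using abs_add_three (c * u) (α * v) (β * w)
  have hz' : |e * u + γ * w| ≤ |e| * |u| + |γ| * |w| := by
    simpa only [abs_mul] using abs_add_le (e * u) (γ * w)
  simp only [weightedDist, triAffine, hx, hy, hz, abs_mul]
  nlinarith

lemma exists_contraction_triAffine (hθ : 0 ≤ θ) (ha : |a| < 1) (hα : |α| < 1)
    (hβγ : |β| + |γ| < 1) (hθa : 2 * (|c| + |e|) / (1 - |a|) ≤ θ) :
    ∃ k : ℝ, 0 ≤ k ∧ k < 1 ∧ ∀ p q, weightedDist θ (triAffine a b c d e f α β γ p)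
      (triAffine a b c d e f α β γ q) ≤ k * weightedDist θ p q := by
  set k := max ((1 + |a|) / 2) (max |α| (|β| + |γ|))
  have hck : θ * |a| + |c| + |e| ≤ θ * k := by
    have := (div_le_iff₀ (by linarith)).1 hθa
    have := mul_le_mul_of_nonneg_left (le_max_left ((1 + |a|) / 2) (max |α| (|β| + |γ|))) hθ
    linarith
  refine ⟨k, by positivity, max_lt (by linarith) (max_lt hα hβγ), fun p q => ?_⟩
  have hαk : |α| ≤ k := (le_max_left _ _).trans (le_max_right _ _)
  have hβγk : |β| + |γ| ≤ k := (le_max_right _ _).trans (le_max_right _ _)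
  calc _ ≤ (θ * |a| + |c| + |e|) * |p.1 - q.1| + |α| * |p.2.1 - q.2.1| +
        (|β| + |γ|) * |p.2.2 - q.2.2| := weightedDist_triAffine_le p q
    _ ≤ θ * k * |p.1 - q.1| + k * |p.2.1 - q.2.1| + k * |p.2.2 - q.2.2| := by gcongr
    _ = k * weightedDist θ p q := by rw [weightedDist]; ring

lemma abs_lt_one_of_triAffine_eq {p p' q q' : ℝ × ℝ × ℝ}
    (h : triAffine a b c d e f α β γ p = q) (h' : triAffine a b c d e f α β γ p' = q')
    (hq : q.1 ≤ q'.1) (hgap : q'.1 - q.1 < p'.1 - p.1) : |a| < 1 := by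
  have hslope : a * (p'.1 - p.1) = q'.1 - q.1 := by
    rw [← h, ← h', triAffine, triAffine]
    ring
  have ha : 0 ≤ a := by nlinarith
  rw [abs_of_nonneg ha]
  nlinarith

end TriAffine

section StrictMonoOn

variable {X : ℕ → ℝ} {N m : ℕ}

lemma StrictMonoOn.pred_le (hX : StrictMonoOn X (Iic N)) (hm : m ≤ N) : X (m - 1) ≤ X m :=
  hX.monotoneOn (show m - 1 ≤ N by omega) hm (Nat.sub_le m 1)

lemma StrictMonoOn.sub_pred_lt_sub (hX : StrictMonoOn X (Iic N)) (hN : 2 ≤ N) (hm : 1 ≤ m)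
    (hmN : m ≤ N) : X m - X (m - 1) < X N - X 0 := by
  rcases hmN.lt_or_eq with hlt | rfl
  · have := hX hmN (le_refl N) hlt
    have := hX.monotoneOn (Nat.zero_le N) (show m - 1 ≤ N by omega) (Nat.zero_le (m - 1))
    linarith
  · have := hX (Nat.zero_le m) (show m - 1 ≤ m by omega) (by omega : 0 < m - 1)
    linarith

end StrictMonoOn

lemma exists_forall_le_of_finite {ι : Type*} [Finite ι] (K : ι → ℕ) (g : ι → ℕ → ℝ) :
    ∃ C, ∀ i, ∀ n ≤ K i, g i n ≤ C := by
  obtain ⟨C, hC⟩ := (finite_iUnion fun i => (finite_Iic (K i)).image (g i)).bddAbove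
  exact ⟨C, fun i n hn => hC (mem_iUnion.2 ⟨i, mem_image_of_mem _ hn⟩)⟩

theorem stmt_3_general
    (N M : ℕ) (hN : 2 ≤ N) (hM : 2 ≤ M)
    (x1 y1 z1 x2 y2 z2 : ℕ → ℝ)
    (hx1 : ∀ i, i < N → x1 i < x1 (i + 1))
    (hx2 : ∀ j, j < M → x2 j < x2 (j + 1))
    (hstar1 : ∀ i, 1 ≤ i → i ≤ N → x1 i - x1 (i - 1) < x2 M - x2 0)
    (hstar2 : ∀ j, 1 ≤ j → j ≤ M → x2 j - x2 (j - 1) < x1 N - x1 0)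
    (K : Fin 2 → Fin 2 → ℕ)
    (hK1 : K 0 0 + K 0 1 = N) (hK2 : K 1 0 + K 1 1 = M)
    (a b c d e f α β γ : Fin 2 → Fin 2 → ℕ → ℝ)
    (hα : ∀ r s n, 1 ≤ n → n ≤ K r s → |α r s n| < 1)
    (hβγ : ∀ r s n, 1 ≤ n → n ≤ K r s → |β r s n| + |γ r s n| < 1)
    (w : Fin 2 → Fin 2 → ℕ → ℝ × ℝ × ℝ → ℝ × ℝ × ℝ)
    (hw : ∀ r s n p, w r s n p =
      (a r s n * p.1 + b r s n,
       c r s n * p.1 + α r s n * p.2.1 + β r s n * p.2.2 + d r s n,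
       e r s n * p.1 + γ r s n * p.2.2 + f r s n))
    (hj11 : ∀ n, 1 ≤ n → n ≤ K 0 0 →
      w 0 0 n (x1 0, y1 0, z1 0) = (x1 (n - 1), y1 (n - 1), z1 (n - 1)) ∧
      w 0 0 n (x1 N, y1 N, z1 N) = (x1 n, y1 n, z1 n))
    (hj12 : ∀ n, 1 ≤ n → n ≤ K 0 1 →
      w 0 1 n (x2 0, y2 0, z2 0) =
        (x1 (K 0 0 + n - 1), y1 (K 0 0 + n - 1), z1 (K 0 0 + n - 1)) ∧
      w 0 1 n (x2 M, y2 M, z2 M) = (x1 (K 0 0 + n), y1 (K 0 0 + n), z1 (K 0 0 + n)))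
    (hj21 : ∀ n, 1 ≤ n → n ≤ K 1 0 →
      w 1 0 n (x1 0, y1 0, z1 0) = (x2 (n - 1), y2 (n - 1), z2 (n - 1)) ∧
      w 1 0 n (x1 N, y1 N, z1 N) = (x2 n, y2 n, z2 n))
    (hj22 : ∀ n, 1 ≤ n → n ≤ K 1 1 →
      w 1 1 n (x2 0, y2 0, z2 0) =
        (x2 (K 1 0 + n - 1), y2 (K 1 0 + n - 1), z2 (K 1 0 + n - 1)) ∧
      w 1 1 n (x2 M, y2 M, z2 M) = (x2 (K 1 0 + n), y2 (K 1 0 + n), z2 (K 1 0 + n))) :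
    ∃ δ : (ℝ × ℝ × ℝ) → (ℝ × ℝ × ℝ) → ℝ,
      (∀ p q, 0 ≤ δ p q) ∧
      (∀ p q, δ p q = δ q p) ∧
      (∀ p q, δ p q = 0 ↔ p = q) ∧
      (∀ p q r', δ p r' ≤ δ p q + δ q r') ∧
      (∃ cl cu : ℝ, 0 < cl ∧ cl ≤ cu ∧
        ∀ p q, cl * eDist p q ≤ δ p q ∧ δ p q ≤ cu * eDist p q) ∧
      (∀ (r s : Fin 2) (n : ℕ), 1 ≤ n → n ≤ K r s →
        ∃ k : ℝ, 0 ≤ k ∧ k < 1 ∧ ∀ p q, δ (w r s n p) (w r s n q) ≤ k * δ p q) := by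
  have mono1 : StrictMonoOn x1 (Iic N) := strictMonoOn_Iic_of_lt_succ hx1
  have mono2 : StrictMonoOn x2 (Iic M) := strictMonoOn_Iic_of_lt_succ hx2
  obtain rfl : w = fun r s n => triAffine (a r s n) (b r s n) (c r s n) (d r s n) (e r s n)
      (f r s n) (α r s n) (β r s n) (γ r s n) := by
    funext r s n p
    exact hw r s n p
  have ha : ∀ r s n, 1 ≤ n → n ≤ K r s → |a r s n| < 1 := by
    intro r s n hn hnK
    fin_cases r <;> fin_cases s <;> simp only [Fin.zero_eta, Fin.mk_one, Fin.isValue] at hnK ⊢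
    · exact abs_lt_one_of_triAffine_eq (hj11 n hn hnK).1 (hj11 n hn hnK).2
        (mono1.pred_le (by omega)) (mono1.sub_pred_lt_sub hN hn (by omega))
    · exact abs_lt_one_of_triAffine_eq (hj12 n hn hnK).1 (hj12 n hn hnK).2
        (mono1.pred_le (by omega)) (hstar1 _ (by omega) (by omega))
    · exact abs_lt_one_of_triAffine_eq (hj21 n hn hnK).1 (hj21 n hn hnK).2
        (mono2.pred_le (by omega)) (hstar2 n hn (by omega))
    · exact abs_lt_one_of_triAffine_eq (hj22 n hn hnK).1 (hj22 n hn hnK).2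
        (mono2.pred_le (by omega)) (mono2.sub_pred_lt_sub hM (by omega) (by omega))
  obtain ⟨C, hC⟩ := exists_forall_le_of_finite (fun i : Fin 2 × Fin 2 => K i.1 i.2)
    fun i n => 2 * (|c i.1 i.2 n| + |e i.1 i.2 n|) / (1 - |a i.1 i.2 n|)
  have hθ : 1 ≤ max 1 C := le_max_left 1 C
  refine ⟨weightedDist (max 1 C), weightedDist_nonneg (by linarith), weightedDist_comm,
    fun p q => weightedDist_eq_zero_iff (by linarith), weightedDist_triangle (by linarith),
    ⟨1, max 1 C + 2, one_pos, by linarith, fun p q =>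
      ⟨(one_mul _).trans_le (eDist_le_weightedDist hθ p q),
        weightedDist_le_mul_eDist (by linarith) p q⟩⟩,
    fun r s n hn hnK => exists_contraction_triAffine (by linarith) (ha r s n hn hnK)
      (hα r s n hn hnK) (hβγ r s n hn hnK) ((hC (r, s) n hnK).trans (le_max_right 1 C))⟩

theorem stmt_3
    (N M : ℕ) (hN : 2 ≤ N) (hM : 2 ≤ M)
    (x1 y1 z1 x2 y2 z2 : ℕ → ℝ)
    (hx1 : ∀ i, i < N → x1 i < x1 (i + 1))
    (hx2 : ∀ j, j < M → x2 j < x2 (j + 1))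
    (hstar1 : ∀ i, 1 ≤ i → i ≤ N → x1 i - x1 (i - 1) < x2 M - x2 0)
    (hstar2 : ∀ j, 1 ≤ j → j ≤ M → x2 j - x2 (j - 1) < x1 N - x1 0)
    (K : Fin 2 → Fin 2 → ℕ)
    (hK1 : K 0 0 + K 0 1 = N) (hK2 : K 1 0 + K 1 1 = M)
    (a b c d e f α β γ : Fin 2 → Fin 2 → ℕ → ℝ)
    (hα : ∀ r s n, 1 ≤ n → n ≤ K r s → |α r s n| < 1)
    (hγ : ∀ r s n, 1 ≤ n → n ≤ K r s → |γ r s n| < 1)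
    (hβγ : ∀ r s n, 1 ≤ n → n ≤ K r s → |β r s n| + |γ r s n| < 1)
    (w : Fin 2 → Fin 2 → ℕ → ℝ × ℝ × ℝ → ℝ × ℝ × ℝ)
    (hw : ∀ r s n p, w r s n p =
      (a r s n * p.1 + b r s n,
       c r s n * p.1 + α r s n * p.2.1 + β r s n * p.2.2 + d r s n,
       e r s n * p.1 + γ r s n * p.2.2 + f r s n))
    (hj11 : ∀ n, 1 ≤ n → n ≤ K 0 0 →
      w 0 0 n (x1 0, y1 0, z1 0) = (x1 (n - 1), y1 (n - 1), z1 (n - 1)) ∧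
      w 0 0 n (x1 N, y1 N, z1 N) = (x1 n, y1 n, z1 n))
    (hj12 : ∀ n, 1 ≤ n → n ≤ K 0 1 →
      w 0 1 n (x2 0, y2 0, z2 0) =
        (x1 (K 0 0 + n - 1), y1 (K 0 0 + n - 1), z1 (K 0 0 + n - 1)) ∧
      w 0 1 n (x2 M, y2 M, z2 M) = (x1 (K 0 0 + n), y1 (K 0 0 + n), z1 (K 0 0 + n)))
    (hj21 : ∀ n, 1 ≤ n → n ≤ K 1 0 →
      w 1 0 n (x1 0, y1 0, z1 0) = (x2 (n - 1), y2 (n - 1), z2 (n - 1)) ∧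
      w 1 0 n (x1 N, y1 N, z1 N) = (x2 n, y2 n, z2 n))
    (hj22 : ∀ n, 1 ≤ n → n ≤ K 1 1 →
      w 1 1 n (x2 0, y2 0, z2 0) =
        (x2 (K 1 0 + n - 1), y2 (K 1 0 + n - 1), z2 (K 1 0 + n - 1)) ∧
      w 1 1 n (x2 M, y2 M, z2 M) = (x2 (K 1 0 + n), y2 (K 1 0 + n), z2 (K 1 0 + n))) :
    ∃ δ : (ℝ × ℝ × ℝ) → (ℝ × ℝ × ℝ) → ℝ,
      (∀ p q, 0 ≤ δ p q) ∧
      (∀ p q, δ p q = δ q p) ∧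
      (∀ p q, δ p q = 0 ↔ p = q) ∧
      (∀ p q r', δ p r' ≤ δ p q + δ q r') ∧
      (∃ cl cu : ℝ, 0 < cl ∧ cl ≤ cu ∧
        ∀ p q, cl * eDist p q ≤ δ p q ∧ δ p q ≤ cu * eDist p q) ∧
      (∀ (r s : Fin 2) (n : ℕ), 1 ≤ n → n ≤ K r s →
        ∃ k : ℝ, 0 ≤ k ∧ k < 1 ∧ ∀ p q, δ (w r s n p) (w r s n q) ≤ k * δ p q) :=
  stmt_3_general N M hN hM x1 y1 z1 x2 y2 z2 hx1 hx2 hstar1 hstar2 K hK1 hK2 a b c d e f α β γ hα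
    hβγ w hw hj11 hj12 hj21 hj22
end

section
/- There exist nonempty compact sets G^1, G^2 ⊂ ℝ³ such that G^1 = (⋃_{n=1}^{K^{11}} w_n^{11}(G^1)) ∪ (⋃_{n=1}^{K^{12}} w_n^{12}(G^2)) and G^2 = (⋃_{n=1}^{K^{21}} w_n^{21}(G^1)) ∪ (⋃_{n=1}^{K^{22}} w_n^{22}(G^2)). -/
open Set
open scoped NNReal ENNReal

private lemma aux_infEdist_image {X : Type*} [PseudoEMetricSpace X] {L : ℝ≥0} {g : X → X}
    (hg : LipschitzWith L g) (x : X) {B : Set X} (hB : B.Nonempty) :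
    EMetric.infEdist (g x) (g '' B) ≤ L * EMetric.infEdist x B := by
  haveI : Nonempty B := hB.to_subtype
  have h1 : EMetric.infEdist x B = ⨅ y : B, edist x (y : X) := by
    rw [EMetric.infEdist]
    exact (iInf_subtype'' B fun y => edist x y).symm
  calc EMetric.infEdist (g x) (g '' B) ≤ ⨅ y : B, (L : ℝ≥0∞) * edist x (y : X) :=
      le_iInf fun y =>
        (EMetric.infEdist_le_edist_of_mem (mem_image_of_mem g y.2)).trans (hg.edist_le_mul x y)
    _ = (L : ℝ≥0∞) * ⨅ y : B, edist x (y : X) :=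
      (ENNReal.mul_iInf fun h => absurd h ENNReal.coe_ne_top).symm
    _ = _ := by rw [h1]

private lemma aux_hd_biUnion {X : Type*} [PseudoEMetricSpace X] {L : ℝ≥0} (I : Set ℕ)
    (v : ℕ → X → X) (hv : ∀ n ∈ I, LipschitzWith L (v n)) {A B : Set X}
    (hA : A.Nonempty) (hB : B.Nonempty) :
    EMetric.hausdorffEdist (⋃ n ∈ I, v n '' A) (⋃ n ∈ I, v n '' B)
      ≤ L * EMetric.hausdorffEdist A B := by
  apply EMetric.hausdorffEdist_le_of_infEdist
  · intro x hx
    simp only [mem_iUnion, mem_image] at hx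
    obtain ⟨n, hn, aPt, haPt, rfl⟩ := hx
    calc EMetric.infEdist (v n aPt) (⋃ m ∈ I, v m '' B)
        ≤ EMetric.infEdist (v n aPt) (v n '' B) :=
          EMetric.infEdist_anti (subset_biUnion_of_mem (u := fun m => v m '' B) hn)
      _ ≤ L * EMetric.infEdist aPt B := aux_infEdist_image (hv n hn) _ hB
      _ ≤ L * EMetric.hausdorffEdist A B :=
          mul_le_mul_right (EMetric.infEdist_le_hausdorffEdist_of_mem haPt) _
  · intro x hx
    simp only [mem_iUnion, mem_image] at hx
    obtain ⟨n, hn, bPt, hbPt, rfl⟩ := hx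
    calc EMetric.infEdist (v n bPt) (⋃ m ∈ I, v m '' A)
        ≤ EMetric.infEdist (v n bPt) (v n '' A) :=
          EMetric.infEdist_anti (subset_biUnion_of_mem (u := fun m => v m '' A) hn)
      _ ≤ L * EMetric.infEdist bPt A := aux_infEdist_image (hv n hn) _ hA
      _ ≤ L * EMetric.hausdorffEdist A B :=
          mul_le_mul_right ((EMetric.infEdist_le_hausdorffEdist_of_mem hbPt).trans_eq
            EMetric.hausdorffEdist_comm) _

private lemma aux_hd_union {X : Type*} [PseudoEMetricSpace X] {s1 s2 t1 t2 : Set X} :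
    EMetric.hausdorffEdist (s1 ∪ s2) (t1 ∪ t2)
      ≤ max (EMetric.hausdorffEdist s1 t1) (EMetric.hausdorffEdist s2 t2) := by
  apply EMetric.hausdorffEdist_le_of_infEdist
  · rintro x (hx | hx)
    · exact ((EMetric.infEdist_anti subset_union_left).trans
        (EMetric.infEdist_le_hausdorffEdist_of_mem hx)).trans (le_max_left _ _)
    · exact ((EMetric.infEdist_anti subset_union_right).trans
        (EMetric.infEdist_le_hausdorffEdist_of_mem hx)).trans (le_max_right _ _)
  · rintro x (hx | hx)
    · exact ((EMetric.infEdist_anti subset_union_left).trans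
        ((EMetric.infEdist_le_hausdorffEdist_of_mem hx).trans_eq
          EMetric.hausdorffEdist_comm)).trans (le_max_left _ _)
    · exact ((EMetric.infEdist_anti subset_union_right).trans
        ((EMetric.infEdist_le_hausdorffEdist_of_mem hx).trans_eq
          EMetric.hausdorffEdist_comm)).trans (le_max_right _ _)

private lemma aux_affine_lip (a b c d e f α β γ : ℝ) (L : ℝ≥0)
    (h1 : |a| ≤ (L : ℝ)) (h2 : |c| + |α| + |β| ≤ (L : ℝ)) (h3 : |e| + |γ| ≤ (L : ℝ)) :
    LipschitzWith L (fun p : ℝ × ℝ × ℝ =>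
      (a * p.1 + b, c * p.1 + α * p.2.1 + β * p.2.2 + d, e * p.1 + γ * p.2.2 + f)) := by
  apply LipschitzWith.of_dist_le_mul
  intro p q
  have hD0 : (0:ℝ) ≤ dist p q := dist_nonneg
  have hfst : ∀ (u w : ℝ × (ℝ × ℝ)), dist u.1 w.1 ≤ dist u w := fun u w => by
    rw [Prod.dist_eq]; exact le_max_left _ _
  have hsnd : ∀ (u w : ℝ × (ℝ × ℝ)), dist u.2 w.2 ≤ dist u w := fun u w => by
    rw [Prod.dist_eq]; exact le_max_right _ _
  have hfst2 : ∀ (u w : ℝ × ℝ), dist u.1 w.1 ≤ dist u w := fun u w => by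
    rw [Prod.dist_eq]; exact le_max_left _ _
  have hsnd2 : ∀ (u w : ℝ × ℝ), dist u.2 w.2 ≤ dist u w := fun u w => by
    rw [Prod.dist_eq]; exact le_max_right _ _
  have hx : |p.1 - q.1| ≤ dist p q := by
    rw [← Real.dist_eq]; exact hfst p q
  have hy : |p.2.1 - q.2.1| ≤ dist p q := by
    rw [← Real.dist_eq]; exact (hfst2 p.2 q.2).trans (hsnd p q)
  have hz : |p.2.2 - q.2.2| ≤ dist p q := by
    rw [← Real.dist_eq]; exact (hsnd2 p.2 q.2).trans (hsnd p q)
  rw [Prod.dist_eq, Prod.dist_eq]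
  simp only [Real.dist_eq]
  have hL0 : (0:ℝ) ≤ (L : ℝ) := L.2
  refine max_le ?_ (max_le ?_ ?_)
  · have h : a * p.1 + b - (a * q.1 + b) = a * (p.1 - q.1) := by ring
    rw [h, abs_mul]
    nlinarith [abs_nonneg a, abs_nonneg (p.1 - q.1), mul_le_mul_of_nonneg_left hx (abs_nonneg a),
      mul_le_mul_of_nonneg_right h1 hD0]
  · have h : c * p.1 + α * p.2.1 + β * p.2.2 + d - (c * q.1 + α * q.2.1 + β * q.2.2 + d)
        = c * (p.1 - q.1) + α * (p.2.1 - q.2.1) + β * (p.2.2 - q.2.2) := by ring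
    rw [h]
    have habs := abs_add_three (c * (p.1 - q.1)) (α * (p.2.1 - q.2.1)) (β * (p.2.2 - q.2.2))
    rw [abs_mul, abs_mul, abs_mul] at habs
    nlinarith [mul_le_mul_of_nonneg_left hx (abs_nonneg c),
      mul_le_mul_of_nonneg_left hy (abs_nonneg α),
      mul_le_mul_of_nonneg_left hz (abs_nonneg β),
      mul_le_mul_of_nonneg_right h2 hD0]
  · have h : e * p.1 + γ * p.2.2 + f - (e * q.1 + γ * q.2.2 + f)
        = e * (p.1 - q.1) + γ * (p.2.2 - q.2.2) := by ring
    rw [h]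
    have habs := abs_add_le (e * (p.1 - q.1)) (γ * (p.2.2 - q.2.2))
    rw [abs_mul, abs_mul] at habs
    nlinarith [mul_le_mul_of_nonneg_left hx (abs_nonneg e),
      mul_le_mul_of_nonneg_left hz (abs_nonneg γ),
      mul_le_mul_of_nonneg_right h3 hD0]

set_option maxHeartbeats 2000000 in
theorem stmt_4
    (N M : ℕ) (hN : 2 ≤ N) (hM : 2 ≤ M)
    (x1 y1 z1 x2 y2 z2 : ℕ → ℝ)
    (hx1 : ∀ i, i < N → x1 i < x1 (i + 1))
    (hx2 : ∀ j, j < M → x2 j < x2 (j + 1))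
    (hstar1 : ∀ i, 1 ≤ i → i ≤ N → x1 i - x1 (i - 1) < x2 M - x2 0)
    (hstar2 : ∀ j, 1 ≤ j → j ≤ M → x2 j - x2 (j - 1) < x1 N - x1 0)
    (K : Fin 2 → Fin 2 → ℕ)
    (hK1 : K 0 0 + K 0 1 = N) (hK2 : K 1 0 + K 1 1 = M)
    (a b c d e f α β γ : Fin 2 → Fin 2 → ℕ → ℝ)
    (hα : ∀ r s n, 1 ≤ n → n ≤ K r s → |α r s n| < 1)
    (hγ : ∀ r s n, 1 ≤ n → n ≤ K r s → |γ r s n| < 1)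
    (hβγ : ∀ r s n, 1 ≤ n → n ≤ K r s → |β r s n| + |γ r s n| < 1)
    (w : Fin 2 → Fin 2 → ℕ → ℝ × ℝ × ℝ → ℝ × ℝ × ℝ)
    (hw : ∀ r s n p, w r s n p =
      (a r s n * p.1 + b r s n,
       c r s n * p.1 + α r s n * p.2.1 + β r s n * p.2.2 + d r s n,
       e r s n * p.1 + γ r s n * p.2.2 + f r s n))
    (hj11 : ∀ n, 1 ≤ n → n ≤ K 0 0 →
      w 0 0 n (x1 0, y1 0, z1 0) = (x1 (n - 1), y1 (n - 1), z1 (n - 1)) ∧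
      w 0 0 n (x1 N, y1 N, z1 N) = (x1 n, y1 n, z1 n))
    (hj12 : ∀ n, 1 ≤ n → n ≤ K 0 1 →
      w 0 1 n (x2 0, y2 0, z2 0) =
        (x1 (K 0 0 + n - 1), y1 (K 0 0 + n - 1), z1 (K 0 0 + n - 1)) ∧
      w 0 1 n (x2 M, y2 M, z2 M) = (x1 (K 0 0 + n), y1 (K 0 0 + n), z1 (K 0 0 + n)))
    (hj21 : ∀ n, 1 ≤ n → n ≤ K 1 0 →
      w 1 0 n (x1 0, y1 0, z1 0) = (x2 (n - 1), y2 (n - 1), z2 (n - 1)) ∧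
      w 1 0 n (x1 N, y1 N, z1 N) = (x2 n, y2 n, z2 n))
    (hj22 : ∀ n, 1 ≤ n → n ≤ K 1 1 →
      w 1 1 n (x2 0, y2 0, z2 0) =
        (x2 (K 1 0 + n - 1), y2 (K 1 0 + n - 1), z2 (K 1 0 + n - 1)) ∧
      w 1 1 n (x2 M, y2 M, z2 M) = (x2 (K 1 0 + n), y2 (K 1 0 + n), z2 (K 1 0 + n))) :
    ∃ G1 G2 : Set (ℝ × ℝ × ℝ),
      G1.Nonempty ∧ IsCompact G1 ∧ G2.Nonempty ∧ IsCompact G2 ∧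
      (G1 = (⋃ n ∈ Set.Icc 1 (K 0 0), w 0 0 n '' G1) ∪ (⋃ n ∈ Set.Icc 1 (K 0 1), w 0 1 n '' G2)) ∧
    (G2 = (⋃ n ∈ Set.Icc 1 (K 1 0), w 1 0 n '' G1) ∪ (⋃ n ∈ Set.Icc 1 (K 1 1), w 1 1 n '' G2)) := by
  classical
  -- monotonicity helpers
  have mono1 : ∀ j, j ≤ N → ∀ i, i < j → x1 i < x1 j := by
    intro j hj
    induction j with
    | zero => intro i hi; omega
    | succ m ih =>
      intro i hi
      have hm : x1 m < x1 (m + 1) := hx1 m (by omega)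
      rcases Nat.lt_succ_iff_lt_or_eq.mp hi with h | h
      · exact (ih (by omega) i h).trans hm
      · subst h; exact hm
  have mono2 : ∀ j, j ≤ M → ∀ i, i < j → x2 i < x2 j := by
    intro j hj
    induction j with
    | zero => intro i hi; omega
    | succ m ih =>
      intro i hi
      have hm : x2 m < x2 (m + 1) := hx2 m (by omega)
      rcases Nat.lt_succ_iff_lt_or_eq.mp hi with h | h
      · exact (ih (by omega) i h).trans hm
      · subst h; exact hm
  have mono1' : ∀ i j, i ≤ j → j ≤ N → x1 i ≤ x1 j := by
    intro i j hij hj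
    rcases eq_or_lt_of_le hij with h | h
    · rw [h]
    · exact (mono1 j hj i h).le
  have mono2' : ∀ i j, i ≤ j → j ≤ M → x2 i ≤ x2 j := by
    intro i j hij hj
    rcases eq_or_lt_of_le hij with h | h
    · rw [h]
    · exact (mono2 j hj i h).le
  have hK00 : K 0 0 ≤ N := by omega
  have hK01 : K 0 1 ≤ N := by omega
  have hK10 : K 1 0 ≤ M := by omega
  have hK11 : K 1 1 ≤ M := by omega
  have hx1pos : (0:ℝ) < x1 N - x1 0 := sub_pos.2 (mono1 N le_rfl 0 (by omega))
  have hx2pos : (0:ℝ) < x2 M - x2 0 := sub_pos.2 (mono2 M le_rfl 0 (by omega))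
  -- |a| < 1 for all valid maps
  have hc00 : ∀ n, 1 ≤ n → n ≤ K 0 0 → |a 0 0 n| < 1 := by
    intro n h1 h2
    have H0 := (hj11 n h1 h2).1
    have HN := (hj11 n h1 h2).2
    rw [hw] at H0 HN
    have e0 : a 0 0 n * x1 0 + b 0 0 n = x1 (n - 1) := congrArg Prod.fst H0
    have eN : a 0 0 n * x1 N + b 0 0 n = x1 n := congrArg Prod.fst HN
    have key : a 0 0 n * (x1 N - x1 0) = x1 n - x1 (n - 1) := by linear_combination eN - e0
    have hnN : n ≤ N := le_trans h2 hK00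
    have hnum_pos : (0:ℝ) < x1 n - x1 (n - 1) := sub_pos.2 (mono1 n hnN (n - 1) (by omega))
    have hnum_lt : x1 n - x1 (n - 1) < x1 N - x1 0 := by
      rcases lt_or_eq_of_le hnN with h | h
      · have h01 : x1 0 ≤ x1 (n - 1) := mono1' 0 (n - 1) (by omega) (by omega)
        have h02 : x1 n < x1 N := mono1 N le_rfl n h
        linarith
      · subst h
        have h01 : x1 0 < x1 (n - 1) := mono1 (n - 1) (by omega) 0 (by omega)
        linarith
    have ha : a 0 0 n = (x1 n - x1 (n - 1)) / (x1 N - x1 0) := by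
      rw [eq_div_iff hx1pos.ne']; linarith [key]
    rw [ha, abs_of_pos (div_pos hnum_pos hx1pos)]
    exact (div_lt_one hx1pos).2 hnum_lt
  have hc01 : ∀ n, 1 ≤ n → n ≤ K 0 1 → |a 0 1 n| < 1 := by
    intro n h1 h2
    have H0 := (hj12 n h1 h2).1
    have HN := (hj12 n h1 h2).2
    rw [hw] at H0 HN
    have e0 : a 0 1 n * x2 0 + b 0 1 n = x1 (K 0 0 + n - 1) := congrArg Prod.fst H0
    have eN : a 0 1 n * x2 M + b 0 1 n = x1 (K 0 0 + n) := congrArg Prod.fst HN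
    have key : a 0 1 n * (x2 M - x2 0) = x1 (K 0 0 + n) - x1 (K 0 0 + n - 1) := by
      linear_combination eN - e0
    have hnum_pos : (0:ℝ) < x1 (K 0 0 + n) - x1 (K 0 0 + n - 1) :=
      sub_pos.2 (mono1 (K 0 0 + n) (by omega) (K 0 0 + n - 1) (by omega))
    have hnum_lt : x1 (K 0 0 + n) - x1 (K 0 0 + n - 1) < x2 M - x2 0 :=
      hstar1 (K 0 0 + n) (by omega) (by omega)
    have ha : a 0 1 n = (x1 (K 0 0 + n) - x1 (K 0 0 + n - 1)) / (x2 M - x2 0) := by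
      rw [eq_div_iff hx2pos.ne']; linarith [key]
    rw [ha, abs_of_pos (div_pos hnum_pos hx2pos)]
    exact (div_lt_one hx2pos).2 hnum_lt
  have hc10 : ∀ n, 1 ≤ n → n ≤ K 1 0 → |a 1 0 n| < 1 := by
    intro n h1 h2
    have H0 := (hj21 n h1 h2).1
    have HN := (hj21 n h1 h2).2
    rw [hw] at H0 HN
    have e0 : a 1 0 n * x1 0 + b 1 0 n = x2 (n - 1) := congrArg Prod.fst H0
    have eN : a 1 0 n * x1 N + b 1 0 n = x2 n := congrArg Prod.fst HN
    have key : a 1 0 n * (x1 N - x1 0) = x2 n - x2 (n - 1) := by linear_combination eN - e0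
    have hnM : n ≤ M := le_trans h2 hK10
    have hnum_pos : (0:ℝ) < x2 n - x2 (n - 1) := sub_pos.2 (mono2 n hnM (n - 1) (by omega))
    have hnum_lt : x2 n - x2 (n - 1) < x1 N - x1 0 := hstar2 n h1 hnM
    have ha : a 1 0 n = (x2 n - x2 (n - 1)) / (x1 N - x1 0) := by
      rw [eq_div_iff hx1pos.ne']; linarith [key]
    rw [ha, abs_of_pos (div_pos hnum_pos hx1pos)]
    exact (div_lt_one hx1pos).2 hnum_lt
  have hc11 : ∀ n, 1 ≤ n → n ≤ K 1 1 → |a 1 1 n| < 1 := by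
    intro n h1 h2
    have H0 := (hj22 n h1 h2).1
    have HN := (hj22 n h1 h2).2
    rw [hw] at H0 HN
    have e0 : a 1 1 n * x2 0 + b 1 1 n = x2 (K 1 0 + n - 1) := congrArg Prod.fst H0
    have eN : a 1 1 n * x2 M + b 1 1 n = x2 (K 1 0 + n) := congrArg Prod.fst HN
    have key : a 1 1 n * (x2 M - x2 0) = x2 (K 1 0 + n) - x2 (K 1 0 + n - 1) := by
      linear_combination eN - e0
    have hmM : K 1 0 + n ≤ M := by omega
    have hnum_pos : (0:ℝ) < x2 (K 1 0 + n) - x2 (K 1 0 + n - 1) :=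
      sub_pos.2 (mono2 (K 1 0 + n) hmM (K 1 0 + n - 1) (by omega))
    have hnum_lt : x2 (K 1 0 + n) - x2 (K 1 0 + n - 1) < x2 M - x2 0 := by
      rcases lt_or_eq_of_le hmM with h | h
      · have h01 : x2 0 ≤ x2 (K 1 0 + n - 1) := mono2' 0 (K 1 0 + n - 1) (by omega) (by omega)
        have h02 : x2 (K 1 0 + n) < x2 M := mono2 M le_rfl (K 1 0 + n) h
        linarith
      · have h01 : x2 0 < x2 (K 1 0 + n - 1) := mono2 (K 1 0 + n - 1) (by omega) 0 (by omega)
        have h02 : x2 (K 1 0 + n) ≤ x2 M := mono2' (K 1 0 + n) M (by omega) le_rfl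
        linarith
    have ha : a 1 1 n = (x2 (K 1 0 + n) - x2 (K 1 0 + n - 1)) / (x2 M - x2 0) := by
      rw [eq_div_iff hx2pos.ne']; linarith [key]
    rw [ha, abs_of_pos (div_pos hnum_pos hx2pos)]
    exact (div_lt_one hx2pos).2 hnum_lt
  have hcoef : ∀ r s n, 1 ≤ n → n ≤ K r s → |a r s n| < 1 := by
    intro r s n h1 h2
    fin_cases r <;> fin_cases s
    · exact hc00 n h1 h2
    · exact hc01 n h1 h2
    · exact hc10 n h1 h2
    · exact hc11 n h1 h2
  have hKb : ∀ r s : Fin 2, K r s ≤ N + M := by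
    intro r s
    fin_cases r <;> fin_cases s
    · exact le_trans hK00 (Nat.le_add_right _ _)
    · exact le_trans hK01 (Nat.le_add_right _ _)
    · exact le_trans hK10 (Nat.le_add_left _ _)
    · exact le_trans hK11 (Nat.le_add_left _ _)
  -- uniform bounds on coefficients
  have sup_fact : ∀ φ : Fin 2 → Fin 2 → ℕ → ℝ, ∃ C : ℝ, 0 ≤ C ∧
      (∀ r s n, 1 ≤ n → n ≤ K r s → |φ r s n| ≤ C) ∧
      ((∀ r s n, 1 ≤ n → n ≤ K r s → |φ r s n| < 1) → C < 1) := by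
    intro φ
    set S : Finset (Fin 2 × Fin 2 × ℕ) :=
      Finset.univ ×ˢ Finset.univ ×ˢ Finset.range (N + M + 1) with hSdef
    have hSne : S.Nonempty := ⟨(0, 0, 0), by simp [hSdef]⟩
    set g : Fin 2 × Fin 2 × ℕ → ℝ :=
      fun t => if 1 ≤ t.2.2 ∧ t.2.2 ≤ K t.1 t.2.1 then |φ t.1 t.2.1 t.2.2| else 0 with hgdef
    refine ⟨max (S.sup' hSne g) 0, le_max_right _ _, ?_, ?_⟩
    · intro r s n h1 h2
      have hmem : (r, s, n) ∈ S := by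
        simp only [hSdef, Finset.mem_product, Finset.mem_univ, Finset.mem_range, true_and]
        have := hKb r s; omega
      have hle := Finset.le_sup' g hmem
      have hval : g (r, s, n) = |φ r s n| := by
        simp only [hgdef]; rw [if_pos ⟨h1, h2⟩]
      rw [hval] at hle
      exact le_trans hle (le_max_left _ _)
    · intro hφ
      have hlt : S.sup' hSne g < 1 := by
        rw [Finset.sup'_lt_iff]
        rintro ⟨r, s, n⟩ -
        simp only [hgdef]
        split_ifs with h
        · exact hφ r s n h.1 h.2
        · norm_num
      exact max_lt hlt one_pos
  obtain ⟨CA, hCA0, hCAb, hCAlt⟩ := sup_fact a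
  have hCA1 : CA < 1 := hCAlt hcoef
  obtain ⟨Cal, hCal0, hCalb, hCallt⟩ := sup_fact α
  have hCal1 : Cal < 1 := hCallt hα
  obtain ⟨Cbe, hCbe0, hCbeb, hCbelt⟩ := sup_fact β
  have hCbe1 : Cbe < 1 := hCbelt fun r s n h1 h2 =>
    lt_of_le_of_lt (le_add_of_nonneg_right (abs_nonneg _)) (hβγ r s n h1 h2)
  obtain ⟨Cga, hCga0, hCgab, hCgalt⟩ := sup_fact γ
  have hCga1 : Cga < 1 := hCgalt hγ
  obtain ⟨CC, hCC0, hCCb, -⟩ := sup_fact c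
  obtain ⟨CE, hCE0, hCEb, -⟩ := sup_fact e
  -- choose scaling parameters
  have hAl : (0:ℝ) < 1 - Cal := by linarith
  have hGa : (0:ℝ) < 1 - Cga := by linarith
  set t : ℝ := (2 * (Cbe + 1)) / (1 - Cal) with ht_def
  have ht0 : (0:ℝ) < t := div_pos (by linarith) hAl
  have ht_eq : (1 - Cal) * t = 2 * (Cbe + 1) := by
    rw [ht_def]; field_simp
  have htb : Cbe / t ≤ (1 - Cal) / 2 := by
    rw [div_le_div_iff₀ ht0 two_pos, ht_eq]; linarith
  set p : ℝ := min ((1 - Cal) / (4 * (CC + 1))) ((1 - Cga) / (2 * t * (CE + 1))) with hp_def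
  have hp0 : (0:ℝ) < p := lt_min (div_pos hAl (by linarith))
    (div_pos hGa (by nlinarith))
  set q : ℝ := p * t with hq_def
  have hq0 : (0:ℝ) < q := mul_pos hp0 ht0
  have hpc : p * CC ≤ (1 - Cal) / 4 := by
    have h1 : p ≤ (1 - Cal) / (4 * (CC + 1)) := min_le_left _ _
    have h2 : p * CC ≤ (1 - Cal) / (4 * (CC + 1)) * CC := mul_le_mul_of_nonneg_right h1 hCC0
    have h3 : (1 - Cal) / (4 * (CC + 1)) * CC ≤ (1 - Cal) / 4 := by
      rw [div_mul_eq_mul_div, div_le_div_iff₀ (by positivity) (by norm_num)]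
      nlinarith [hAl.le, hCC0]
    linarith
  have hqe : q * CE ≤ (1 - Cga) / 2 := by
    have h1 : p ≤ (1 - Cga) / (2 * t * (CE + 1)) := min_le_right _ _
    have h2 : p * (t * CE) ≤ (1 - Cga) / (2 * t * (CE + 1)) * (t * CE) :=
      mul_le_mul_of_nonneg_right h1 (by positivity)
    have h3 : (1 - Cga) / (2 * t * (CE + 1)) * (t * CE) ≤ (1 - Cga) / 2 := by
      rw [div_mul_eq_mul_div, div_le_div_iff₀ (by positivity) two_pos]
      nlinarith [mul_nonneg hGa.le ht0.le]
    calc q * CE = p * (t * CE) := by rw [hq_def]; ring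
      _ ≤ _ := le_trans h2 h3
  -- the uniform contraction ratio
  set Lreal : ℝ := max CA (max ((3 + Cal) / 4) ((1 + Cga) / 2)) with hLreal_def
  have hLreal1 : Lreal < 1 := max_lt hCA1 (max_lt (by linarith) (by linarith))
  have hLrealpos : (0:ℝ) < Lreal :=
    lt_of_lt_of_le (by linarith : (0:ℝ) < (1 + Cga) / 2)
      (le_trans (le_max_right _ _) (le_max_right _ _))
  set L : NNReal := ⟨Lreal, hLrealpos.le⟩ with hL_def
  have hLcoe : (L : ℝ) = Lreal := rfl
  have hL1 : L < 1 := by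
    rw [← NNReal.coe_lt_one, hLcoe]; exact hLreal1
  clear_value t p q Lreal L
  -- the rescaled maps
  obtain ⟨v, hv⟩ : ∃ v : Fin 2 → Fin 2 → ℕ → ℝ × ℝ × ℝ → ℝ × ℝ × ℝ,
      ∀ r s n pt, v r s n pt =
        (a r s n * pt.1 + b r s n,
         p * c r s n * pt.1 + α r s n * pt.2.1 + β r s n * p / q * pt.2.2 + p * d r s n,
         q * e r s n * pt.1 + γ r s n * pt.2.2 + q * f r s n) :=
    ⟨_, fun _ _ _ _ => rfl⟩
  obtain ⟨Dinv, hDinv⟩ : ∃ g : ℝ × ℝ × ℝ → ℝ × ℝ × ℝ,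
      ∀ pt, g pt = (pt.1, pt.2.1 / p, pt.2.2 / q) := ⟨_, fun _ => rfl⟩
  have hDinvcont : Continuous Dinv := by
    rw [show Dinv = fun pt : ℝ × ℝ × ℝ => (pt.1, pt.2.1 / p, pt.2.2 / q) from funext hDinv]
    exact continuous_fst.prodMk
      (((continuous_fst.comp continuous_snd).div_const p).prodMk
        ((continuous_snd.comp continuous_snd).div_const q))
  have hvlip : ∀ (r s : Fin 2) (n : ℕ), 1 ≤ n → n ≤ K r s → LipschitzWith L (v r s n) := by
    intro r s n h1 h2
    rw [show v r s n =
      (fun pt : ℝ × ℝ × ℝ =>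
        (a r s n * pt.1 + b r s n,
         p * c r s n * pt.1 + α r s n * pt.2.1 + β r s n * p / q * pt.2.2 + p * d r s n,
         q * e r s n * pt.1 + γ r s n * pt.2.2 + q * f r s n)) from funext (hv r s n)]
    apply aux_affine_lip
    · have hfin : CA ≤ (L : ℝ) := by
        rw [hLcoe, hLreal_def]; exact le_max_left _ _
      exact le_trans (hCAb r s n h1 h2) hfin
    · have hc' : |p * c r s n| ≤ p * CC := by
        rw [abs_mul, abs_of_pos hp0]
        exact mul_le_mul_of_nonneg_left (hCCb r s n h1 h2) hp0.le
      have hb1 : |β r s n * p / q| = |β r s n| / t := by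
        rw [abs_div, abs_mul, abs_of_pos hp0, abs_of_pos hq0, hq_def, mul_comm p t]
        exact mul_div_mul_right _ _ hp0.ne'
      have hb2 : |β r s n| / t ≤ Cbe / t := by
        rw [div_le_div_iff₀ ht0 ht0]
        exact mul_le_mul_of_nonneg_right (hCbeb r s n h1 h2) ht0.le
      have hal : |α r s n| ≤ Cal := hCalb r s n h1 h2
      have hfin : (3 + Cal) / 4 ≤ (L : ℝ) := by
        rw [hLcoe, hLreal_def]
        exact le_trans (le_max_left _ _) (le_max_right _ _)
      rw [hb1]
      linarith [hpc, htb]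
    · have he' : |q * e r s n| ≤ q * CE := by
        rw [abs_mul, abs_of_pos hq0]
        exact mul_le_mul_of_nonneg_left (hCEb r s n h1 h2) hq0.le
      have hga : |γ r s n| ≤ Cga := hCgab r s n h1 h2
      have hfin : (1 + Cga) / 2 ≤ (L : ℝ) := by
        rw [hLcoe, hLreal_def]
        exact le_trans (le_max_right _ _) (le_max_right _ _)
      linarith [hqe]
  -- conjugacy
  have hconj : ∀ (r s : Fin 2) (n : ℕ) (pt : ℝ × ℝ × ℝ),
      Dinv (v r s n pt) = w r s n (Dinv pt) := by
    intro r s n pt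
    rw [hv, hDinv, hDinv, hw]
    dsimp only
    simp only [Prod.mk.injEq]
    refine ⟨by trivial, ?_, ?_⟩
    · field_simp [hp0.ne', hq0.ne']
    · field_simp [hq0.ne']
  have himg : ∀ (r s : Fin 2) (n : ℕ) (A : Set (ℝ × ℝ × ℝ)),
      w r s n '' (Dinv '' A) = Dinv '' (v r s n '' A) := by
    intro r s n A
    rw [Set.image_image, Set.image_image]
    exact Set.image_congr' fun pt => (hconj r s n pt).symm
  -- the Hutchinson operator on pairs of nonempty compact sets
  haveI hNCne : Nonempty (TopologicalSpace.NonemptyCompacts (ℝ × ℝ × ℝ)) :=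
    ⟨⟨⟨{((0:ℝ), (0:ℝ), (0:ℝ))}, isCompact_singleton⟩, Set.singleton_nonempty _⟩⟩
  have hUcomp : ∀ (r s : Fin 2) (A : TopologicalSpace.NonemptyCompacts (ℝ × ℝ × ℝ)),
      IsCompact (⋃ n ∈ Set.Icc 1 (K r s), v r s n '' (A : Set (ℝ × ℝ × ℝ))) := by
    intro r s A
    refine (Set.finite_Icc 1 (K r s)).isCompact_biUnion fun n hn => A.isCompact.image ?_
    exact (hvlip r s n (Set.mem_Icc.1 hn).1 (Set.mem_Icc.1 hn).2).continuous
  have hne1 : ∀ A B : TopologicalSpace.NonemptyCompacts (ℝ × ℝ × ℝ),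
      ((⋃ n ∈ Set.Icc 1 (K 0 0), v 0 0 n '' (A : Set (ℝ × ℝ × ℝ))) ∪
        ⋃ n ∈ Set.Icc 1 (K 0 1), v 0 1 n '' (B : Set (ℝ × ℝ × ℝ))).Nonempty := by
    intro A B
    rcases Nat.lt_or_ge 0 (K 0 0) with h | h
    · obtain ⟨pt, hpt⟩ := A.nonempty
      exact ⟨v 0 0 1 pt, Set.mem_union_left _
        (Set.mem_biUnion (Set.mem_Icc.2 ⟨le_rfl, h⟩) (Set.mem_image_of_mem _ hpt))⟩
    · have h01 : 1 ≤ K 0 1 := by omega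
      obtain ⟨pt, hpt⟩ := B.nonempty
      exact ⟨v 0 1 1 pt, Set.mem_union_right _
        (Set.mem_biUnion (Set.mem_Icc.2 ⟨le_rfl, h01⟩) (Set.mem_image_of_mem _ hpt))⟩
  have hne2 : ∀ A B : TopologicalSpace.NonemptyCompacts (ℝ × ℝ × ℝ),
      ((⋃ n ∈ Set.Icc 1 (K 1 0), v 1 0 n '' (A : Set (ℝ × ℝ × ℝ))) ∪
        ⋃ n ∈ Set.Icc 1 (K 1 1), v 1 1 n '' (B : Set (ℝ × ℝ × ℝ))).Nonempty := by
    intro A B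
    rcases Nat.lt_or_ge 0 (K 1 0) with h | h
    · obtain ⟨pt, hpt⟩ := A.nonempty
      exact ⟨v 1 0 1 pt, Set.mem_union_left _
        (Set.mem_biUnion (Set.mem_Icc.2 ⟨le_rfl, h⟩) (Set.mem_image_of_mem _ hpt))⟩
    · have h01 : 1 ≤ K 1 1 := by omega
      obtain ⟨pt, hpt⟩ := B.nonempty
      exact ⟨v 1 1 1 pt, Set.mem_union_right _
        (Set.mem_biUnion (Set.mem_Icc.2 ⟨le_rfl, h01⟩) (Set.mem_image_of_mem _ hpt))⟩
  obtain ⟨Φ, hΦ1, hΦ2⟩ :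
      ∃ Φ : TopologicalSpace.NonemptyCompacts (ℝ × ℝ × ℝ) ×
              TopologicalSpace.NonemptyCompacts (ℝ × ℝ × ℝ) →
            TopologicalSpace.NonemptyCompacts (ℝ × ℝ × ℝ) ×
              TopologicalSpace.NonemptyCompacts (ℝ × ℝ × ℝ),
        (∀ P, ((Φ P).1 : Set (ℝ × ℝ × ℝ)) =
          (⋃ n ∈ Set.Icc 1 (K 0 0), v 0 0 n '' (P.1 : Set (ℝ × ℝ × ℝ))) ∪
            ⋃ n ∈ Set.Icc 1 (K 0 1), v 0 1 n '' (P.2 : Set (ℝ × ℝ × ℝ))) ∧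
        (∀ P, ((Φ P).2 : Set (ℝ × ℝ × ℝ)) =
          (⋃ n ∈ Set.Icc 1 (K 1 0), v 1 0 n '' (P.1 : Set (ℝ × ℝ × ℝ))) ∪
            ⋃ n ∈ Set.Icc 1 (K 1 1), v 1 1 n '' (P.2 : Set (ℝ × ℝ × ℝ))) :=
    ⟨fun P => (⟨⟨_, (hUcomp 0 0 P.1).union (hUcomp 0 1 P.2)⟩, hne1 P.1 P.2⟩,
       ⟨⟨_, (hUcomp 1 0 P.1).union (hUcomp 1 1 P.2)⟩, hne2 P.1 P.2⟩),
     fun _ => rfl, fun _ => rfl⟩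
  have hed : ∀ s t₀ : TopologicalSpace.NonemptyCompacts (ℝ × ℝ × ℝ),
      edist s t₀ = EMetric.hausdorffEdist (s : Set (ℝ × ℝ × ℝ)) (t₀ : Set (ℝ × ℝ × ℝ)) :=
    fun _ _ => rfl
  have hΦlip : LipschitzWith L Φ := by
    intro P Q
    rw [Prod.edist_eq, Prod.edist_eq]
    refine max_le ?_ ?_
    · rw [hed, hΦ1 P, hΦ1 Q]
      refine le_trans aux_hd_union (max_le ?_ ?_)
      · refine le_trans (aux_hd_biUnion _ _
          (fun n hn => hvlip 0 0 n (Set.mem_Icc.1 hn).1 (Set.mem_Icc.1 hn).2)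
          P.1.nonempty Q.1.nonempty) ?_
        exact mul_le_mul_right ((hed P.1 Q.1).ge.trans (le_max_left _ _)) _
      · refine le_trans (aux_hd_biUnion _ _
          (fun n hn => hvlip 0 1 n (Set.mem_Icc.1 hn).1 (Set.mem_Icc.1 hn).2)
          P.2.nonempty Q.2.nonempty) ?_
        exact mul_le_mul_right ((hed P.2 Q.2).ge.trans (le_max_right _ _)) _
    · rw [hed, hΦ2 P, hΦ2 Q]
      refine le_trans aux_hd_union (max_le ?_ ?_)
      · refine le_trans (aux_hd_biUnion _ _
          (fun n hn => hvlip 1 0 n (Set.mem_Icc.1 hn).1 (Set.mem_Icc.1 hn).2)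
          P.1.nonempty Q.1.nonempty) ?_
        exact mul_le_mul_right ((hed P.1 Q.1).ge.trans (le_max_left _ _)) _
      · refine le_trans (aux_hd_biUnion _ _
          (fun n hn => hvlip 1 1 n (Set.mem_Icc.1 hn).1 (Set.mem_Icc.1 hn).2)
          P.2.nonempty Q.2.nonempty) ?_
        exact mul_le_mul_right ((hed P.2 Q.2).ge.trans (le_max_right _ _)) _
  have hcontr : ContractingWith L Φ := ⟨hL1, hΦlip⟩
  set P := ContractingWith.fixedPoint Φ hcontr with hPdef
  have hfix : Φ P = P := hcontr.fixedPoint_isFixedPt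
  have hG1eq := hΦ1 P
  have hG2eq := hΦ2 P
  rw [hfix] at hG1eq hG2eq
  refine ⟨Dinv '' (P.1 : Set (ℝ × ℝ × ℝ)), Dinv '' (P.2 : Set (ℝ × ℝ × ℝ)),
    P.1.nonempty.image _, P.1.isCompact.image hDinvcont,
    P.2.nonempty.image _, P.2.isCompact.image hDinvcont, ?_, ?_⟩
  · conv_lhs => rw [hG1eq]
    simp only [Set.image_union, Set.image_iUnion, himg]
  · conv_lhs => rw [hG2eq]
    simp only [Set.image_union, Set.image_iUnion, himg]
end

section
/- If (A^1, A^2) and (B^1, B^2) are two pairs of nonempty compact subsets of ℝ³ each satisfying the invariance equations A^1 = (⋃_{n=1}^{K^{11}} w_n^{11}(A^1)) ∪ (⋃_{n=1}^{K^{12}} w_n^{12}(A^2)) and A^2 = (⋃_{n=1}^{K^{21}} w_n^{21}(A^1)) ∪ (⋃_{n=1}^{K^{22}} w_n^{22}(A^2)) (and likewise for (B^1, B^2)), then A^1 = B^1 and A^2 = B^2. -/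
open Set

set_option maxHeartbeats 3200000 in
theorem stmt_5
    (N M : ℕ) (hN : 2 ≤ N) (hM : 2 ≤ M)
    (x1 y1 z1 x2 y2 z2 : ℕ → ℝ)
    (hx1 : ∀ i, i < N → x1 i < x1 (i + 1))
    (hx2 : ∀ j, j < M → x2 j < x2 (j + 1))
    (hstar1 : ∀ i, 1 ≤ i → i ≤ N → x1 i - x1 (i - 1) < x2 M - x2 0)
    (hstar2 : ∀ j, 1 ≤ j → j ≤ M → x2 j - x2 (j - 1) < x1 N - x1 0)
    (K : Fin 2 → Fin 2 → ℕ)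
    (hK1 : K 0 0 + K 0 1 = N) (hK2 : K 1 0 + K 1 1 = M)
    (a b c d e f α β γ : Fin 2 → Fin 2 → ℕ → ℝ)
    (hα : ∀ r s n, 1 ≤ n → n ≤ K r s → |α r s n| < 1)
    (hγ : ∀ r s n, 1 ≤ n → n ≤ K r s → |γ r s n| < 1)
    (hβγ : ∀ r s n, 1 ≤ n → n ≤ K r s → |β r s n| + |γ r s n| < 1)
    (w : Fin 2 → Fin 2 → ℕ → ℝ × ℝ × ℝ → ℝ × ℝ × ℝ)
    (hw : ∀ r s n p, w r s n p =
      (a r s n * p.1 + b r s n,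
       c r s n * p.1 + α r s n * p.2.1 + β r s n * p.2.2 + d r s n,
       e r s n * p.1 + γ r s n * p.2.2 + f r s n))
    (hj11 : ∀ n, 1 ≤ n → n ≤ K 0 0 →
      w 0 0 n (x1 0, y1 0, z1 0) = (x1 (n - 1), y1 (n - 1), z1 (n - 1)) ∧
      w 0 0 n (x1 N, y1 N, z1 N) = (x1 n, y1 n, z1 n))
    (hj12 : ∀ n, 1 ≤ n → n ≤ K 0 1 →
      w 0 1 n (x2 0, y2 0, z2 0) =
        (x1 (K 0 0 + n - 1), y1 (K 0 0 + n - 1), z1 (K 0 0 + n - 1)) ∧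
      w 0 1 n (x2 M, y2 M, z2 M) = (x1 (K 0 0 + n), y1 (K 0 0 + n), z1 (K 0 0 + n)))
    (hj21 : ∀ n, 1 ≤ n → n ≤ K 1 0 →
      w 1 0 n (x1 0, y1 0, z1 0) = (x2 (n - 1), y2 (n - 1), z2 (n - 1)) ∧
      w 1 0 n (x1 N, y1 N, z1 N) = (x2 n, y2 n, z2 n))
    (hj22 : ∀ n, 1 ≤ n → n ≤ K 1 1 →
      w 1 1 n (x2 0, y2 0, z2 0) =
        (x2 (K 1 0 + n - 1), y2 (K 1 0 + n - 1), z2 (K 1 0 + n - 1)) ∧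
      w 1 1 n (x2 M, y2 M, z2 M) = (x2 (K 1 0 + n), y2 (K 1 0 + n), z2 (K 1 0 + n)))
    (A1 A2 B1 B2 : Set (ℝ × ℝ × ℝ))
    (hA1ne : A1.Nonempty) (hA1c : IsCompact A1) (hA2ne : A2.Nonempty) (hA2c : IsCompact A2)
    (hB1ne : B1.Nonempty) (hB1c : IsCompact B1) (hB2ne : B2.Nonempty) (hB2c : IsCompact B2)
    (hA1 : A1 = (⋃ n ∈ Set.Icc 1 (K 0 0), w 0 0 n '' A1) ∪ (⋃ n ∈ Set.Icc 1 (K 0 1), w 0 1 n '' A2))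
    (hA2 : A2 = (⋃ n ∈ Set.Icc 1 (K 1 0), w 1 0 n '' A1) ∪ (⋃ n ∈ Set.Icc 1 (K 1 1), w 1 1 n '' A2))
    (hB1 : B1 = (⋃ n ∈ Set.Icc 1 (K 0 0), w 0 0 n '' B1) ∪ (⋃ n ∈ Set.Icc 1 (K 0 1), w 0 1 n '' B2))
    (hB2 : B2 = (⋃ n ∈ Set.Icc 1 (K 1 0), w 1 0 n '' B1) ∪ (⋃ n ∈ Set.Icc 1 (K 1 1), w 1 1 n '' B2)) :
    A1 = B1 ∧ A2 = B2 := by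
    classical
  -- monotonicity of x1 and x2
  have mono1 : ∀ j, j ≤ N → ∀ i, i ≤ j → x1 i ≤ x1 j := by
    intro j
    induction j with
    | zero => intro _ i hi; have : i = 0 := Nat.le_zero.mp hi; rw [this]
    | succ j ih =>
      intro hj i hi
      rcases Nat.eq_or_lt_of_le hi with h | h
      · rw [h]
      · exact le_of_lt (lt_of_le_of_lt (ih (by omega) i (by omega)) (hx1 j (by omega)))
  have mono2 : ∀ j, j ≤ M → ∀ i, i ≤ j → x2 i ≤ x2 j := by
    intro j
    induction j with
    | zero => intro _ i hi; have : i = 0 := Nat.le_zero.mp hi; rw [this]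
    | succ j ih =>
      intro hj i hi
      rcases Nat.eq_or_lt_of_le hi with h | h
      · rw [h]
      · exact le_of_lt (lt_of_le_of_lt (ih (by omega) i (by omega)) (hx2 j (by omega)))
  have smono1 : ∀ i j, i < j → j ≤ N → x1 i < x1 j := by
    intro i j hij hj
    have h1 : x1 i ≤ x1 (j - 1) := mono1 (j - 1) (by omega) i (by omega)
    have h2 : x1 (j - 1) < x1 (j - 1 + 1) := hx1 (j - 1) (by omega)
    have h3 : j - 1 + 1 = j := by omega
    rw [h3] at h2; linarith
  have smono2 : ∀ i j, i < j → j ≤ M → x2 i < x2 j := by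
    intro i j hij hj
    have h1 : x2 i ≤ x2 (j - 1) := mono2 (j - 1) (by omega) i (by omega)
    have h2 : x2 (j - 1) < x2 (j - 1 + 1) := hx2 (j - 1) (by omega)
    have h3 : j - 1 + 1 = j := by omega
    rw [h3] at h2; linarith
  have span1 : 0 < x1 N - x1 0 := by
    have := smono1 0 N (by omega) le_rfl; linarith
  have span2 : 0 < x2 M - x2 0 := by
    have := smono2 0 M (by omega) le_rfl; linarith
  -- contraction ratio of the x-part of each map
  have habs : ∀ (r s : Fin 2) n, 1 ≤ n → n ≤ K r s → |a r s n| < 1 := by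
    have hf : ∀ u : Fin 2, u = 0 ∨ u = 1 := by decide
    intro r s n h1 h2
    rcases hf r with rfl | rfl <;> rcases hf s with rfl | rfl
    · -- r = 0, s = 0
      obtain ⟨e1, e2⟩ := hj11 n h1 h2
      rw [hw] at e1 e2
      have p1 : a 0 0 n * x1 0 + b 0 0 n = x1 (n - 1) := by
        have := congrArg Prod.fst e1; simpa using this
      have p2 : a 0 0 n * x1 N + b 0 0 n = x1 n := by
        have := congrArg Prod.fst e2; simpa using this
      have hg : a 0 0 n * (x1 N - x1 0) = x1 n - x1 (n - 1) := by linear_combination p2 - p1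
      have hnN : n ≤ N := by omega
      have g1 : x1 (n - 1) < x1 n := by
        have h := hx1 (n - 1) (by omega)
        have h3 : n - 1 + 1 = n := by omega
        rwa [h3] at h
      have hb1 : x1 0 ≤ x1 (n - 1) := mono1 (n - 1) (by omega) 0 (by omega)
      have hb2 : x1 n ≤ x1 N := mono1 N le_rfl n hnN
      have hb3 : x1 0 < x1 (n - 1) ∨ x1 n < x1 N := by
        rcases Nat.lt_or_ge 1 n with h | h
        · exact Or.inl (smono1 0 (n - 1) (by omega) (by omega))
        · exact Or.inr (smono1 n N (by omega) le_rfl)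
      have gaplt : x1 n - x1 (n - 1) < x1 N - x1 0 := by rcases hb3 with h | h <;> linarith
      rw [abs_lt]
      constructor <;> nlinarith [hg, span1, g1, gaplt]
    · -- r = 0, s = 1
      obtain ⟨e1, e2⟩ := hj12 n h1 h2
      rw [hw] at e1 e2
      have p1 : a 0 1 n * x2 0 + b 0 1 n = x1 (K 0 0 + n - 1) := by
        have := congrArg Prod.fst e1; simpa using this
      have p2 : a 0 1 n * x2 M + b 0 1 n = x1 (K 0 0 + n) := by
        have := congrArg Prod.fst e2; simpa using this
      have hg : a 0 1 n * (x2 M - x2 0) = x1 (K 0 0 + n) - x1 (K 0 0 + n - 1) := by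
        linear_combination p2 - p1
      have hmN : K 0 0 + n ≤ N := by omega
      have g1 : x1 (K 0 0 + n - 1) < x1 (K 0 0 + n) := by
        have h := hx1 (K 0 0 + n - 1) (by omega)
        have h3 : K 0 0 + n - 1 + 1 = K 0 0 + n := by omega
        rwa [h3] at h
      have gaplt : x1 (K 0 0 + n) - x1 (K 0 0 + n - 1) < x2 M - x2 0 :=
        hstar1 (K 0 0 + n) (by omega) hmN
      rw [abs_lt]
      constructor <;> nlinarith [hg, span2, g1, gaplt]
    · -- r = 1, s = 0
      obtain ⟨e1, e2⟩ := hj21 n h1 h2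
      rw [hw] at e1 e2
      have p1 : a 1 0 n * x1 0 + b 1 0 n = x2 (n - 1) := by
        have := congrArg Prod.fst e1; simpa using this
      have p2 : a 1 0 n * x1 N + b 1 0 n = x2 n := by
        have := congrArg Prod.fst e2; simpa using this
      have hg : a 1 0 n * (x1 N - x1 0) = x2 n - x2 (n - 1) := by linear_combination p2 - p1
      have hnM : n ≤ M := by omega
      have g1 : x2 (n - 1) < x2 n := by
        have h := hx2 (n - 1) (by omega)
        have h3 : n - 1 + 1 = n := by omega
        rwa [h3] at h
      have gaplt : x2 n - x2 (n - 1) < x1 N - x1 0 := hstar2 n h1 hnM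
      rw [abs_lt]
      constructor <;> nlinarith [hg, span1, g1, gaplt]
    · -- r = 1, s = 1
      obtain ⟨e1, e2⟩ := hj22 n h1 h2
      rw [hw] at e1 e2
      have p1 : a 1 1 n * x2 0 + b 1 1 n = x2 (K 1 0 + n - 1) := by
        have := congrArg Prod.fst e1; simpa using this
      have p2 : a 1 1 n * x2 M + b 1 1 n = x2 (K 1 0 + n) := by
        have := congrArg Prod.fst e2; simpa using this
      have hg : a 1 1 n * (x2 M - x2 0) = x2 (K 1 0 + n) - x2 (K 1 0 + n - 1) := by
        linear_combination p2 - p1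
      have hmM : K 1 0 + n ≤ M := by omega
      have g1 : x2 (K 1 0 + n - 1) < x2 (K 1 0 + n) := by
        have h := hx2 (K 1 0 + n - 1) (by omega)
        have h3 : K 1 0 + n - 1 + 1 = K 1 0 + n := by omega
        rwa [h3] at h
      have hb1 : x2 0 ≤ x2 (K 1 0 + n - 1) := mono2 (K 1 0 + n - 1) (by omega) 0 (by omega)
      have hb2 : x2 (K 1 0 + n) ≤ x2 M := mono2 M le_rfl (K 1 0 + n) hmM
      have hb3 : x2 0 < x2 (K 1 0 + n - 1) ∨ x2 (K 1 0 + n) < x2 M := by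
        rcases Nat.lt_or_ge 1 (K 1 0 + n) with h | h
        · exact Or.inl (smono2 0 (K 1 0 + n - 1) (by omega) (by omega))
        · exact Or.inr (smono2 (K 1 0 + n) M (by omega) le_rfl)
      have gaplt : x2 (K 1 0 + n) - x2 (K 1 0 + n - 1) < x2 M - x2 0 := by
        rcases hb3 with h | h <;> linarith
      rw [abs_lt]
      constructor <;> nlinarith [hg, span2, g1, gaplt]
  have hKle : ∀ (r s : Fin 2), K r s ≤ N + M := by
    have hf : ∀ u : Fin 2, u = 0 ∨ u = 1 := by decide
    intro r s; rcases hf r with rfl | rfl <;> rcases hf s with rfl | rfl <;> omega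
  -- the finite index set and the contraction constants
  set S : Finset (Fin 2 × Fin 2 × ℕ) :=
    Finset.univ ×ˢ Finset.univ ×ˢ Finset.Icc 1 (N + M) with hSdef
  have hSmem : ∀ i : Fin 2 × Fin 2 × ℕ, i ∈ S ↔ 1 ≤ i.2.2 ∧ i.2.2 ≤ N + M := by
    intro i
    simp [hSdef, Finset.mem_product, Finset.mem_Icc]
  have hSne : S.Nonempty := ⟨(0, 0, 1), (hSmem _).mpr ⟨le_rfl, by show (1:ℕ) ≤ N + M; omega⟩⟩
  set g : Fin 2 × Fin 2 × ℕ → ℝ := fun i =>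
    if 1 ≤ i.2.2 ∧ i.2.2 ≤ K i.1 i.2.1 then
      |a i.1 i.2.1 i.2.2| ⊔ (|α i.1 i.2.1 i.2.2| ⊔ (|β i.1 i.2.1 i.2.2| + |γ i.1 i.2.1 i.2.2|))
    else 0 with hgdef
  have hg0 : ∀ i, 0 ≤ g i := by
    intro i; rw [hgdef]; dsimp only; split_ifs
    · positivity
    · exact le_refl 0
  set s0 : ℝ := S.sup' hSne g with hs0def
  have hs0lt : s0 < 1 := by
    rw [hs0def, Finset.sup'_lt_iff]
    intro i _
    rw [hgdef]; dsimp only; split_ifs with h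
    · exact max_lt (habs _ _ _ h.1 h.2) (max_lt (hα _ _ _ h.1 h.2) (hβγ _ _ _ h.1 h.2))
    · norm_num
  have hs0nn : 0 ≤ s0 := le_trans (hg0 (0, 0, 1)) (Finset.le_sup' g ((hSmem _).mpr ⟨le_rfl, by show (1:ℕ) ≤ N + M; omega⟩))
  set ρ : ℝ := (1 + s0) / 2 with hρdef
  have hρ0 : 0 < ρ := by rw [hρdef]; linarith
  have hρ1 : ρ < 1 := by rw [hρdef]; linarith
  have hs0ρ : s0 < ρ := by rw [hρdef]; linarith
  have hbnd : ∀ (r s : Fin 2) n, 1 ≤ n → n ≤ K r s →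
      |a r s n| ≤ s0 ∧ |α r s n| ≤ s0 ∧ |β r s n| + |γ r s n| ≤ s0 := by
    intro r s n h1 h2
    have hmem : (r, s, n) ∈ S := (hSmem _).mpr ⟨h1, le_trans h2 (hKle r s)⟩
    have hle := Finset.le_sup' g hmem
    rw [hs0def]
    rw [hgdef] at hle; dsimp only at hle
    rw [if_pos ⟨h1, h2⟩] at hle
    exact ⟨(le_max_left _ _).trans hle,
      ((le_max_left _ _).trans (le_max_right _ _)).trans hle,
      ((le_max_right _ _).trans (le_max_right _ _)).trans hle⟩
  set h : Fin 2 × Fin 2 × ℕ → ℝ := fun i =>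
    if 1 ≤ i.2.2 ∧ i.2.2 ≤ K i.1 i.2.1 then
      (ρ - |a i.1 i.2.1 i.2.2|) / (1 + |c i.1 i.2.1 i.2.2| + |e i.1 i.2.1 i.2.2|)
    else 1 with hhdef
  set t : ℝ := min 1 (S.inf' hSne h) with htdef
  have htpos : 0 < t := by
    rw [htdef]
    apply lt_min one_pos
    rw [Finset.lt_inf'_iff]
    intro i _
    rw [hhdef]; dsimp only; split_ifs with hc
    · have := (hbnd i.1 i.2.1 i.2.2 hc.1 hc.2).1
      apply div_pos (by linarith) (by positivity)
    · norm_num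
  have ht1 : t ≤ 1 := by rw [htdef]; exact min_le_left _ _
  have htle : ∀ (r s : Fin 2) n, 1 ≤ n → n ≤ K r s →
      |a r s n| + t * (|c r s n| + |e r s n|) ≤ ρ := by
    intro r s n h1 h2
    have hmem : (r, s, n) ∈ S := (hSmem _).mpr ⟨h1, le_trans h2 (hKle r s)⟩
    have hle : t ≤ h (r, s, n) := le_trans (by rw [htdef]; exact min_le_right _ _)
      (Finset.inf'_le h hmem)
    rw [hhdef] at hle; dsimp only at hle
    rw [if_pos ⟨h1, h2⟩] at hle
    have hden : (0:ℝ) < 1 + |c r s n| + |e r s n| := by positivity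
    rw [le_div_iff₀ hden] at hle
    nlinarith [htpos, abs_nonneg (c r s n), abs_nonneg (e r s n)]
  -- the weighted distance
  set D : (ℝ × ℝ × ℝ) → (ℝ × ℝ × ℝ) → ℝ := fun p q =>
    |p.1 - q.1| + t * (|p.2.1 - q.2.1| + |p.2.2 - q.2.2|) with hDdef
  have hD0 : ∀ p q, 0 ≤ D p q := by
    intro p q; rw [hDdef]; dsimp only; positivity
  -- contraction of D under each map
  have hcontr : ∀ (r s : Fin 2) n, 1 ≤ n → n ≤ K r s → ∀ p q,
      D (w r s n p) (w r s n q) ≤ ρ * D p q := by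
    intro r s n h1 h2 p q
    obtain ⟨hba, hbal, hbbg⟩ := hbnd r s n h1 h2
    have hcc := htle r s n h1 h2
    rw [hDdef, hw, hw]; dsimp only
    have e1 : a r s n * p.1 + b r s n - (a r s n * q.1 + b r s n) = a r s n * (p.1 - q.1) := by
      ring
    have e2 : c r s n * p.1 + α r s n * p.2.1 + β r s n * p.2.2 + d r s n -
        (c r s n * q.1 + α r s n * q.2.1 + β r s n * q.2.2 + d r s n) =
        c r s n * (p.1 - q.1) + α r s n * (p.2.1 - q.2.1) + β r s n * (p.2.2 - q.2.2) := by
      ring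
    have e3 : e r s n * p.1 + γ r s n * p.2.2 + f r s n -
        (e r s n * q.1 + γ r s n * q.2.2 + f r s n) =
        e r s n * (p.1 - q.1) + γ r s n * (p.2.2 - q.2.2) := by ring
    rw [e1, e2, e3, abs_mul]
    have T1 : |c r s n * (p.1 - q.1) + α r s n * (p.2.1 - q.2.1) + β r s n * (p.2.2 - q.2.2)| ≤
        |c r s n| * |p.1 - q.1| + |α r s n| * |p.2.1 - q.2.1| + |β r s n| * |p.2.2 - q.2.2| := by
      calc |c r s n * (p.1 - q.1) + α r s n * (p.2.1 - q.2.1) + β r s n * (p.2.2 - q.2.2)|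
          ≤ |c r s n * (p.1 - q.1) + α r s n * (p.2.1 - q.2.1)| + |β r s n * (p.2.2 - q.2.2)| :=
            abs_add_le _ _
        _ ≤ |c r s n * (p.1 - q.1)| + |α r s n * (p.2.1 - q.2.1)| + |β r s n * (p.2.2 - q.2.2)| := by
            linarith [abs_add_le (c r s n * (p.1 - q.1)) (α r s n * (p.2.1 - q.2.1))]
        _ = |c r s n| * |p.1 - q.1| + |α r s n| * |p.2.1 - q.2.1| + |β r s n| * |p.2.2 - q.2.2| := by
            rw [abs_mul, abs_mul, abs_mul]
    have T2 : |e r s n * (p.1 - q.1) + γ r s n * (p.2.2 - q.2.2)| ≤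
        |e r s n| * |p.1 - q.1| + |γ r s n| * |p.2.2 - q.2.2| := by
      calc |e r s n * (p.1 - q.1) + γ r s n * (p.2.2 - q.2.2)|
          ≤ |e r s n * (p.1 - q.1)| + |γ r s n * (p.2.2 - q.2.2)| := abs_add_le _ _
        _ = _ := by rw [abs_mul, abs_mul]
    nlinarith [mul_nonneg (sub_nonneg.mpr hcc) (abs_nonneg (p.1 - q.1)),
      mul_nonneg (mul_nonneg htpos.le (sub_nonneg.mpr (hbal.trans hs0ρ.le)))
        (abs_nonneg (p.2.1 - q.2.1)),
      mul_nonneg (mul_nonneg htpos.le (sub_nonneg.mpr (hbbg.trans hs0ρ.le)))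
        (abs_nonneg (p.2.2 - q.2.2)),
      htpos, T1, T2, abs_nonneg (p.1 - q.1), abs_nonneg (p.2.1 - q.2.1),
      abs_nonneg (p.2.2 - q.2.2)]
  -- a uniform bound
  have hU : IsCompact (A1 ∪ A2 ∪ B1 ∪ B2) := ((hA1c.union hA2c).union hB1c).union hB2c
  obtain ⟨R, hR⟩ := hU.exists_bound_of_continuousOn continuousOn_id
  have hRp : ∀ p ∈ A1 ∪ A2 ∪ B1 ∪ B2, |p.1| ≤ R ∧ |p.2.1| ≤ R ∧ |p.2.2| ≤ R := by
    intro p hp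
    have hnp : ‖p‖ ≤ R := by simpa using hR p hp
    refine ⟨?_, ?_, ?_⟩
    · calc |p.1| = ‖p.1‖ := (Real.norm_eq_abs _).symm
        _ ≤ ‖p‖ := norm_fst_le p
        _ ≤ R := hnp
    · calc |p.2.1| = ‖p.2.1‖ := (Real.norm_eq_abs _).symm
        _ ≤ ‖p.2‖ := norm_fst_le p.2
        _ ≤ ‖p‖ := norm_snd_le p
        _ ≤ R := hnp
    · calc |p.2.2| = ‖p.2.2‖ := (Real.norm_eq_abs _).symm
        _ ≤ ‖p.2‖ := norm_snd_le p.2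
        _ ≤ ‖p‖ := norm_snd_le p
        _ ≤ R := hnp
  have m1 : ∀ p, p ∈ A1 → p ∈ A1 ∪ A2 ∪ B1 ∪ B2 := fun p hp => Or.inl (Or.inl (Or.inl hp))
  have m2 : ∀ p, p ∈ A2 → p ∈ A1 ∪ A2 ∪ B1 ∪ B2 := fun p hp => Or.inl (Or.inl (Or.inr hp))
  have m3 : ∀ p, p ∈ B1 → p ∈ A1 ∪ A2 ∪ B1 ∪ B2 := fun p hp => Or.inl (Or.inr hp)
  have m4 : ∀ p, p ∈ B2 → p ∈ A1 ∪ A2 ∪ B1 ∪ B2 := fun p hp => Or.inr hp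
  have hR0 : 0 ≤ R := by
    obtain ⟨p0, hp0⟩ := hA1ne
    exact le_trans (abs_nonneg _) (hRp p0 (m1 p0 hp0)).1
  set C : ℝ := 2 * R + t * (4 * R) with hCdef
  have hC0 : 0 ≤ C := by
    rw [hCdef]; nlinarith [mul_nonneg htpos.le hR0]
  have hDC : ∀ p q, p ∈ A1 ∪ A2 ∪ B1 ∪ B2 → q ∈ A1 ∪ A2 ∪ B1 ∪ B2 → D p q ≤ C := by
    intro p q hp hq
    obtain ⟨h1, h2, h3⟩ := hRp p hp
    obtain ⟨h4, h5, h6⟩ := hRp q hq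
    rw [hDdef, hCdef]; dsimp only
    have e1 := abs_sub p.1 q.1
    have e2 := abs_sub p.2.1 q.2.1
    have e3 := abs_sub p.2.2 q.2.2
    nlinarith [mul_nonneg htpos.le
      (show (0:ℝ) ≤ 4 * R - (|p.2.1 - q.2.1| + |p.2.2 - q.2.2|) by linarith)]
  -- the main inductive approximation
  have main : ∀ k : ℕ,
      (∀ p ∈ A1, ∃ q ∈ B1, D p q ≤ ρ ^ k * C) ∧
      (∀ p ∈ A2, ∃ q ∈ B2, D p q ≤ ρ ^ k * C) ∧
      (∀ p ∈ B1, ∃ q ∈ A1, D p q ≤ ρ ^ k * C) ∧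
      (∀ p ∈ B2, ∃ q ∈ A2, D p q ≤ ρ ^ k * C) := by
    intro k
    induction k with
    | zero =>
      simp only [pow_zero, one_mul]
      obtain ⟨pa1, hpa1⟩ := hA1ne
      obtain ⟨pa2, hpa2⟩ := hA2ne
      obtain ⟨pb1, hpb1⟩ := hB1ne
      obtain ⟨pb2, hpb2⟩ := hB2ne
      exact ⟨fun p hp => ⟨pb1, hpb1, hDC p pb1 (m1 p hp) (m3 pb1 hpb1)⟩,
        fun p hp => ⟨pb2, hpb2, hDC p pb2 (m2 p hp) (m4 pb2 hpb2)⟩,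
        fun p hp => ⟨pa1, hpa1, hDC p pa1 (m3 p hp) (m1 pa1 hpa1)⟩,
        fun p hp => ⟨pa2, hpa2, hDC p pa2 (m4 p hp) (m2 pa2 hpa2)⟩⟩
    | succ k ih =>
      obtain ⟨ih1, ih2, ih3, ih4⟩ := ih
      have step : ∀ (r s : Fin 2) n, n ∈ Set.Icc 1 (K r s) → ∀ p' q',
          D p' q' ≤ ρ ^ k * C → D (w r s n p') (w r s n q') ≤ ρ ^ (k + 1) * C := by
        intro r s n hn p' q' hle
        calc D (w r s n p') (w r s n q') ≤ ρ * D p' q' := hcontr r s n hn.1 hn.2 p' q'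
          _ ≤ ρ * (ρ ^ k * C) := mul_le_mul_of_nonneg_left hle hρ0.le
          _ = ρ ^ (k + 1) * C := by ring
      refine ⟨?_, ?_, ?_, ?_⟩
      · intro p hp
        rw [hA1] at hp
        rcases hp with hp | hp
        · obtain ⟨n, hn, p', hp', rfl⟩ :
              ∃ n, n ∈ Set.Icc 1 (K 0 0) ∧ ∃ p', p' ∈ A1 ∧ w 0 0 n p' = p := by
            simpa using hp
          obtain ⟨q', hq', hdq⟩ := ih1 p' hp'
          exact ⟨w 0 0 n q',
            by rw [hB1]; exact Or.inl (Set.mem_biUnion hn (Set.mem_image_of_mem _ hq')),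
            step 0 0 n hn p' q' hdq⟩
        · obtain ⟨n, hn, p', hp', rfl⟩ :
              ∃ n, n ∈ Set.Icc 1 (K 0 1) ∧ ∃ p', p' ∈ A2 ∧ w 0 1 n p' = p := by
            simpa using hp
          obtain ⟨q', hq', hdq⟩ := ih2 p' hp'
          exact ⟨w 0 1 n q',
            by rw [hB1]; exact Or.inr (Set.mem_biUnion hn (Set.mem_image_of_mem _ hq')),
            step 0 1 n hn p' q' hdq⟩
      · intro p hp
        rw [hA2] at hp
        rcases hp with hp | hp
        · obtain ⟨n, hn, p', hp', rfl⟩ :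
              ∃ n, n ∈ Set.Icc 1 (K 1 0) ∧ ∃ p', p' ∈ A1 ∧ w 1 0 n p' = p := by
            simpa using hp
          obtain ⟨q', hq', hdq⟩ := ih1 p' hp'
          exact ⟨w 1 0 n q',
            by rw [hB2]; exact Or.inl (Set.mem_biUnion hn (Set.mem_image_of_mem _ hq')),
            step 1 0 n hn p' q' hdq⟩
        · obtain ⟨n, hn, p', hp', rfl⟩ :
              ∃ n, n ∈ Set.Icc 1 (K 1 1) ∧ ∃ p', p' ∈ A2 ∧ w 1 1 n p' = p := by
            simpa using hp
          obtain ⟨q', hq', hdq⟩ := ih2 p' hp'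
          exact ⟨w 1 1 n q',
            by rw [hB2]; exact Or.inr (Set.mem_biUnion hn (Set.mem_image_of_mem _ hq')),
            step 1 1 n hn p' q' hdq⟩
      · intro p hp
        rw [hB1] at hp
        rcases hp with hp | hp
        · obtain ⟨n, hn, p', hp', rfl⟩ :
              ∃ n, n ∈ Set.Icc 1 (K 0 0) ∧ ∃ p', p' ∈ B1 ∧ w 0 0 n p' = p := by
            simpa using hp
          obtain ⟨q', hq', hdq⟩ := ih3 p' hp'
          exact ⟨w 0 0 n q',
            by rw [hA1]; exact Or.inl (Set.mem_biUnion hn (Set.mem_image_of_mem _ hq')),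
            step 0 0 n hn p' q' hdq⟩
        · obtain ⟨n, hn, p', hp', rfl⟩ :
              ∃ n, n ∈ Set.Icc 1 (K 0 1) ∧ ∃ p', p' ∈ B2 ∧ w 0 1 n p' = p := by
            simpa using hp
          obtain ⟨q', hq', hdq⟩ := ih4 p' hp'
          exact ⟨w 0 1 n q',
            by rw [hA1]; exact Or.inr (Set.mem_biUnion hn (Set.mem_image_of_mem _ hq')),
            step 0 1 n hn p' q' hdq⟩
      · intro p hp
        rw [hB2] at hp
        rcases hp with hp | hp
        · obtain ⟨n, hn, p', hp', rfl⟩ :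
              ∃ n, n ∈ Set.Icc 1 (K 1 0) ∧ ∃ p', p' ∈ B1 ∧ w 1 0 n p' = p := by
            simpa using hp
          obtain ⟨q', hq', hdq⟩ := ih3 p' hp'
          exact ⟨w 1 0 n q',
            by rw [hA2]; exact Or.inl (Set.mem_biUnion hn (Set.mem_image_of_mem _ hq')),
            step 1 0 n hn p' q' hdq⟩
        · obtain ⟨n, hn, p', hp', rfl⟩ :
              ∃ n, n ∈ Set.Icc 1 (K 1 1) ∧ ∃ p', p' ∈ B2 ∧ w 1 1 n p' = p := by
            simpa using hp
          obtain ⟨q', hq', hdq⟩ := ih4 p' hp'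
          exact ⟨w 1 1 n q',
            by rw [hA2]; exact Or.inr (Set.mem_biUnion hn (Set.mem_image_of_mem _ hq')),
            step 1 1 n hn p' q' hdq⟩
  -- conclude using closedness
  have keyfinal : ∀ X Y : Set (ℝ × ℝ × ℝ), IsCompact Y →
      (∀ k : ℕ, ∀ p ∈ X, ∃ q ∈ Y, D p q ≤ ρ ^ k * C) → X ⊆ Y := by
    intro X Y hYc hk p hp
    rw [← hYc.isClosed.closure_eq]
    rw [Metric.mem_closure_iff]
    intro ε hε
    obtain ⟨k, hk2⟩ := exists_pow_lt_of_lt_one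
      (div_pos (mul_pos hε htpos) (show (0:ℝ) < C + 1 by linarith)) hρ1
    obtain ⟨q, hq, hdq⟩ := hk k p hp
    refine ⟨q, hq, ?_⟩
    have h1 : D p q < ε * t := by
      calc D p q ≤ ρ ^ k * C := hdq
        _ ≤ ε * t / (C + 1) * C := mul_le_mul_of_nonneg_right hk2.le hC0
        _ < ε * t := by
            rw [div_mul_eq_mul_div, div_lt_iff₀ (show (0:ℝ) < C + 1 by linarith)]
            nlinarith [mul_pos hε htpos]
    have h2 : t * dist p q ≤ D p q := by
      rw [Prod.dist_eq, Prod.dist_eq, Real.dist_eq, Real.dist_eq, Real.dist_eq, hDdef]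
      dsimp only
      have h3 : |p.1 - q.1| ⊔ (|p.2.1 - q.2.1| ⊔ |p.2.2 - q.2.2|) ≤
          (|p.1 - q.1| + t * (|p.2.1 - q.2.1| + |p.2.2 - q.2.2|)) / t := by
        apply max_le
        · rw [le_div_iff₀ htpos]
          nlinarith [abs_nonneg (p.1 - q.1), abs_nonneg (p.2.1 - q.2.1),
            abs_nonneg (p.2.2 - q.2.2), htpos]
        · apply max_le <;> rw [le_div_iff₀ htpos] <;>
            nlinarith [abs_nonneg (p.1 - q.1), abs_nonneg (p.2.1 - q.2.1),
              abs_nonneg (p.2.2 - q.2.2), htpos]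
      calc t * (|p.1 - q.1| ⊔ (|p.2.1 - q.2.1| ⊔ |p.2.2 - q.2.2|))
          ≤ t * ((|p.1 - q.1| + t * (|p.2.1 - q.2.1| + |p.2.2 - q.2.2|)) / t) :=
            mul_le_mul_of_nonneg_left h3 htpos.le
        _ = |p.1 - q.1| + t * (|p.2.1 - q.2.1| + |p.2.2 - q.2.2|) := by
            field_simp
    nlinarith [htpos, h1, h2]
  constructor
  · apply Set.Subset.antisymm
    · exact keyfinal A1 B1 hB1c (fun k => (main k).1)
    · exact keyfinal B1 A1 hA1c (fun k => (main k).2.2.1)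
  · apply Set.Subset.antisymm
    · exact keyfinal A2 B2 hB2c (fun k => (main k).2.1)
    · exact keyfinal B2 A2 hA2c (fun k => (main k).2.2.2)
end

section
/- For every (f, h) ∈ 𝓕 × 𝓗, the pair T(f, h) = (f̃, h̃) again belongs to 𝓕 × 𝓗: f̃ is continuous on [x_0^1, x_N^1] (in particular the piecewise definitions agree at the interior knots x_n^1, where f̃(x_n^1) = (y_n^1, z_n^1) from both sides) with f̃(x_0^1) = (y_0^1, z_0^1) and f̃(x_N^1) = (y_N^1, z_N^1), and h̃ is continuous on [x_0^2, x_M^2] with h̃(x_0^2) = (y_0^2, z_0^2) and h̃(x_M^2) = (y_M^2, z_M^2). -/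
/-!
On a knot interval `[x_{n-1}, x_n]`, `T(f, h)` is the continuous map `x ↦ (w_n(x, f(x))).2`
(with `h` in place of `f` for the blocks drawing on the second data set) transported along the
increasing affine bijection `L_n` from the base interval, so it is continuous there, and the
join-up conditions for `w_n` at the two ends of the base interval fix its values
`(y_{n-1}, z_{n-1})` and `(y_n, z_n)` at the ends of the knot interval. Adjacent pieces therefore
agree at the knots, and continuity on finitely many closed intervals glues to continuity on their
union.
-/

open Set

section

variable {E : Type*} [TopologicalSpace E]

theorem continuousOn_Icc_of_comp_affine {g F : ℝ → E} {A B p q : ℝ} (hA : 0 < A)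
    (hF : ContinuousOn F (Icc p q)) (hg : ∀ x ∈ Icc p q, g (A * x + B) = F x) :
    ContinuousOn g (Icc (A * p + B) (A * q + B)) := by
  have hmaps : MapsTo (fun t => (t - B) / A) (Icc (A * p + B) (A * q + B)) (Icc p q) :=
    fun t ht =>
      ⟨(le_div_iff₀ hA).2 (by linarith [ht.1]), (div_le_iff₀ hA).2 (by linarith [ht.2])⟩
  refine (hF.comp (by fun_prop) hmaps).congr fun t ht => ?_
  have hinv : A * ((t - B) / A) + B = t := by field_simp; ring
  simpa only [hinv, Function.comp_apply] using hg _ (hmaps ht)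

theorem continuousOn_Icc_of_forall_Icc_succ {g : ℝ → E} {X : ℕ → ℝ} {N : ℕ}
    (h : ∀ i < N, ContinuousOn g (Icc (X i) (X (i + 1)))) :
    ContinuousOn g (Icc (X 0) (X N)) := by
  induction N with
  | zero => simp
  | succ N ih =>
    exact ((ih fun i hi => h i (by omega)).union_of_isClosed (h N N.lt_succ_self)
      isClosed_Icc isClosed_Icc).mono Icc_subset_Icc_union_Icc

def IsInterpolatingPiece (g : ℝ → E) (X : ℕ → ℝ) (V : ℕ → E) (i : ℕ) : Prop :=
  ContinuousOn g (Icc (X i) (X (i + 1))) ∧ g (X i) = V i ∧ g (X (i + 1)) = V (i + 1)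

theorem IsInterpolatingPiece.continuousOn_Icc {g : ℝ → E} {X : ℕ → ℝ} {V : ℕ → E} {N : ℕ}
    (hN : 0 < N) (h : ∀ i < N, IsInterpolatingPiece g X V i) :
    ContinuousOn g (Icc (X 0) (X N)) ∧ ∀ k ≤ N, g (X k) = V k := by
  refine ⟨continuousOn_Icc_of_forall_Icc_succ fun i hi => (h i hi).1, fun k hk => ?_⟩
  rcases k with _ | k
  · exact (h 0 hN).2.1
  · exact (h k (by omega)).2.2

theorem isInterpolatingPiece_of_affine {g u : ℝ → E} {W : ℝ × E → ℝ × E} {A B p q : ℝ}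
    {X : ℕ → ℝ} {V : ℕ → E} {i : ℕ} (hX : X i < X (i + 1))
    (hW : ∀ z, (W z).1 = A * z.1 + B) (hWc : Continuous W) (hpq : p ≤ q)
    (hu : ContinuousOn u (Icc p q))
    (hp : W (p, u p) = (X i, V i)) (hq : W (q, u q) = (X (i + 1), V (i + 1)))
    (hg : ∀ x ∈ Icc p q, g (A * x + B) = (W (x, u x)).2) :
    IsInterpolatingPiece g X V i := by
  have hXp : A * p + B = X i := by simpa only [hp] using (hW (p, u p)).symm
  have hXq : A * q + B = X (i + 1) := by simpa only [hq] using (hW (q, u q)).symm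
  have hA : 0 < A := by nlinarith
  have hF : ContinuousOn (fun x => (W (x, u x)).2) (Icc p q) :=
    (hWc.comp_continuousOn (continuousOn_id.prodMk hu)).snd
  refine ⟨hXp ▸ hXq ▸ continuousOn_Icc_of_comp_affine hA hF hg, ?_, ?_⟩
  · rw [← hXp, hg p ⟨le_rfl, hpq⟩, hp]
  · rw [← hXq, hg q ⟨hpq, le_rfl⟩, hq]

theorem isInterpolatingPiece_of_affine_block {g u : ℝ → E} {W : ℕ → ℝ × E → ℝ × E}
    {A B X : ℕ → ℝ} {V : ℕ → E} {p q : ℝ} {k K : ℕ} (hX : ∀ i < k + K, X i < X (i + 1))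
    (hW : ∀ n z, (W n z).1 = A n * z.1 + B n) (hWc : ∀ n, Continuous (W n))
    (hpq : p ≤ q) (hu : ContinuousOn u (Icc p q))
    (hends : ∀ n, 1 ≤ n → n ≤ K →
      W n (p, u p) = (X (k + n - 1), V (k + n - 1)) ∧ W n (q, u q) = (X (k + n), V (k + n)))
    (hg : ∀ n, 1 ≤ n → n ≤ K → ∀ x ∈ Icc p q, g (A n * x + B n) = (W n (x, u x)).2) :
    ∀ i, k ≤ i → i < k + K → IsInterpolatingPiece g X V i := by
  intro i hki hiK
  obtain ⟨hp, hq⟩ := hends (i - k + 1) (by omega) (by omega)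
  rw [show k + (i - k + 1) - 1 = i by omega] at hp
  rw [show k + (i - k + 1) = i + 1 by omega] at hq
  exact isInterpolatingPiece_of_affine (hX i hiK) (hW _) (hWc _) hpq hu hp hq
    (hg _ (by omega) (by omega))

end

theorem stmt_6_general
    (N M : ℕ) (hN : 2 ≤ N) (hM : 2 ≤ M)
    (x1 y1 z1 x2 y2 z2 : ℕ → ℝ)
    (hx1 : ∀ i, i < N → x1 i < x1 (i + 1))
    (hx2 : ∀ j, j < M → x2 j < x2 (j + 1))
    (K : Fin 2 → Fin 2 → ℕ)
    (hK1 : K 0 0 + K 0 1 = N) (hK2 : K 1 0 + K 1 1 = M)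
    (a b c d e f α β γ : Fin 2 → Fin 2 → ℕ → ℝ)
    (w : Fin 2 → Fin 2 → ℕ → ℝ × ℝ × ℝ → ℝ × ℝ × ℝ)
    (hw : ∀ r s n p, w r s n p =
      (a r s n * p.1 + b r s n,
       c r s n * p.1 + α r s n * p.2.1 + β r s n * p.2.2 + d r s n,
       e r s n * p.1 + γ r s n * p.2.2 + f r s n))
    (hj11 : ∀ n, 1 ≤ n → n ≤ K 0 0 →
      w 0 0 n (x1 0, y1 0, z1 0) = (x1 (n - 1), y1 (n - 1), z1 (n - 1)) ∧
      w 0 0 n (x1 N, y1 N, z1 N) = (x1 n, y1 n, z1 n))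
    (hj12 : ∀ n, 1 ≤ n → n ≤ K 0 1 →
      w 0 1 n (x2 0, y2 0, z2 0) =
        (x1 (K 0 0 + n - 1), y1 (K 0 0 + n - 1), z1 (K 0 0 + n - 1)) ∧
      w 0 1 n (x2 M, y2 M, z2 M) = (x1 (K 0 0 + n), y1 (K 0 0 + n), z1 (K 0 0 + n)))
    (hj21 : ∀ n, 1 ≤ n → n ≤ K 1 0 →
      w 1 0 n (x1 0, y1 0, z1 0) = (x2 (n - 1), y2 (n - 1), z2 (n - 1)) ∧
      w 1 0 n (x1 N, y1 N, z1 N) = (x2 n, y2 n, z2 n))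
    (hj22 : ∀ n, 1 ≤ n → n ≤ K 1 1 →
      w 1 1 n (x2 0, y2 0, z2 0) =
        (x2 (K 1 0 + n - 1), y2 (K 1 0 + n - 1), z2 (K 1 0 + n - 1)) ∧
      w 1 1 n (x2 M, y2 M, z2 M) = (x2 (K 1 0 + n), y2 (K 1 0 + n), z2 (K 1 0 + n)))
    (u v ft ht : ℝ → ℝ × ℝ)
    (hu : (ContinuousOn u (Set.Icc (x1 0) (x1 N)) ∧ u (x1 0) = (y1 0, z1 0) ∧ u (x1 N) = (y1 N, z1 N)))
    (hv : (ContinuousOn v (Set.Icc (x2 0) (x2 M)) ∧ v (x2 0) = (y2 0, z2 0) ∧ v (x2 M) = (y2 M, z2 M)))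
    (hEQ : (∀ n, 1 ≤ n → n ≤ K 0 0 → ∀ x ∈ Set.Icc (x1 0) (x1 N),
      ft (a 0 0 n * x + b 0 0 n) =
        (c 0 0 n * x + α 0 0 n * (u x).1 + β 0 0 n * (u x).2 + d 0 0 n,
         e 0 0 n * x + γ 0 0 n * (u x).2 + f 0 0 n)) ∧
    (∀ n, 1 ≤ n → n ≤ K 0 1 → ∀ x ∈ Set.Icc (x2 0) (x2 M),
      ft (a 0 1 n * x + b 0 1 n) =
        (c 0 1 n * x + α 0 1 n * (v x).1 + β 0 1 n * (v x).2 + d 0 1 n,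
         e 0 1 n * x + γ 0 1 n * (v x).2 + f 0 1 n)) ∧
    (∀ n, 1 ≤ n → n ≤ K 1 0 → ∀ x ∈ Set.Icc (x1 0) (x1 N),
      ht (a 1 0 n * x + b 1 0 n) =
        (c 1 0 n * x + α 1 0 n * (u x).1 + β 1 0 n * (u x).2 + d 1 0 n,
         e 1 0 n * x + γ 1 0 n * (u x).2 + f 1 0 n)) ∧
    (∀ n, 1 ≤ n → n ≤ K 1 1 → ∀ x ∈ Set.Icc (x2 0) (x2 M),
      ht (a 1 1 n * x + b 1 1 n) =
        (c 1 1 n * x + α 1 1 n * (v x).1 + β 1 1 n * (v x).2 + d 1 1 n,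
         e 1 1 n * x + γ 1 1 n * (v x).2 + f 1 1 n))) :
    (ContinuousOn ft (Set.Icc (x1 0) (x1 N)) ∧ ft (x1 0) = (y1 0, z1 0) ∧ ft (x1 N) = (y1 N, z1 N)) ∧
    (ContinuousOn ht (Set.Icc (x2 0) (x2 M)) ∧ ht (x2 0) = (y2 0, z2 0) ∧ ht (x2 M) = (y2 M, z2 M)) ∧
    (∀ n, n ≤ N → ft (x1 n) = (y1 n, z1 n)) ∧
    (∀ m, m ≤ M → ht (x2 m) = (y2 m, z2 m)) := by
  obtain ⟨hu, hu0, huN⟩ := hu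
  obtain ⟨hv, hv0, hvM⟩ := hv
  obtain ⟨E11, E12, E21, E22⟩ := hEQ
  subst hK1 hK2
  have hw_fst : ∀ r s n z, (w r s n z).1 = a r s n * z.1 + b r s n := fun r s n z => by rw [hw]
  have hw_cont : ∀ r s n, Continuous (w r s n) :=
    fun r s n => (continuous_congr (hw r s n)).mpr (by fun_prop)
  have hI1 : x1 0 ≤ x1 (K 0 0 + K 0 1) := (strictMonoOn_Iic_of_lt_succ hx1).monotoneOn
    (mem_Iic.2 (Nat.zero_le _)) (mem_Iic.2 le_rfl) (Nat.zero_le _)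
  have hI2 : x2 0 ≤ x2 (K 1 0 + K 1 1) := (strictMonoOn_Iic_of_lt_succ hx2).monotoneOn
    (mem_Iic.2 (Nat.zero_le _)) (mem_Iic.2 le_rfl) (Nat.zero_le _)
  have B11 := isInterpolatingPiece_of_affine_block
    (g := ft) (V := fun n => (y1 n, z1 n)) (k := 0) (K := K 0 0)
    (fun i hi => hx1 i (by omega)) (hw_fst 0 0) (hw_cont 0 0) hI1 hu
    (by simpa only [zero_add, hu0, huN] using hj11)
    fun n h1 h2 x hx => by rw [E11 n h1 h2 x hx, hw]
  have B12 := isInterpolatingPiece_of_affine_block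
    (g := ft) (V := fun n => (y1 n, z1 n)) (K := K 0 1) hx1 (hw_fst 0 1) (hw_cont 0 1) hI2 hv
    (by simpa only [hv0, hvM] using hj12)
    fun n h1 h2 x hx => by rw [E12 n h1 h2 x hx, hw]
  have B21 := isInterpolatingPiece_of_affine_block
    (g := ht) (V := fun n => (y2 n, z2 n)) (k := 0) (K := K 1 0)
    (fun i hi => hx2 i (by omega)) (hw_fst 1 0) (hw_cont 1 0) hI1 hu
    (by simpa only [zero_add, hu0, huN] using hj21)
    fun n h1 h2 x hx => by rw [E21 n h1 h2 x hx, hw]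
  have B22 := isInterpolatingPiece_of_affine_block
    (g := ht) (V := fun n => (y2 n, z2 n)) (K := K 1 1) hx2 (hw_fst 1 1) (hw_cont 1 1) hI2 hv
    (by simpa only [hv0, hvM] using hj22)
    fun n h1 h2 x hx => by rw [E22 n h1 h2 x hx, hw]
  have hft := IsInterpolatingPiece.continuousOn_Icc (by omega) fun i hi =>
    if h : i < K 0 0 then B11 i (Nat.zero_le _) (by omega) else B12 i (by omega) hi
  have hht := IsInterpolatingPiece.continuousOn_Icc (by omega) fun i hi =>
    if h : i < K 1 0 then B21 i (Nat.zero_le _) (by omega) else B22 i (by omega) hi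
  exact ⟨⟨hft.1, hft.2 0 (Nat.zero_le _), hft.2 _ le_rfl⟩,
    ⟨hht.1, hht.2 0 (Nat.zero_le _), hht.2 _ le_rfl⟩, hft.2, hht.2⟩

theorem stmt_6
    (N M : ℕ) (hN : 2 ≤ N) (hM : 2 ≤ M)
    (x1 y1 z1 x2 y2 z2 : ℕ → ℝ)
    (hx1 : ∀ i, i < N → x1 i < x1 (i + 1))
    (hx2 : ∀ j, j < M → x2 j < x2 (j + 1))
    (hstar1 : ∀ i, 1 ≤ i → i ≤ N → x1 i - x1 (i - 1) < x2 M - x2 0)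
    (hstar2 : ∀ j, 1 ≤ j → j ≤ M → x2 j - x2 (j - 1) < x1 N - x1 0)
    (K : Fin 2 → Fin 2 → ℕ)
    (hK1 : K 0 0 + K 0 1 = N) (hK2 : K 1 0 + K 1 1 = M)
    (a b c d e f α β γ : Fin 2 → Fin 2 → ℕ → ℝ)
    (hα : ∀ r s n, 1 ≤ n → n ≤ K r s → |α r s n| < 1)
    (hγ : ∀ r s n, 1 ≤ n → n ≤ K r s → |γ r s n| < 1)
    (hβγ : ∀ r s n, 1 ≤ n → n ≤ K r s → |β r s n| + |γ r s n| < 1)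
    (w : Fin 2 → Fin 2 → ℕ → ℝ × ℝ × ℝ → ℝ × ℝ × ℝ)
    (hw : ∀ r s n p, w r s n p =
      (a r s n * p.1 + b r s n,
       c r s n * p.1 + α r s n * p.2.1 + β r s n * p.2.2 + d r s n,
       e r s n * p.1 + γ r s n * p.2.2 + f r s n))
    (hj11 : ∀ n, 1 ≤ n → n ≤ K 0 0 →
      w 0 0 n (x1 0, y1 0, z1 0) = (x1 (n - 1), y1 (n - 1), z1 (n - 1)) ∧
      w 0 0 n (x1 N, y1 N, z1 N) = (x1 n, y1 n, z1 n))
    (hj12 : ∀ n, 1 ≤ n → n ≤ K 0 1 →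
      w 0 1 n (x2 0, y2 0, z2 0) =
        (x1 (K 0 0 + n - 1), y1 (K 0 0 + n - 1), z1 (K 0 0 + n - 1)) ∧
      w 0 1 n (x2 M, y2 M, z2 M) = (x1 (K 0 0 + n), y1 (K 0 0 + n), z1 (K 0 0 + n)))
    (hj21 : ∀ n, 1 ≤ n → n ≤ K 1 0 →
      w 1 0 n (x1 0, y1 0, z1 0) = (x2 (n - 1), y2 (n - 1), z2 (n - 1)) ∧
      w 1 0 n (x1 N, y1 N, z1 N) = (x2 n, y2 n, z2 n))
    (hj22 : ∀ n, 1 ≤ n → n ≤ K 1 1 →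
      w 1 1 n (x2 0, y2 0, z2 0) =
        (x2 (K 1 0 + n - 1), y2 (K 1 0 + n - 1), z2 (K 1 0 + n - 1)) ∧
      w 1 1 n (x2 M, y2 M, z2 M) = (x2 (K 1 0 + n), y2 (K 1 0 + n), z2 (K 1 0 + n)))
    (u v ft ht : ℝ → ℝ × ℝ)
    (hu : (ContinuousOn u (Set.Icc (x1 0) (x1 N)) ∧ u (x1 0) = (y1 0, z1 0) ∧ u (x1 N) = (y1 N, z1 N)))
    (hv : (ContinuousOn v (Set.Icc (x2 0) (x2 M)) ∧ v (x2 0) = (y2 0, z2 0) ∧ v (x2 M) = (y2 M, z2 M)))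
    (hEQ : (∀ n, 1 ≤ n → n ≤ K 0 0 → ∀ x ∈ Set.Icc (x1 0) (x1 N),
      ft (a 0 0 n * x + b 0 0 n) =
        (c 0 0 n * x + α 0 0 n * (u x).1 + β 0 0 n * (u x).2 + d 0 0 n,
         e 0 0 n * x + γ 0 0 n * (u x).2 + f 0 0 n)) ∧
    (∀ n, 1 ≤ n → n ≤ K 0 1 → ∀ x ∈ Set.Icc (x2 0) (x2 M),
      ft (a 0 1 n * x + b 0 1 n) =
        (c 0 1 n * x + α 0 1 n * (v x).1 + β 0 1 n * (v x).2 + d 0 1 n,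
         e 0 1 n * x + γ 0 1 n * (v x).2 + f 0 1 n)) ∧
    (∀ n, 1 ≤ n → n ≤ K 1 0 → ∀ x ∈ Set.Icc (x1 0) (x1 N),
      ht (a 1 0 n * x + b 1 0 n) =
        (c 1 0 n * x + α 1 0 n * (u x).1 + β 1 0 n * (u x).2 + d 1 0 n,
         e 1 0 n * x + γ 1 0 n * (u x).2 + f 1 0 n)) ∧
    (∀ n, 1 ≤ n → n ≤ K 1 1 → ∀ x ∈ Set.Icc (x2 0) (x2 M),
      ht (a 1 1 n * x + b 1 1 n) =
        (c 1 1 n * x + α 1 1 n * (v x).1 + β 1 1 n * (v x).2 + d 1 1 n,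
         e 1 1 n * x + γ 1 1 n * (v x).2 + f 1 1 n))) :
    (ContinuousOn ft (Set.Icc (x1 0) (x1 N)) ∧ ft (x1 0) = (y1 0, z1 0) ∧ ft (x1 N) = (y1 N, z1 N)) ∧
    (ContinuousOn ht (Set.Icc (x2 0) (x2 M)) ∧ ht (x2 0) = (y2 0, z2 0) ∧ ht (x2 M) = (y2 M, z2 M)) ∧
    (∀ n, n ≤ N → ft (x1 n) = (y1 n, z1 n)) ∧
    (∀ m, m ≤ M → ht (x2 m) = (y2 m, z2 m)) :=
  stmt_6_general N M hN hM x1 y1 z1 x2 y2 z2 hx1 hx2 K hK1 hK2 a b c d e f α β γ w hw hj11 hj12 hj21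
    hj22 u v ft ht hu hv hEQ
end

section
/- When ℝ² carries the ℓ¹ norm ‖(y, z)‖ = |y| + |z|, the operator T is a contraction on (𝓕 × 𝓗, d): for all (f_1, h_1), (f_2, h_2) ∈ 𝓕 × 𝓗, d(T(f_1, h_1), T(f_2, h_2)) ≤ δ · d((f_1, h_1), (f_2, h_2)), where δ = max over r, s ∈ {1,2} and 1 ≤ n ≤ K^{rs} of max{|α_n^{rs}|, |β_n^{rs}| + |γ_n^{rs}|}, and δ < 1. -/
/-!
Subtracting the Read–Bajraktarević equations of two inputs cancels the affine parts: on each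
piece the difference of the images is the upper triangular matrix `[[α, β], [0, γ]]` applied to
the difference of the inputs at the preimage point, and the ℓ¹ operator norm of that matrix is at
most `δ`. The join-up conditions guarantee that every point of a target interval has such a
preimage, so the supremum over the target is at most `δ` times the larger of the two source
suprema.
-/

open Set

-- `max |α| (|β| + |γ|)` is the ℓ¹ operator norm of `[[α, β], [0, γ]]` (its largest column sum).
theorem abs_add_abs_le_of_column_sums {α β γ δ : ℝ} (hα : |α| ≤ δ) (hβγ : |β| + |γ| ≤ δ)
    (P Q : ℝ) : |α * P + β * Q| + |γ * Q| ≤ δ * (|P| + |Q|) :=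
  calc |α * P + β * Q| + |γ * Q| ≤ |α| * |P| + (|β| + |γ|) * |Q| := by
        have := abs_add_le (α * P) (β * Q)
        rw [abs_mul, abs_mul] at this
        rw [abs_mul]
        linarith
    _ ≤ δ * |P| + δ * |Q| := by gcongr
    _ = δ * (|P| + |Q|) := by ring

theorem exists_lt_mem_Icc_succ {α : Type*} [LinearOrder α] {g : ℕ → α} {N : ℕ} (hN : 0 < N)
    {x : α} (hx : x ∈ Icc (g 0) (g N)) : ∃ n < N, x ∈ Icc (g n) (g (n + 1)) := by
  induction N with
  | zero => omega
  | succ N ih =>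
    rcases Nat.eq_zero_or_pos N with rfl | hN
    · exact ⟨0, Nat.one_pos, hx⟩
    by_cases hxN : x ≤ g N
    · obtain ⟨n, hn, hxn⟩ := ih hN ⟨hx.1, hxN⟩
      exact ⟨n, by omega, hxn⟩
    · exact ⟨N, by omega, (not_le.mp hxN).le, hx.2⟩

theorem sSup_image_Icc_le_of_forall_Icc_succ {g : ℕ → ℝ} {φ : ℝ → ℝ} {N : ℕ} {B : ℝ}
    (hN : 0 < N) (hB : 0 ≤ B) (h : ∀ n < N, ∀ x ∈ Icc (g n) (g (n + 1)), φ x ≤ B) :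
    sSup (φ '' Icc (g 0) (g N)) ≤ B := by
  refine Real.sSup_le ?_ hB
  rintro _ ⟨x, hx, rfl⟩
  obtain ⟨n, hn, hxn⟩ := exists_lt_mem_Icc_succ hN hx
  exact h n hn x hxn

theorem sSup_image_Icc_le_of_two_blocks {g : ℕ → ℝ} {φ : ℝ → ℝ} {K₁ K₂ N : ℕ} {B : ℝ}
    (hK : K₁ + K₂ = N) (hN : 0 < N) (hB : 0 ≤ B)
    (h₁ : ∀ n, 1 ≤ n → n ≤ K₁ → ∀ x ∈ Icc (g (n - 1)) (g n), φ x ≤ B)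
    (h₂ : ∀ n, 1 ≤ n → n ≤ K₂ → ∀ x ∈ Icc (g (K₁ + n - 1)) (g (K₁ + n)), φ x ≤ B) :
    sSup (φ '' Icc (g 0) (g N)) ≤ B := by
  refine sSup_image_Icc_le_of_forall_Icc_succ hN hB fun n hn => ?_
  rcases lt_or_ge n K₁ with hn₁ | hn₁
  · simpa using h₁ (n + 1) (by omega) hn₁
  · obtain ⟨m, rfl⟩ := Nat.exists_eq_add_of_le hn₁
    simpa [add_assoc] using h₂ (m + 1) (by omega) (by omega)

theorem l1_sub_le_of_readBajraktarevic {s₀ s₁ p q A B C D E F α β γ δ : ℝ}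
    {F₁ F₂ u₁ u₂ : ℝ → ℝ × ℝ} (hs : s₀ ≤ s₁) (hp : A * s₀ + B = p) (hq : A * s₁ + B = q)
    (hu₁ : ContinuousOn u₁ (Icc s₀ s₁)) (hu₂ : ContinuousOn u₂ (Icc s₀ s₁))
    (hF₁ : ∀ t ∈ Icc s₀ s₁, F₁ (A * t + B) =
      (C * t + α * (u₁ t).1 + β * (u₁ t).2 + D, E * t + γ * (u₁ t).2 + F))
    (hF₂ : ∀ t ∈ Icc s₀ s₁, F₂ (A * t + B) =
      (C * t + α * (u₂ t).1 + β * (u₂ t).2 + D, E * t + γ * (u₂ t).2 + F))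
    (hα : |α| ≤ δ) (hβγ : |β| + |γ| ≤ δ) :
    ∀ x ∈ Icc p q, |(F₁ x).1 - (F₂ x).1| + |(F₁ x).2 - (F₂ x).2| ≤
      δ * sSup ((fun t => |(u₁ t).1 - (u₂ t).1| + |(u₁ t).2 - (u₂ t).2|) '' Icc s₀ s₁) := by
  intro x hx
  obtain ⟨t, ht, rfl⟩ : x ∈ (fun t => A * t + B) '' Icc s₀ s₁ :=
    intermediate_value_Icc hs (by fun_prop) (hp ▸ hq ▸ hx)
  have hdist : ContinuousOn (fun t => |(u₁ t).1 - (u₂ t).1| + |(u₁ t).2 - (u₂ t).2|)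
      (Icc s₀ s₁) :=
    ((hu₁.fst.sub hu₂.fst).abs).add ((hu₁.snd.sub hu₂.snd).abs)
  rw [hF₁ t ht, hF₂ t ht]
  calc _ = |α * ((u₁ t).1 - (u₂ t).1) + β * ((u₁ t).2 - (u₂ t).2)| +
        |γ * ((u₁ t).2 - (u₂ t).2)| := by ring_nf
    _ ≤ δ * (|(u₁ t).1 - (u₂ t).1| + |(u₁ t).2 - (u₂ t).2|) :=
        abs_add_abs_le_of_column_sums hα hβγ _ _
    _ ≤ _ := by
        gcongr
        · exact (abs_nonneg α).trans hα
        · exact hdist.le_sSup_image_Icc ht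

theorem stmt_7_general
    (N M : ℕ) (hN : 2 ≤ N) (hM : 2 ≤ M)
    (x1 y1 z1 x2 y2 z2 : ℕ → ℝ)
    (hx1 : ∀ i, i < N → x1 i < x1 (i + 1))
    (hx2 : ∀ j, j < M → x2 j < x2 (j + 1))
    (K : Fin 2 → Fin 2 → ℕ)
    (hK1 : K 0 0 + K 0 1 = N) (hK2 : K 1 0 + K 1 1 = M)
    (a b c d e f α β γ : Fin 2 → Fin 2 → ℕ → ℝ)
    (hα : ∀ r s n, 1 ≤ n → n ≤ K r s → |α r s n| < 1)
    (hβγ : ∀ r s n, 1 ≤ n → n ≤ K r s → |β r s n| + |γ r s n| < 1)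
    (w : Fin 2 → Fin 2 → ℕ → ℝ × ℝ × ℝ → ℝ × ℝ × ℝ)
    (hw : ∀ r s n p, w r s n p =
      (a r s n * p.1 + b r s n,
       c r s n * p.1 + α r s n * p.2.1 + β r s n * p.2.2 + d r s n,
       e r s n * p.1 + γ r s n * p.2.2 + f r s n))
    (hj11 : ∀ n, 1 ≤ n → n ≤ K 0 0 →
      w 0 0 n (x1 0, y1 0, z1 0) = (x1 (n - 1), y1 (n - 1), z1 (n - 1)) ∧
      w 0 0 n (x1 N, y1 N, z1 N) = (x1 n, y1 n, z1 n))
    (hj12 : ∀ n, 1 ≤ n → n ≤ K 0 1 →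
      w 0 1 n (x2 0, y2 0, z2 0) =
        (x1 (K 0 0 + n - 1), y1 (K 0 0 + n - 1), z1 (K 0 0 + n - 1)) ∧
      w 0 1 n (x2 M, y2 M, z2 M) = (x1 (K 0 0 + n), y1 (K 0 0 + n), z1 (K 0 0 + n)))
    (hj21 : ∀ n, 1 ≤ n → n ≤ K 1 0 →
      w 1 0 n (x1 0, y1 0, z1 0) = (x2 (n - 1), y2 (n - 1), z2 (n - 1)) ∧
      w 1 0 n (x1 N, y1 N, z1 N) = (x2 n, y2 n, z2 n))
    (hj22 : ∀ n, 1 ≤ n → n ≤ K 1 1 →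
      w 1 1 n (x2 0, y2 0, z2 0) =
        (x2 (K 1 0 + n - 1), y2 (K 1 0 + n - 1), z2 (K 1 0 + n - 1)) ∧
      w 1 1 n (x2 M, y2 M, z2 M) = (x2 (K 1 0 + n), y2 (K 1 0 + n), z2 (K 1 0 + n)))
    (u1 v1 u2 v2 ft1 ht1 ft2 ht2 : ℝ → ℝ × ℝ)
    (hu1 : (ContinuousOn u1 (Set.Icc (x1 0) (x1 N)) ∧ u1 (x1 0) = (y1 0, z1 0) ∧ u1 (x1 N) = (y1 N, z1 N)))
    (hv1 : (ContinuousOn v1 (Set.Icc (x2 0) (x2 M)) ∧ v1 (x2 0) = (y2 0, z2 0) ∧ v1 (x2 M) = (y2 M, z2 M)))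
    (hu2 : (ContinuousOn u2 (Set.Icc (x1 0) (x1 N)) ∧ u2 (x1 0) = (y1 0, z1 0) ∧ u2 (x1 N) = (y1 N, z1 N)))
    (hv2 : (ContinuousOn v2 (Set.Icc (x2 0) (x2 M)) ∧ v2 (x2 0) = (y2 0, z2 0) ∧ v2 (x2 M) = (y2 M, z2 M)))
    (hEQ1 : (∀ n, 1 ≤ n → n ≤ K 0 0 → ∀ x ∈ Set.Icc (x1 0) (x1 N),
      ft1 (a 0 0 n * x + b 0 0 n) =
        (c 0 0 n * x + α 0 0 n * (u1 x).1 + β 0 0 n * (u1 x).2 + d 0 0 n,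
         e 0 0 n * x + γ 0 0 n * (u1 x).2 + f 0 0 n)) ∧
    (∀ n, 1 ≤ n → n ≤ K 0 1 → ∀ x ∈ Set.Icc (x2 0) (x2 M),
      ft1 (a 0 1 n * x + b 0 1 n) =
        (c 0 1 n * x + α 0 1 n * (v1 x).1 + β 0 1 n * (v1 x).2 + d 0 1 n,
         e 0 1 n * x + γ 0 1 n * (v1 x).2 + f 0 1 n)) ∧
    (∀ n, 1 ≤ n → n ≤ K 1 0 → ∀ x ∈ Set.Icc (x1 0) (x1 N),
      ht1 (a 1 0 n * x + b 1 0 n) =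
        (c 1 0 n * x + α 1 0 n * (u1 x).1 + β 1 0 n * (u1 x).2 + d 1 0 n,
         e 1 0 n * x + γ 1 0 n * (u1 x).2 + f 1 0 n)) ∧
    (∀ n, 1 ≤ n → n ≤ K 1 1 → ∀ x ∈ Set.Icc (x2 0) (x2 M),
      ht1 (a 1 1 n * x + b 1 1 n) =
        (c 1 1 n * x + α 1 1 n * (v1 x).1 + β 1 1 n * (v1 x).2 + d 1 1 n,
         e 1 1 n * x + γ 1 1 n * (v1 x).2 + f 1 1 n)))
    (hEQ2 : (∀ n, 1 ≤ n → n ≤ K 0 0 → ∀ x ∈ Set.Icc (x1 0) (x1 N),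
      ft2 (a 0 0 n * x + b 0 0 n) =
        (c 0 0 n * x + α 0 0 n * (u2 x).1 + β 0 0 n * (u2 x).2 + d 0 0 n,
         e 0 0 n * x + γ 0 0 n * (u2 x).2 + f 0 0 n)) ∧
    (∀ n, 1 ≤ n → n ≤ K 0 1 → ∀ x ∈ Set.Icc (x2 0) (x2 M),
      ft2 (a 0 1 n * x + b 0 1 n) =
        (c 0 1 n * x + α 0 1 n * (v2 x).1 + β 0 1 n * (v2 x).2 + d 0 1 n,
         e 0 1 n * x + γ 0 1 n * (v2 x).2 + f 0 1 n)) ∧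
    (∀ n, 1 ≤ n → n ≤ K 1 0 → ∀ x ∈ Set.Icc (x1 0) (x1 N),
      ht2 (a 1 0 n * x + b 1 0 n) =
        (c 1 0 n * x + α 1 0 n * (u2 x).1 + β 1 0 n * (u2 x).2 + d 1 0 n,
         e 1 0 n * x + γ 1 0 n * (u2 x).2 + f 1 0 n)) ∧
    (∀ n, 1 ≤ n → n ≤ K 1 1 → ∀ x ∈ Set.Icc (x2 0) (x2 M),
      ht2 (a 1 1 n * x + b 1 1 n) =
        (c 1 1 n * x + α 1 1 n * (v2 x).1 + β 1 1 n * (v2 x).2 + d 1 1 n,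
         e 1 1 n * x + γ 1 1 n * (v2 x).2 + f 1 1 n)))
    (δm : ℝ)
    (hδm : IsGreatest {t : ℝ | ∃ (r s : Fin 2) (n : ℕ), 1 ≤ n ∧ n ≤ K r s ∧
      (t = |α r s n| ∨ t = |β r s n| + |γ r s n|)} δm) :
    δm < 1 ∧
    max (sSup ((fun x => |(ft1 x).1 - (ft2 x).1| + |(ft1 x).2 - (ft2 x).2|) '' Set.Icc (x1 0) (x1 N)))
        (sSup ((fun x => |(ht1 x).1 - (ht2 x).1| + |(ht1 x).2 - (ht2 x).2|) '' Set.Icc (x2 0) (x2 M))) ≤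
      δm *
        max (sSup ((fun x => |(u1 x).1 - (u2 x).1| + |(u1 x).2 - (u2 x).2|) '' Set.Icc (x1 0) (x1 N)))
            (sSup ((fun x => |(v1 x).1 - (v2 x).1| + |(v1 x).2 - (v2 x).2|) '' Set.Icc (x2 0) (x2 M))) := by
  obtain ⟨⟨r, s, n, hn₁, hn₂, hδ_mem⟩, hδ_ub⟩ := hδm
  have hδ_lt : δm < 1 := by
    rcases hδ_mem with rfl | rfl
    exacts [hα r s n hn₁ hn₂, hβγ r s n hn₁ hn₂]
  have hδα r s n (h₁ : 1 ≤ n) (h₂ : n ≤ K r s) : |α r s n| ≤ δm :=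
    hδ_ub ⟨r, s, n, h₁, h₂, .inl rfl⟩
  have hδβγ r s n (h₁ : 1 ≤ n) (h₂ : n ≤ K r s) : |β r s n| + |γ r s n| ≤ δm :=
    hδ_ub ⟨r, s, n, h₁, h₂, .inr rfl⟩
  have hδ_nonneg : 0 ≤ δm := (abs_nonneg _).trans (hδα r s n hn₁ hn₂)
  have affine_eq {r s n x y z p q q'} (h : w r s n (x, y, z) = (p, q, q')) :
      a r s n * x + b r s n = p := by
    rw [hw] at h
    exact congrArg Prod.fst h
  have hx1N : x1 0 ≤ x1 N :=
    (strictMonoOn_Iic_of_lt_succ hx1).monotoneOn (by simp) (by simp) (Nat.zero_le N)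
  have hx2M : x2 0 ≤ x2 M :=
    (strictMonoOn_Iic_of_lt_succ hx2).monotoneOn (by simp) (by simp) (Nat.zero_le M)
  set S₁ := sSup ((fun x => |(u1 x).1 - (u2 x).1| + |(u1 x).2 - (u2 x).2|) ''
    Set.Icc (x1 0) (x1 N))
  set S₂ := sSup ((fun x => |(v1 x).1 - (v2 x).1| + |(v1 x).2 - (v2 x).2|) ''
    Set.Icc (x2 0) (x2 M))
  have hS₁ : δm * S₁ ≤ δm * max S₁ S₂ := by gcongr; exact le_max_left _ _
  have hS₂ : δm * S₂ ≤ δm * max S₁ S₂ := by gcongr; exact le_max_right _ _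
  have hB : 0 ≤ δm * max S₁ S₂ :=
    mul_nonneg hδ_nonneg ((Real.sSup_nonneg (by rintro _ ⟨x, -, rfl⟩; positivity)).trans
      (le_max_left S₁ S₂))
  refine ⟨hδ_lt, max_le ?_ ?_⟩
  · refine sSup_image_Icc_le_of_two_blocks hK1 (by omega) hB
      (fun n h₁ h₂ x hx => (l1_sub_le_of_readBajraktarevic hx1N (affine_eq (hj11 n h₁ h₂).1)
        (affine_eq (hj11 n h₁ h₂).2) hu1.1 hu2.1 (hEQ1.1 n h₁ h₂) (hEQ2.1 n h₁ h₂)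
        (hδα 0 0 n h₁ h₂) (hδβγ 0 0 n h₁ h₂) x hx).trans hS₁)
      (fun n h₁ h₂ x hx => (l1_sub_le_of_readBajraktarevic hx2M (affine_eq (hj12 n h₁ h₂).1)
        (affine_eq (hj12 n h₁ h₂).2) hv1.1 hv2.1 (hEQ1.2.1 n h₁ h₂) (hEQ2.2.1 n h₁ h₂)
        (hδα 0 1 n h₁ h₂) (hδβγ 0 1 n h₁ h₂) x hx).trans hS₂)
  · refine sSup_image_Icc_le_of_two_blocks hK2 (by omega) hB
      (fun n h₁ h₂ x hx => (l1_sub_le_of_readBajraktarevic hx1N (affine_eq (hj21 n h₁ h₂).1)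
        (affine_eq (hj21 n h₁ h₂).2) hu1.1 hu2.1 (hEQ1.2.2.1 n h₁ h₂) (hEQ2.2.2.1 n h₁ h₂)
        (hδα 1 0 n h₁ h₂) (hδβγ 1 0 n h₁ h₂) x hx).trans hS₁)
      (fun n h₁ h₂ x hx => (l1_sub_le_of_readBajraktarevic hx2M (affine_eq (hj22 n h₁ h₂).1)
        (affine_eq (hj22 n h₁ h₂).2) hv1.1 hv2.1 (hEQ1.2.2.2 n h₁ h₂) (hEQ2.2.2.2 n h₁ h₂)
        (hδα 1 1 n h₁ h₂) (hδβγ 1 1 n h₁ h₂) x hx).trans hS₂)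

theorem stmt_7
    (N M : ℕ) (hN : 2 ≤ N) (hM : 2 ≤ M)
    (x1 y1 z1 x2 y2 z2 : ℕ → ℝ)
    (hx1 : ∀ i, i < N → x1 i < x1 (i + 1))
    (hx2 : ∀ j, j < M → x2 j < x2 (j + 1))
    (hstar1 : ∀ i, 1 ≤ i → i ≤ N → x1 i - x1 (i - 1) < x2 M - x2 0)
    (hstar2 : ∀ j, 1 ≤ j → j ≤ M → x2 j - x2 (j - 1) < x1 N - x1 0)
    (K : Fin 2 → Fin 2 → ℕ)
    (hK1 : K 0 0 + K 0 1 = N) (hK2 : K 1 0 + K 1 1 = M)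
    (a b c d e f α β γ : Fin 2 → Fin 2 → ℕ → ℝ)
    (hα : ∀ r s n, 1 ≤ n → n ≤ K r s → |α r s n| < 1)
    (hγ : ∀ r s n, 1 ≤ n → n ≤ K r s → |γ r s n| < 1)
    (hβγ : ∀ r s n, 1 ≤ n → n ≤ K r s → |β r s n| + |γ r s n| < 1)
    (w : Fin 2 → Fin 2 → ℕ → ℝ × ℝ × ℝ → ℝ × ℝ × ℝ)
    (hw : ∀ r s n p, w r s n p =
      (a r s n * p.1 + b r s n,
       c r s n * p.1 + α r s n * p.2.1 + β r s n * p.2.2 + d r s n,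
       e r s n * p.1 + γ r s n * p.2.2 + f r s n))
    (hj11 : ∀ n, 1 ≤ n → n ≤ K 0 0 →
      w 0 0 n (x1 0, y1 0, z1 0) = (x1 (n - 1), y1 (n - 1), z1 (n - 1)) ∧
      w 0 0 n (x1 N, y1 N, z1 N) = (x1 n, y1 n, z1 n))
    (hj12 : ∀ n, 1 ≤ n → n ≤ K 0 1 →
      w 0 1 n (x2 0, y2 0, z2 0) =
        (x1 (K 0 0 + n - 1), y1 (K 0 0 + n - 1), z1 (K 0 0 + n - 1)) ∧
      w 0 1 n (x2 M, y2 M, z2 M) = (x1 (K 0 0 + n), y1 (K 0 0 + n), z1 (K 0 0 + n)))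
    (hj21 : ∀ n, 1 ≤ n → n ≤ K 1 0 →
      w 1 0 n (x1 0, y1 0, z1 0) = (x2 (n - 1), y2 (n - 1), z2 (n - 1)) ∧
      w 1 0 n (x1 N, y1 N, z1 N) = (x2 n, y2 n, z2 n))
    (hj22 : ∀ n, 1 ≤ n → n ≤ K 1 1 →
      w 1 1 n (x2 0, y2 0, z2 0) =
        (x2 (K 1 0 + n - 1), y2 (K 1 0 + n - 1), z2 (K 1 0 + n - 1)) ∧
      w 1 1 n (x2 M, y2 M, z2 M) = (x2 (K 1 0 + n), y2 (K 1 0 + n), z2 (K 1 0 + n)))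
    (u1 v1 u2 v2 ft1 ht1 ft2 ht2 : ℝ → ℝ × ℝ)
    (hu1 : (ContinuousOn u1 (Set.Icc (x1 0) (x1 N)) ∧ u1 (x1 0) = (y1 0, z1 0) ∧ u1 (x1 N) = (y1 N, z1 N)))
    (hv1 : (ContinuousOn v1 (Set.Icc (x2 0) (x2 M)) ∧ v1 (x2 0) = (y2 0, z2 0) ∧ v1 (x2 M) = (y2 M, z2 M)))
    (hu2 : (ContinuousOn u2 (Set.Icc (x1 0) (x1 N)) ∧ u2 (x1 0) = (y1 0, z1 0) ∧ u2 (x1 N) = (y1 N, z1 N)))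
    (hv2 : (ContinuousOn v2 (Set.Icc (x2 0) (x2 M)) ∧ v2 (x2 0) = (y2 0, z2 0) ∧ v2 (x2 M) = (y2 M, z2 M)))
    (hEQ1 : (∀ n, 1 ≤ n → n ≤ K 0 0 → ∀ x ∈ Set.Icc (x1 0) (x1 N),
      ft1 (a 0 0 n * x + b 0 0 n) =
        (c 0 0 n * x + α 0 0 n * (u1 x).1 + β 0 0 n * (u1 x).2 + d 0 0 n,
         e 0 0 n * x + γ 0 0 n * (u1 x).2 + f 0 0 n)) ∧
    (∀ n, 1 ≤ n → n ≤ K 0 1 → ∀ x ∈ Set.Icc (x2 0) (x2 M),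
      ft1 (a 0 1 n * x + b 0 1 n) =
        (c 0 1 n * x + α 0 1 n * (v1 x).1 + β 0 1 n * (v1 x).2 + d 0 1 n,
         e 0 1 n * x + γ 0 1 n * (v1 x).2 + f 0 1 n)) ∧
    (∀ n, 1 ≤ n → n ≤ K 1 0 → ∀ x ∈ Set.Icc (x1 0) (x1 N),
      ht1 (a 1 0 n * x + b 1 0 n) =
        (c 1 0 n * x + α 1 0 n * (u1 x).1 + β 1 0 n * (u1 x).2 + d 1 0 n,
         e 1 0 n * x + γ 1 0 n * (u1 x).2 + f 1 0 n)) ∧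
    (∀ n, 1 ≤ n → n ≤ K 1 1 → ∀ x ∈ Set.Icc (x2 0) (x2 M),
      ht1 (a 1 1 n * x + b 1 1 n) =
        (c 1 1 n * x + α 1 1 n * (v1 x).1 + β 1 1 n * (v1 x).2 + d 1 1 n,
         e 1 1 n * x + γ 1 1 n * (v1 x).2 + f 1 1 n)))
    (hEQ2 : (∀ n, 1 ≤ n → n ≤ K 0 0 → ∀ x ∈ Set.Icc (x1 0) (x1 N),
      ft2 (a 0 0 n * x + b 0 0 n) =
        (c 0 0 n * x + α 0 0 n * (u2 x).1 + β 0 0 n * (u2 x).2 + d 0 0 n,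
         e 0 0 n * x + γ 0 0 n * (u2 x).2 + f 0 0 n)) ∧
    (∀ n, 1 ≤ n → n ≤ K 0 1 → ∀ x ∈ Set.Icc (x2 0) (x2 M),
      ft2 (a 0 1 n * x + b 0 1 n) =
        (c 0 1 n * x + α 0 1 n * (v2 x).1 + β 0 1 n * (v2 x).2 + d 0 1 n,
         e 0 1 n * x + γ 0 1 n * (v2 x).2 + f 0 1 n)) ∧
    (∀ n, 1 ≤ n → n ≤ K 1 0 → ∀ x ∈ Set.Icc (x1 0) (x1 N),
      ht2 (a 1 0 n * x + b 1 0 n) =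
        (c 1 0 n * x + α 1 0 n * (u2 x).1 + β 1 0 n * (u2 x).2 + d 1 0 n,
         e 1 0 n * x + γ 1 0 n * (u2 x).2 + f 1 0 n)) ∧
    (∀ n, 1 ≤ n → n ≤ K 1 1 → ∀ x ∈ Set.Icc (x2 0) (x2 M),
      ht2 (a 1 1 n * x + b 1 1 n) =
        (c 1 1 n * x + α 1 1 n * (v2 x).1 + β 1 1 n * (v2 x).2 + d 1 1 n,
         e 1 1 n * x + γ 1 1 n * (v2 x).2 + f 1 1 n)))
    (δm : ℝ)
    (hδm : IsGreatest {t : ℝ | ∃ (r s : Fin 2) (n : ℕ), 1 ≤ n ∧ n ≤ K r s ∧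
      (t = |α r s n| ∨ t = |β r s n| + |γ r s n|)} δm) :
    δm < 1 ∧
    max (sSup ((fun x => |(ft1 x).1 - (ft2 x).1| + |(ft1 x).2 - (ft2 x).2|) '' Set.Icc (x1 0) (x1 N)))
        (sSup ((fun x => |(ht1 x).1 - (ht2 x).1| + |(ht1 x).2 - (ht2 x).2|) '' Set.Icc (x2 0) (x2 M))) ≤
      δm *
        max (sSup ((fun x => |(u1 x).1 - (u2 x).1| + |(u1 x).2 - (u2 x).2|) '' Set.Icc (x1 0) (x1 N)))
            (sSup ((fun x => |(v1 x).1 - (v2 x).1| + |(v1 x).2 - (v2 x).2|) '' Set.Icc (x2 0) (x2 M))) :=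
  stmt_7_general N M hN hM x1 y1 z1 x2 y2 z2 hx1 hx2 K hK1 hK2 a b c d e f α β γ hα hβγ w hw hj11
    hj12 hj21 hj22 u1 v1 u2 v2 ft1 ht1 ft2 ht2 hu1 hv1 hu2 hv2 hEQ1 hEQ2 δm hδm
end

section
/- The operator T has a unique fixed point (f_0, h_0) ∈ 𝓕 × 𝓗; that is, there exists exactly one pair of continuous functions f_0 : [x_0^1, x_N^1] → ℝ² and h_0 : [x_0^2, x_M^2] → ℝ² with the prescribed endpoint values such that T(f_0, h_0) = (f_0, h_0). -/
/-!
View `(f, h)` as one family of functions indexed by the two data sets: every subinterval of either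
data set is then the image of a whole data set under one affine map `w(x, y) = (L x, F x y)`.
In the `ℓ¹` norm of `ℝ²`, the vertical part `(y, z) ↦ (α y + β z + ⋯, γ z + ⋯)` is Lipschitz with
constant `max |α| (|β| + |γ|) < 1`. Hence the Read–Bajraktarević operator, which is continuous
across the knots thanks to the join-up conditions, contracts the sup distance on the closed set of
continuous families with the prescribed endpoint values, and Banach's fixed point theorem applies.
-/

open Set Function
open scoped NNReal

theorem exists_continuous_eqOn_Icc {β : Type*} [TopologicalSpace β] {X : ℕ → ℝ} {N : ℕ}
    (hN : 1 ≤ N) (hX : MonotoneOn X (Iic N)) {G : ℕ → ℝ → β}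
    (hG : ∀ n, 1 ≤ n → n ≤ N → Continuous (G n))
    (hGX : ∀ n, 1 ≤ n → n < N → G n (X n) = G (n + 1) (X n)) :
    ∃ g : ℝ → β, Continuous g ∧ ∀ n, 1 ≤ n → n ≤ N → EqOn g (G n) (Icc (X (n - 1)) (X n)) := by
  induction N, hN using Nat.le_induction with
  | base =>
    refine ⟨G 1, hG 1 le_rfl le_rfl, fun n h1 h2 => ?_⟩
    obtain rfl : n = 1 := by omega
    exact eqOn_refl _ _
  | succ N hN ih =>
    obtain ⟨g, hgc, hg⟩ := ih (hX.mono (Iic_subset_Iic.2 N.le_succ))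
      (fun n h1 h2 => hG n h1 (by omega)) (fun n h1 h2 => hGX n h1 (by omega))
    have hgN : g (X N) = G (N + 1) (X N) :=
      (hg N hN le_rfl ⟨hX (mem_Iic.2 (by omega)) (mem_Iic.2 (by omega)) (by omega), le_rfl⟩).trans
        (hGX N hN (by omega))
    classical
    refine ⟨fun x => if x ≤ X N then g x else G (N + 1) x,
      hgc.if_le (hG _ (by omega) le_rfl) continuous_id continuous_const fun x hx => hx ▸ hgN,
      fun n h1 h2 x hx => ?_⟩
    rcases (by omega : n ≤ N ∨ n = N + 1) with hn | rfl
    · have hxN : x ≤ X N := hx.2.trans (hX (mem_Iic.2 (by omega)) (mem_Iic.2 (by omega)) hn)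
      simpa only [if_pos hxN] using hg n h1 hn hx
    · by_cases hxN : x ≤ X N
      · obtain rfl : x = X N := le_antisymm hxN (by simpa using hx.1)
        simpa only [if_pos hxN] using hgN
      · simp only [if_neg hxN]

theorem exists_mem_Icc_sub_one {X : ℕ → ℝ} {N : ℕ} (hN : 1 ≤ N) (hX : MonotoneOn X (Iic N))
    {x : ℝ} (hx : x ∈ Icc (X 0) (X N)) : ∃ n, 1 ≤ n ∧ n ≤ N ∧ x ∈ Icc (X (n - 1)) (X n) := by
  rcases hx.1.eq_or_lt with rfl | hx0
  · exact ⟨1, le_rfl, hN, le_rfl, hX (mem_Iic.2 (by omega)) (mem_Iic.2 hN) zero_le_one⟩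
  · obtain ⟨n, hn, hxn⟩ := mem_iUnion₂.1 (Ioc_subset_biUnion_Ioc N X ⟨hx0, hx.2⟩)
    exact ⟨n + 1, by omega, Finset.mem_range.1 hn, Ioc_subset_Icc_self hxn⟩

theorem exists_unique_rel_self_of_dist_le {α : Type*} [MetricSpace α] [CompleteSpace α]
    {s : Set α} (hs : IsClosed s) (hne : s.Nonempty) {R : α → α → Prop}
    (hR : ∀ x ∈ s, ∃ y ∈ s, R x y) {q : ℝ≥0} (hq : q < 1)
    (hRq : ∀ x x' y y', R x y → R x' y' → dist y y' ≤ q * dist x x') :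
    ∃ x ∈ s, R x x ∧ ∀ y, R y y → y = x := by
  have := hs.completeSpace_coe
  have := hne.to_subtype
  choose F hFs hF using hR
  let G : s → s := fun x => ⟨F x x.2, hFs x x.2⟩
  have hG : ContractingWith q G :=
    ⟨hq, LipschitzWith.of_dist_le_mul fun x y => hRq _ _ _ _ (hF x x.2) (hF y y.2)⟩
  set x := ContractingWith.fixedPoint G hG
  have hxx : R x x := by
    have hFx : F x x.2 = x := congrArg Subtype.val hG.fixedPoint_isFixedPt
    simpa only [hFx] using hF x x.2
  refine ⟨x, x.2, hxx, fun y hy => dist_le_zero.1 ?_⟩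
  have h := hRq _ _ _ _ hy hxx
  have : (q : ℝ) < 1 := hq
  nlinarith [dist_nonneg (x := y) (y := x)]

lemma abs_add_abs_le_max_mul (α β γ u v : ℝ) :
    |α * u + β * v| + |γ * v| ≤ max |α| (|β| + |γ|) * (|u| + |v|) :=
  calc |α * u + β * v| + |γ * v| ≤ |α| * |u| + (|β| + |γ|) * |v| := by
        rw [add_mul, ← abs_mul, ← abs_mul, ← abs_mul]; linarith [abs_add_le (α * u) (β * v)]
    _ ≤ max |α| (|β| + |γ|) * (|u| + |v|) := by
        rw [mul_add]; gcongr; exacts [le_max_left _ _, le_max_right _ _]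

/-- Data set `i` consists of the knots `knot i 0 < ⋯ < knot i (len i)` with values `value i n`.
For `1 ≤ n ≤ len i`, the map `(x, y) ↦ (slope i n * x + shift i n, vmap i n x y)` sends data set
`src i n` onto the `n`-th subinterval of data set `i`. -/
structure AffineRBSystem (ι E : Type*) [MetricSpace E] where
  len : ι → ℕ
  knot : ι → ℕ → ℝ
  value : ι → ℕ → E
  src : ι → ℕ → ι
  slope : ι → ℕ → ℝ
  shift : ι → ℕ → ℝ
  vmap : ι → ℕ → ℝ → E → E
  one_le_len (i : ι) : 1 ≤ len i
  strictMonoOn_knot (i : ι) : StrictMonoOn (knot i) (Iic (len i))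
  slope_mul_knot_zero_add (i : ι) (n : ℕ) : 1 ≤ n → n ≤ len i →
    slope i n * knot (src i n) 0 + shift i n = knot i (n - 1)
  slope_mul_knot_len_add (i : ι) (n : ℕ) : 1 ≤ n → n ≤ len i →
    slope i n * knot (src i n) (len (src i n)) + shift i n = knot i n
  vmap_knot_zero (i : ι) (n : ℕ) : 1 ≤ n → n ≤ len i →
    vmap i n (knot (src i n) 0) (value (src i n) 0) = value i (n - 1)
  vmap_knot_len (i : ι) (n : ℕ) : 1 ≤ n → n ≤ len i →
    vmap i n (knot (src i n) (len (src i n))) (value (src i n) (len (src i n))) = value i n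
  continuous_vmap (i : ι) (n : ℕ) : 1 ≤ n → n ≤ len i → Continuous (uncurry (vmap i n))
  exists_lipschitzWith_vmap (i : ι) (n : ℕ) : 1 ≤ n → n ≤ len i →
    ∃ q : ℝ≥0, q < 1 ∧ ∀ t, LipschitzWith q (vmap i n t)

namespace AffineRBSystem

variable {ι E : Type*} [MetricSpace E] (S : AffineRBSystem ι E)

abbrev dom (i : ι) : Set ℝ := Icc (S.knot i 0) (S.knot i (S.len i))

def HasBoundaryValues (φ : ι → ℝ → E) : Prop :=
  ∀ i, φ i (S.knot i 0) = S.value i 0 ∧ φ i (S.knot i (S.len i)) = S.value i (S.len i)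

/-- `ψ = T φ` on the domains, `T` being the Read–Bajraktarević operator of `S`. -/
def IsRBImage (φ ψ : ι → ℝ → E) : Prop :=
  ∀ i n, 1 ≤ n → n ≤ S.len i → ∀ t ∈ S.dom (S.src i n),
    ψ i (S.slope i n * t + S.shift i n) = S.vmap i n t (φ (S.src i n) t)

lemma knot_zero_lt_knot_len (i : ι) : S.knot i 0 < S.knot i (S.len i) :=
  S.strictMonoOn_knot i (mem_Iic.2 (Nat.zero_le _)) (mem_Iic.2 le_rfl) (S.one_le_len i)

lemma slope_pos {i : ι} {n : ℕ} (h1 : 1 ≤ n) (h2 : n ≤ S.len i) : 0 < S.slope i n := by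
  have hsrc := S.knot_zero_lt_knot_len (S.src i n)
  have hi : S.knot i (n - 1) < S.knot i n :=
    S.strictMonoOn_knot i (mem_Iic.2 (by omega)) (mem_Iic.2 h2) (by omega)
  have := S.slope_mul_knot_zero_add i n h1 h2
  have := S.slope_mul_knot_len_add i n h1 h2
  nlinarith

lemma image_piece {i : ι} {n : ℕ} (h1 : 1 ≤ n) (h2 : n ≤ S.len i) :
    (fun t => S.slope i n * t + S.shift i n) '' S.dom (S.src i n) =
      Icc (S.knot i (n - 1)) (S.knot i n) := by
  rw [image_affine_Icc' (S.slope_pos h1 h2), S.slope_mul_knot_zero_add i n h1 h2,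
    S.slope_mul_knot_len_add i n h1 h2]

lemma piece_mem_dom {i : ι} {n : ℕ} (h1 : 1 ≤ n) (h2 : n ≤ S.len i) {t : ℝ}
    (ht : t ∈ S.dom (S.src i n)) : S.slope i n * t + S.shift i n ∈ S.dom i := by
  have hx := S.image_piece h1 h2 ▸ mem_image_of_mem _ ht
  have hmono := (S.strictMonoOn_knot i).monotoneOn
  exact ⟨(hmono (mem_Iic.2 (Nat.zero_le _)) (mem_Iic.2 (by omega)) (Nat.zero_le _)).trans hx.1,
    hx.2.trans (hmono (mem_Iic.2 h2) (mem_Iic.2 le_rfl) h2)⟩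

lemma exists_piece_eq {i : ι} {x : ℝ} (hx : x ∈ S.dom i) :
    ∃ n, 1 ≤ n ∧ n ≤ S.len i ∧ ∃ t ∈ S.dom (S.src i n), S.slope i n * t + S.shift i n = x := by
  obtain ⟨n, h1, h2, hxn⟩ :=
    exists_mem_Icc_sub_one (S.one_le_len i) (S.strictMonoOn_knot i).monotoneOn hx
  rw [← S.image_piece h1 h2] at hxn
  exact ⟨n, h1, h2, hxn⟩

lemma exists_continuous_isRBImage {φ : ι → ℝ → E} (hφc : ∀ i, Continuous (φ i))
    (hφ : S.HasBoundaryValues φ) : ∃ ψ : ι → ℝ → E, (∀ i, Continuous (ψ i)) ∧ S.IsRBImage φ ψ := by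
  let G (i : ι) (n : ℕ) (x : ℝ) : E :=
    S.vmap i n ((x - S.shift i n) / S.slope i n) (φ (S.src i n) ((x - S.shift i n) / S.slope i n))
  have hG (i : ι) {n : ℕ} (h1 : 1 ≤ n) (h2 : n ≤ S.len i) (t : ℝ) :
      G i n (S.slope i n * t + S.shift i n) = S.vmap i n t (φ (S.src i n) t) := by
    have : (S.slope i n * t + S.shift i n - S.shift i n) / S.slope i n = t := by
      field_simp [(S.slope_pos h1 h2).ne']; ring
    simp only [G, this]
  have hglue (i : ι) : ∃ g : ℝ → E, Continuous g ∧
      ∀ n, 1 ≤ n → n ≤ S.len i → EqOn g (G i n) (Icc (S.knot i (n - 1)) (S.knot i n)) := by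
    refine exists_continuous_eqOn_Icc (S.one_le_len i) (S.strictMonoOn_knot i).monotoneOn
      (fun n h1 h2 => ?_) (fun n h1 h2 => ?_)
    · have hinv : Continuous fun x => (x - S.shift i n) / S.slope i n := by fun_prop
      exact (S.continuous_vmap i n h1 h2).comp (hinv.prodMk ((hφc _).comp hinv))
    · have hleft : G i n (S.knot i n) = S.value i n := by
        rw [← S.slope_mul_knot_len_add i n h1 h2.le, hG i h1 h2.le, (hφ _).2,
          S.vmap_knot_len i n h1 h2.le]
      have hright : G i (n + 1) (S.knot i n) = S.value i n := by
        have h := S.slope_mul_knot_zero_add i (n + 1) (by omega) h2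
        have hv := S.vmap_knot_zero i (n + 1) (by omega) h2
        rw [Nat.add_sub_cancel] at h hv
        rw [← h, hG i (by omega) h2, (hφ _).1, hv]
      rw [hleft, hright]
  choose ψ hψc hψ using hglue
  refine ⟨ψ, hψc, fun i n h1 h2 t ht => ?_⟩
  rw [hψ i n h1 h2 (S.image_piece h1 h2 ▸ mem_image_of_mem _ ht), hG i h1 h2]

lemma exists_lipschitzWith_vmap_lt_one [Fintype ι] : ∃ q : ℝ≥0, q < 1 ∧
    ∀ i n, 1 ≤ n → n ≤ S.len i → ∀ t, LipschitzWith q (S.vmap i n t) := by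
  classical
  choose! c hc1 hc using S.exists_lipschitzWith_vmap
  let pieces := Finset.univ.sigma fun i => Finset.Icc 1 (S.len i)
  refine ⟨pieces.sup fun p => c p.1 p.2, (Finset.sup_lt_iff zero_lt_one).2 ?_,
    fun i n h1 h2 t => (hc i n h1 h2 t).weaken ?_⟩
  · rintro ⟨i, n⟩ hp
    simp only [pieces, Finset.mem_sigma, Finset.mem_Icc] at hp
    exact hc1 i n hp.2.1 hp.2.2
  · have hmem : (⟨i, n⟩ : Σ _ : ι, ℕ) ∈ pieces := by simp [pieces, h1, h2]
    exact Finset.le_sup (f := fun p : Σ _ : ι, ℕ => c p.1 p.2) hmem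

noncomputable def extend (p : (i : ι) → C(S.dom i, E)) (i : ι) : ℝ → E :=
  IccExtend (S.knot_zero_lt_knot_len i).le (p i)

def restrict (φ : ι → ℝ → E) (hφ : ∀ i, ContinuousOn (φ i) (S.dom i)) :
    (i : ι) → C(S.dom i, E) :=
  fun i => ⟨(S.dom i).domRestrict (φ i), (hφ i).domRestrict⟩

lemma continuous_extend (p : (i : ι) → C(S.dom i, E)) (i : ι) : Continuous (S.extend p i) :=
  (p i).continuous.Icc_extend'

lemma extend_of_mem (p : (i : ι) → C(S.dom i, E)) {i : ι} {x : ℝ} (hx : x ∈ S.dom i) :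
    S.extend p i x = p i ⟨x, hx⟩ :=
  IccExtend_of_mem _ _ hx

lemma extend_restrict {φ : ι → ℝ → E} (hφ : ∀ i, ContinuousOn (φ i) (S.dom i)) (i : ι) :
    EqOn (S.extend (S.restrict φ hφ) i) (φ i) (S.dom i) :=
  fun _ hx => S.extend_of_mem _ hx

lemma exists_continuous_hasBoundaryValues [PathConnectedSpace E] :
    ∃ φ : ι → ℝ → E, (∀ i, Continuous (φ i)) ∧ S.HasBoundaryValues φ := by
  let γ (i : ι) := PathConnectedSpace.somePath (S.value i 0) (S.value i (S.len i))
  let ρ (i : ι) (x : ℝ) : ℝ := (x - S.knot i 0) / (S.knot i (S.len i) - S.knot i 0)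
  refine ⟨fun i x => (γ i).extend (ρ i x), fun i => (γ i).continuous_extend.comp (by fun_prop),
    fun i => ⟨by simp [ρ], ?_⟩⟩
  have hρ : ρ i (S.knot i (S.len i)) = 1 := div_self (sub_pos.2 (S.knot_zero_lt_knot_len i)).ne'
  simp [hρ]

lemma isClosed_setOf_hasBoundaryValues_extend :
    IsClosed {p : (i : ι) → C(S.dom i, E) | S.HasBoundaryValues (S.extend p)} := by
  have hcont (i : ι) (x : ℝ) : Continuous fun p : (i : ι) → C(S.dom i, E) => S.extend p i x :=
    (continuous_eval_const _).comp (continuous_apply i)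
  simp only [HasBoundaryValues, ofPred_forall, ofPred_and]
  exact isClosed_iInter fun i =>
    (isClosed_eq (hcont i _) continuous_const).inter (isClosed_eq (hcont i _) continuous_const)

variable {S}

lemma IsRBImage.congr {φ φ' ψ ψ' : ι → ℝ → E} (h : S.IsRBImage φ ψ)
    (hφ : ∀ i, EqOn (φ i) (φ' i) (S.dom i)) (hψ : ∀ i, EqOn (ψ i) (ψ' i) (S.dom i)) :
    S.IsRBImage φ' ψ' := fun i n h1 h2 t ht => by
  rw [← hψ i (S.piece_mem_dom h1 h2 ht), h i n h1 h2 t ht, hφ _ ht]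

lemma IsRBImage.eqOn {φ ψ ψ' : ι → ℝ → E} (h : S.IsRBImage φ ψ) (h' : S.IsRBImage φ ψ')
    (i : ι) : EqOn (ψ i) (ψ' i) (S.dom i) := fun x hx => by
  obtain ⟨n, h1, h2, t, ht, rfl⟩ := S.exists_piece_eq hx
  rw [h i n h1 h2 t ht, h' i n h1 h2 t ht]

lemma IsRBImage.hasBoundaryValues {φ ψ : ι → ℝ → E} (h : S.IsRBImage φ ψ)
    (hφ : S.HasBoundaryValues φ) : S.HasBoundaryValues ψ := fun i => by
  have h1 := S.one_le_len i
  constructor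
  · have := h i 1 le_rfl h1 _ (left_mem_Icc.2 (S.knot_zero_lt_knot_len _).le)
    rwa [S.slope_mul_knot_zero_add i 1 le_rfl h1, (hφ _).1, S.vmap_knot_zero i 1 le_rfl h1] at this
  · have := h i _ h1 le_rfl _ (right_mem_Icc.2 (S.knot_zero_lt_knot_len _).le)
    rwa [S.slope_mul_knot_len_add i _ h1 le_rfl, (hφ _).2, S.vmap_knot_len i _ h1 le_rfl] at this

lemma IsRBImage.dist_le {q : ℝ≥0}
    (hq : ∀ i n, 1 ≤ n → n ≤ S.len i → ∀ t, LipschitzWith q (S.vmap i n t))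
    {φ φ' ψ ψ' : ι → ℝ → E} (h : S.IsRBImage φ ψ) (h' : S.IsRBImage φ' ψ') {D : ℝ}
    (hD : ∀ j, ∀ t ∈ S.dom j, dist (φ j t) (φ' j t) ≤ D) (i : ι) :
    ∀ x ∈ S.dom i, dist (ψ i x) (ψ' i x) ≤ q * D := fun x hx => by
  obtain ⟨n, h1, h2, t, ht, rfl⟩ := S.exists_piece_eq hx
  rw [h i n h1 h2 t ht, h' i n h1 h2 t ht]
  exact ((hq i n h1 h2 t).dist_le_mul _ _).trans (by gcongr; exact hD _ t ht)

lemma HasBoundaryValues.congr {φ φ' : ι → ℝ → E} (hφ : S.HasBoundaryValues φ)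
    (h : ∀ i, EqOn (φ i) (φ' i) (S.dom i)) : S.HasBoundaryValues φ' := fun i => by
  have hle := (S.knot_zero_lt_knot_len i).le
  rw [← h i (left_mem_Icc.2 hle), ← h i (right_mem_Icc.2 hle)]
  exact hφ i

lemma exists_isRBImage_extend {p : (i : ι) → C(S.dom i, E)}
    (hp : S.HasBoundaryValues (S.extend p)) :
    ∃ p', S.HasBoundaryValues (S.extend p') ∧ S.IsRBImage (S.extend p) (S.extend p') := by
  obtain ⟨ψ, hψc, hψ⟩ := S.exists_continuous_isRBImage (S.continuous_extend p) hp
  have hψ' := S.extend_restrict fun i => (hψc i).continuousOn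
  exact ⟨_, (hψ.hasBoundaryValues hp).congr fun i => (hψ' i).symm,
    hψ.congr (fun _ => eqOn_refl _ _) fun i => (hψ' i).symm⟩

lemma dist_le_of_isRBImage_extend [Fintype ι] {q : ℝ≥0}
    (hq : ∀ i n, 1 ≤ n → n ≤ S.len i → ∀ t, LipschitzWith q (S.vmap i n t))
    {p₁ p₂ p₁' p₂' : (i : ι) → C(S.dom i, E)} (h₁ : S.IsRBImage (S.extend p₁) (S.extend p₁'))
    (h₂ : S.IsRBImage (S.extend p₂) (S.extend p₂')) : dist p₁' p₂' ≤ q * dist p₁ p₂ := by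
  have hD (j : ι) (t : ℝ) (ht : t ∈ S.dom j) :
      dist (S.extend p₁ j t) (S.extend p₂ j t) ≤ dist p₁ p₂ := by
    rw [S.extend_of_mem _ ht, S.extend_of_mem _ ht]
    exact (ContinuousMap.dist_apply_le_dist _).trans (dist_le_pi_dist _ _ j)
  refine (dist_pi_le_iff (by positivity)).2 fun i => (ContinuousMap.dist_le (by positivity)).2
    fun x => ?_
  rw [← S.extend_of_mem p₁' x.2, ← S.extend_of_mem p₂' x.2]
  exact h₁.dist_le hq h₂ hD i x x.2

variable (S)

theorem exists_unique_isRBImage_self [Fintype ι] [CompleteSpace E] [PathConnectedSpace E] :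
    ∃ φ : ι → ℝ → E, (∀ i, Continuous (φ i)) ∧ S.HasBoundaryValues φ ∧ S.IsRBImage φ φ ∧
      ∀ ψ : ι → ℝ → E, (∀ i, ContinuousOn (ψ i) (S.dom i)) → S.HasBoundaryValues ψ →
        S.IsRBImage ψ ψ → ∀ i, EqOn (ψ i) (φ i) (S.dom i) := by
  obtain ⟨q, hq, hlip⟩ := S.exists_lipschitzWith_vmap_lt_one
  obtain ⟨φ₀, hφ₀c, hφ₀⟩ := S.exists_continuous_hasBoundaryValues
  have hφ₀' := S.extend_restrict fun i => (hφ₀c i).continuousOn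
  obtain ⟨P, hPb, hPP, hP⟩ := exists_unique_rel_self_of_dist_le
    S.isClosed_setOf_hasBoundaryValues_extend ⟨_, hφ₀.congr fun i => (hφ₀' i).symm⟩
    (fun p hp => exists_isRBImage_extend hp) hq
    (fun _ _ _ _ h₁ h₂ => dist_le_of_isRBImage_extend hlip h₁ h₂)
  refine ⟨S.extend P, S.continuous_extend P, hPb, hPP, fun ψ hψc _ hψ i => ?_⟩
  have hψ' := S.extend_restrict hψc
  rw [← hP _ (hψ.congr (fun j => (hψ' j).symm) fun j => (hψ' j).symm)]
  exact (hψ' i).symm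

end AffineRBSystem

section TwoDataSets

open WithLp

/- Subinterval `n` of data set `r` is piece `blockIdx K r n` of block `(r, blockSrc K r n)`;
conversely, piece `n` of block `(r, s)` is subinterval `blockPos K r s n` of data set `r`. -/
def blockSrc (K : Fin 2 → Fin 2 → ℕ) (r : Fin 2) (n : ℕ) : Fin 2 := if n ≤ K r 0 then 0 else 1

def blockIdx (K : Fin 2 → Fin 2 → ℕ) (r : Fin 2) (n : ℕ) : ℕ := if n ≤ K r 0 then n else n - K r 0

def blockPos (K : Fin 2 → Fin 2 → ℕ) (r s : Fin 2) (n : ℕ) : ℕ := if s = 0 then n else K r 0 + n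

lemma blockIdx_spec {K : Fin 2 → Fin 2 → ℕ} {r : Fin 2} {n : ℕ} (h1 : 1 ≤ n)
    (h2 : n ≤ K r 0 + K r 1) :
    1 ≤ blockIdx K r n ∧ blockIdx K r n ≤ K r (blockSrc K r n) ∧
      blockPos K r (blockSrc K r n) (blockIdx K r n) = n := by
  unfold blockIdx blockSrc blockPos
  by_cases h : n ≤ K r 0
  · simp [h, h1]
  · simp only [h, if_false, one_ne_zero]
    omega

variable (a b c d e f α β γ : Fin 2 → Fin 2 → ℕ → ℝ)

def affineW (r s : Fin 2) (n : ℕ) (p : ℝ × ℝ × ℝ) : ℝ × ℝ × ℝ :=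
  (a r s n * p.1 + b r s n, c r s n * p.1 + α r s n * p.2.1 + β r s n * p.2.2 + d r s n,
    e r s n * p.1 + γ r s n * p.2.2 + f r s n)

lemma lipschitzWith_affineW_snd (r s : Fin 2) (n : ℕ) (t : ℝ) :
    LipschitzWith (max ‖α r s n‖₊ (‖β r s n‖₊ + ‖γ r s n‖₊))
      fun p : WithLp 1 (ℝ × ℝ) => toLp 1 (affineW a b c d e f α β γ r s n (t, ofLp p)).2 := by
  refine LipschitzWith.of_dist_le_mul fun p p' => ?_
  simp only [prod_dist_eq_of_L1, affineW, toLp_fst, toLp_snd, ofLp_fst, ofLp_snd, Real.dist_eq,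
    NNReal.coe_max, NNReal.coe_add, coe_nnnorm, Real.norm_eq_abs]
  convert abs_add_abs_le_max_mul (α r s n) (β r s n) (γ r s n) (p.fst - p'.fst) (p.snd - p'.snd)
    using 3 <;> ring

def JoinsUp (L : Fin 2 → ℕ) (P : Fin 2 → ℕ → ℝ × ℝ × ℝ) (K : Fin 2 → Fin 2 → ℕ)
    (w : Fin 2 → Fin 2 → ℕ → ℝ × ℝ × ℝ → ℝ × ℝ × ℝ) : Prop :=
  ∀ r s n, 1 ≤ n → n ≤ K r s →
    w r s n (P s 0) = P r (blockPos K r s n - 1) ∧ w r s n (P s (L s)) = P r (blockPos K r s n)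

def MapsGraph (L : Fin 2 → ℕ) (P : Fin 2 → ℕ → ℝ × ℝ × ℝ) (K : Fin 2 → Fin 2 → ℕ)
    (w : Fin 2 → Fin 2 → ℕ → ℝ × ℝ × ℝ → ℝ × ℝ × ℝ) (U V : Fin 2 → ℝ → ℝ × ℝ) : Prop :=
  ∀ r s n, 1 ≤ n → n ≤ K r s → ∀ t ∈ Icc (P s 0).1 (P s (L s)).1,
    V r (w r s n (t, U s t)).1 = (w r s n (t, U s t)).2

/-- `u ∈ 𝓕` for `r = 0`, `u ∈ 𝓗` for `r = 1`. -/
def IsAdmissible (L : Fin 2 → ℕ) (P : Fin 2 → ℕ → ℝ × ℝ × ℝ) (r : Fin 2) (u : ℝ → ℝ × ℝ) :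
    Prop :=
  ContinuousOn u (Icc (P r 0).1 (P r (L r)).1) ∧ u (P r 0).1 = (P r 0).2 ∧
    u (P r (L r)).1 = (P r (L r)).2

lemma JoinsUp.piece {L : Fin 2 → ℕ} {P : Fin 2 → ℕ → ℝ × ℝ × ℝ} {K : Fin 2 → Fin 2 → ℕ}
    {w : Fin 2 → Fin 2 → ℕ → ℝ × ℝ × ℝ → ℝ × ℝ × ℝ} (h : JoinsUp L P K w) {r : Fin 2} {n : ℕ}
    (h1 : 1 ≤ n) (h2 : n ≤ K r 0 + K r 1) :
    w r (blockSrc K r n) (blockIdx K r n) (P (blockSrc K r n) 0) = P r (n - 1) ∧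
      w r (blockSrc K r n) (blockIdx K r n) (P (blockSrc K r n) (L (blockSrc K r n))) = P r n := by
  obtain ⟨hm1, hm2, hpos⟩ := blockIdx_spec h1 h2
  simpa only [hpos] using h r _ _ hm1 hm2

def blockSystem {L : Fin 2 → ℕ} {P : Fin 2 → ℕ → ℝ × ℝ × ℝ} {K : Fin 2 → Fin 2 → ℕ}
    (hL : ∀ r, 1 ≤ L r) (hP : ∀ r, StrictMonoOn (fun n => (P r n).1) (Iic (L r)))
    (hK : ∀ r, K r 0 + K r 1 = L r)
    (hα : ∀ r s n, 1 ≤ n → n ≤ K r s → |α r s n| < 1)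
    (hβγ : ∀ r s n, 1 ≤ n → n ≤ K r s → |β r s n| + |γ r s n| < 1)
    (hjoin : JoinsUp L P K (affineW a b c d e f α β γ)) :
    AffineRBSystem (Fin 2) (WithLp 1 (ℝ × ℝ)) where
  len := L
  knot r n := (P r n).1
  value r n := toLp 1 (P r n).2
  src := blockSrc K
  slope r n := a r (blockSrc K r n) (blockIdx K r n)
  shift r n := b r (blockSrc K r n) (blockIdx K r n)
  vmap r n t p :=
    toLp 1 (affineW a b c d e f α β γ r (blockSrc K r n) (blockIdx K r n) (t, ofLp p)).2
  one_le_len := hL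
  strictMonoOn_knot := hP
  slope_mul_knot_zero_add r n h1 h2 :=
    congrArg Prod.fst (hjoin.piece h1 (h2.trans_eq (hK r).symm)).1
  slope_mul_knot_len_add r n h1 h2 :=
    congrArg Prod.fst (hjoin.piece h1 (h2.trans_eq (hK r).symm)).2
  vmap_knot_zero r n h1 h2 :=
    congrArg (fun q => toLp 1 q.2) (hjoin.piece h1 (h2.trans_eq (hK r).symm)).1
  vmap_knot_len r n h1 h2 :=
    congrArg (fun q => toLp 1 q.2) (hjoin.piece h1 (h2.trans_eq (hK r).symm)).2
  continuous_vmap r n _ _ := by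
    unfold affineW
    exact (prod_continuous_toLp 1 ℝ ℝ).comp (by fun_prop)
  exists_lipschitzWith_vmap r n h1 h2 := by
    obtain ⟨hm1, hm2, -⟩ := blockIdx_spec h1 (h2.trans_eq (hK r).symm)
    refine ⟨_, max_lt ?_ ?_, lipschitzWith_affineW_snd a b c d e f α β γ _ _ _⟩
    · rw [← NNReal.coe_lt_coe]; simpa using hα _ _ _ hm1 hm2
    · rw [← NNReal.coe_lt_coe]; simpa using hβγ _ _ _ hm1 hm2

theorem exists_unique_fixed_of_mapsGraph {L : Fin 2 → ℕ} {P : Fin 2 → ℕ → ℝ × ℝ × ℝ}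
    {K : Fin 2 → Fin 2 → ℕ}
    (hL : ∀ r, 1 ≤ L r) (hP : ∀ r, StrictMonoOn (fun n => (P r n).1) (Iic (L r)))
    (hK : ∀ r, K r 0 + K r 1 = L r)
    (hα : ∀ r s n, 1 ≤ n → n ≤ K r s → |α r s n| < 1)
    (hβγ : ∀ r s n, 1 ≤ n → n ≤ K r s → |β r s n| + |γ r s n| < 1)
    (hjoin : JoinsUp L P K (affineW a b c d e f α β γ))
    (T : (Fin 2 → ℝ → ℝ × ℝ) → Fin 2 → ℝ → ℝ × ℝ)
    (hT : ∀ U, (∀ r, IsAdmissible L P r (U r)) →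
      MapsGraph L P K (affineW a b c d e f α β γ) U (T U)) :
    ∃ F : Fin 2 → ℝ → ℝ × ℝ, (∀ r, IsAdmissible L P r (F r)) ∧
      (∀ r, EqOn (T F r) (F r) (Icc (P r 0).1 (P r (L r)).1)) ∧
      ∀ G : Fin 2 → ℝ → ℝ × ℝ, (∀ r, IsAdmissible L P r (G r)) →
        (∀ r, EqOn (T G r) (G r) (Icc (P r 0).1 (P r (L r)).1)) →
        ∀ r, EqOn (G r) (F r) (Icc (P r 0).1 (P r (L r)).1) := by
  set S := blockSystem a b c d e f α β γ hL hP hK hα hβγ hjoin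
  let lift (U : Fin 2 → ℝ → ℝ × ℝ) (r : Fin 2) (x : ℝ) : WithLp 1 (ℝ × ℝ) := toLp 1 (U r x)
  have hTS (U : Fin 2 → ℝ → ℝ × ℝ) (hU : ∀ r, IsAdmissible L P r (U r)) :
      S.IsRBImage (lift U) (lift (T U)) := fun r n h1 h2 t ht => by
    obtain ⟨hm1, hm2, -⟩ := blockIdx_spec h1 (h2.trans_eq (hK r).symm)
    exact congrArg (toLp 1) (hT U hU r _ _ hm1 hm2 t ht)
  obtain ⟨φ, hφc, hφb, hφ, hφuniq⟩ := S.exists_unique_isRBImage_self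
  let F (r : Fin 2) (x : ℝ) : ℝ × ℝ := ofLp (φ r x)
  have hF (r : Fin 2) : IsAdmissible L P r (F r) :=
    ⟨((prod_continuous_ofLp 1 ℝ ℝ).comp (hφc r)).continuousOn, congrArg ofLp (hφb r).1,
      congrArg ofLp (hφb r).2⟩
  refine ⟨F, hF, fun r x hx => congrArg ofLp ((hTS F hF).eqOn hφ r hx),
    fun G hG hGT r x hx => congrArg ofLp (hφuniq (lift G) ?_ ?_ ?_ r hx)⟩
  · exact fun r => (prod_continuous_toLp 1 ℝ ℝ).comp_continuousOn (hG r).1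
  · exact fun r => ⟨congrArg (toLp 1) (hG r).2.1, congrArg (toLp 1) (hG r).2.2⟩
  · exact (hTS G hG).congr (fun _ => eqOn_refl _ _) fun r x hx => congrArg (toLp 1) (hGT r hx)

end TwoDataSets

theorem stmt_8_general
    (N M : ℕ) (hN : 2 ≤ N) (hM : 2 ≤ M)
    (x1 y1 z1 x2 y2 z2 : ℕ → ℝ)
    (hx1 : ∀ i, i < N → x1 i < x1 (i + 1))
    (hx2 : ∀ j, j < M → x2 j < x2 (j + 1))
    (K : Fin 2 → Fin 2 → ℕ)
    (hK1 : K 0 0 + K 0 1 = N) (hK2 : K 1 0 + K 1 1 = M)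
    (a b c d e f α β γ : Fin 2 → Fin 2 → ℕ → ℝ)
    (hα : ∀ r s n, 1 ≤ n → n ≤ K r s → |α r s n| < 1)
    (hβγ : ∀ r s n, 1 ≤ n → n ≤ K r s → |β r s n| + |γ r s n| < 1)
    (w : Fin 2 → Fin 2 → ℕ → ℝ × ℝ × ℝ → ℝ × ℝ × ℝ)
    (hw : ∀ r s n p, w r s n p =
      (a r s n * p.1 + b r s n,
       c r s n * p.1 + α r s n * p.2.1 + β r s n * p.2.2 + d r s n,
       e r s n * p.1 + γ r s n * p.2.2 + f r s n))
    (hj11 : ∀ n, 1 ≤ n → n ≤ K 0 0 →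
      w 0 0 n (x1 0, y1 0, z1 0) = (x1 (n - 1), y1 (n - 1), z1 (n - 1)) ∧
      w 0 0 n (x1 N, y1 N, z1 N) = (x1 n, y1 n, z1 n))
    (hj12 : ∀ n, 1 ≤ n → n ≤ K 0 1 →
      w 0 1 n (x2 0, y2 0, z2 0) =
        (x1 (K 0 0 + n - 1), y1 (K 0 0 + n - 1), z1 (K 0 0 + n - 1)) ∧
      w 0 1 n (x2 M, y2 M, z2 M) = (x1 (K 0 0 + n), y1 (K 0 0 + n), z1 (K 0 0 + n)))
    (hj21 : ∀ n, 1 ≤ n → n ≤ K 1 0 →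
      w 1 0 n (x1 0, y1 0, z1 0) = (x2 (n - 1), y2 (n - 1), z2 (n - 1)) ∧
      w 1 0 n (x1 N, y1 N, z1 N) = (x2 n, y2 n, z2 n))
    (hj22 : ∀ n, 1 ≤ n → n ≤ K 1 1 →
      w 1 1 n (x2 0, y2 0, z2 0) =
        (x2 (K 1 0 + n - 1), y2 (K 1 0 + n - 1), z2 (K 1 0 + n - 1)) ∧
      w 1 1 n (x2 M, y2 M, z2 M) = (x2 (K 1 0 + n), y2 (K 1 0 + n), z2 (K 1 0 + n)))
    (T : ((ℝ → ℝ × ℝ) × (ℝ → ℝ × ℝ)) → ((ℝ → ℝ × ℝ) × (ℝ → ℝ × ℝ)))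
    (hT : ∀ u v : ℝ → ℝ × ℝ, (ContinuousOn u (Set.Icc (x1 0) (x1 N)) ∧ u (x1 0) = (y1 0, z1 0) ∧ u (x1 N) = (y1 N, z1 N)) → (ContinuousOn v (Set.Icc (x2 0) (x2 M)) ∧ v (x2 0) = (y2 0, z2 0) ∧ v (x2 M) = (y2 M, z2 M)) →
      (∀ n, 1 ≤ n → n ≤ K 0 0 → ∀ x ∈ Set.Icc (x1 0) (x1 N),
      (T (u, v)).1 (a 0 0 n * x + b 0 0 n) =
        (c 0 0 n * x + α 0 0 n * (u x).1 + β 0 0 n * (u x).2 + d 0 0 n,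
         e 0 0 n * x + γ 0 0 n * (u x).2 + f 0 0 n)) ∧
    (∀ n, 1 ≤ n → n ≤ K 0 1 → ∀ x ∈ Set.Icc (x2 0) (x2 M),
      (T (u, v)).1 (a 0 1 n * x + b 0 1 n) =
        (c 0 1 n * x + α 0 1 n * (v x).1 + β 0 1 n * (v x).2 + d 0 1 n,
         e 0 1 n * x + γ 0 1 n * (v x).2 + f 0 1 n)) ∧
    (∀ n, 1 ≤ n → n ≤ K 1 0 → ∀ x ∈ Set.Icc (x1 0) (x1 N),
      (T (u, v)).2 (a 1 0 n * x + b 1 0 n) =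
        (c 1 0 n * x + α 1 0 n * (u x).1 + β 1 0 n * (u x).2 + d 1 0 n,
         e 1 0 n * x + γ 1 0 n * (u x).2 + f 1 0 n)) ∧
    (∀ n, 1 ≤ n → n ≤ K 1 1 → ∀ x ∈ Set.Icc (x2 0) (x2 M),
      (T (u, v)).2 (a 1 1 n * x + b 1 1 n) =
        (c 1 1 n * x + α 1 1 n * (v x).1 + β 1 1 n * (v x).2 + d 1 1 n,
         e 1 1 n * x + γ 1 1 n * (v x).2 + f 1 1 n))) :
    ∃ f0 h0 : ℝ → ℝ × ℝ,
      (ContinuousOn f0 (Set.Icc (x1 0) (x1 N)) ∧ f0 (x1 0) = (y1 0, z1 0) ∧ f0 (x1 N) = (y1 N, z1 N)) ∧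
      (ContinuousOn h0 (Set.Icc (x2 0) (x2 M)) ∧ h0 (x2 0) = (y2 0, z2 0) ∧ h0 (x2 M) = (y2 M, z2 M)) ∧
      (∀ x ∈ Set.Icc (x1 0) (x1 N), (T (f0, h0)).1 x = f0 x) ∧
      (∀ x ∈ Set.Icc (x2 0) (x2 M), (T (f0, h0)).2 x = h0 x) ∧
      ∀ f0' h0' : ℝ → ℝ × ℝ,
        (ContinuousOn f0' (Set.Icc (x1 0) (x1 N)) ∧ f0' (x1 0) = (y1 0, z1 0) ∧ f0' (x1 N) = (y1 N, z1 N)) →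
        (ContinuousOn h0' (Set.Icc (x2 0) (x2 M)) ∧ h0' (x2 0) = (y2 0, z2 0) ∧ h0' (x2 M) = (y2 M, z2 M)) →
        (∀ x ∈ Set.Icc (x1 0) (x1 N), (T (f0', h0')).1 x = f0' x) →
        (∀ x ∈ Set.Icc (x2 0) (x2 M), (T (f0', h0')).2 x = h0' x) →
        (∀ x ∈ Set.Icc (x1 0) (x1 N), f0' x = f0 x) ∧ (∀ x ∈ Set.Icc (x2 0) (x2 M), h0' x = h0 x) := by
  obtain rfl : w = affineW a b c d e f α β γ := by funext r s n p; exact hw r s n p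
  obtain ⟨F, hF, hFT, hFuniq⟩ := exists_unique_fixed_of_mapsGraph a b c d e f α β γ
    (L := ![N, M]) (P := ![fun n => (x1 n, y1 n, z1 n), fun n => (x2 n, y2 n, z2 n)])
    (Fin.forall_fin_two.2 ⟨show 1 ≤ N by omega, show 1 ≤ M by omega⟩)
    (Fin.forall_fin_two.2 ⟨strictMonoOn_Iic_of_lt_succ fun m hm => hx1 m hm,
      strictMonoOn_Iic_of_lt_succ fun m hm => hx2 m hm⟩)
    (Fin.forall_fin_two.2 ⟨hK1, hK2⟩) hα hβγ
    (by intro r s; fin_cases r <;> fin_cases s; exacts [hj11, hj12, hj21, hj22])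
    (fun U => ![(T (U 0, U 1)).1, (T (U 0, U 1)).2])
    (fun U hU => by
      obtain ⟨h00, h01, h10, h11⟩ := hT (U 0) (U 1) (hU 0) (hU 1)
      intro r s; fin_cases r <;> fin_cases s; exacts [h00, h01, h10, h11])
  refine ⟨F 0, F 1, hF 0, hF 1, hFT 0, hFT 1, fun f0' h0' hf hh hfix1 hfix2 => ?_⟩
  have := hFuniq ![f0', h0'] (Fin.forall_fin_two.2 ⟨hf, hh⟩) (Fin.forall_fin_two.2 ⟨hfix1, hfix2⟩)
  exact ⟨this 0, this 1⟩

theorem stmt_8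
    (N M : ℕ) (hN : 2 ≤ N) (hM : 2 ≤ M)
    (x1 y1 z1 x2 y2 z2 : ℕ → ℝ)
    (hx1 : ∀ i, i < N → x1 i < x1 (i + 1))
    (hx2 : ∀ j, j < M → x2 j < x2 (j + 1))
    (hstar1 : ∀ i, 1 ≤ i → i ≤ N → x1 i - x1 (i - 1) < x2 M - x2 0)
    (hstar2 : ∀ j, 1 ≤ j → j ≤ M → x2 j - x2 (j - 1) < x1 N - x1 0)
    (K : Fin 2 → Fin 2 → ℕ)
    (hK1 : K 0 0 + K 0 1 = N) (hK2 : K 1 0 + K 1 1 = M)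
    (a b c d e f α β γ : Fin 2 → Fin 2 → ℕ → ℝ)
    (hα : ∀ r s n, 1 ≤ n → n ≤ K r s → |α r s n| < 1)
    (hγ : ∀ r s n, 1 ≤ n → n ≤ K r s → |γ r s n| < 1)
    (hβγ : ∀ r s n, 1 ≤ n → n ≤ K r s → |β r s n| + |γ r s n| < 1)
    (w : Fin 2 → Fin 2 → ℕ → ℝ × ℝ × ℝ → ℝ × ℝ × ℝ)
    (hw : ∀ r s n p, w r s n p =
      (a r s n * p.1 + b r s n,
       c r s n * p.1 + α r s n * p.2.1 + β r s n * p.2.2 + d r s n,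
       e r s n * p.1 + γ r s n * p.2.2 + f r s n))
    (hj11 : ∀ n, 1 ≤ n → n ≤ K 0 0 →
      w 0 0 n (x1 0, y1 0, z1 0) = (x1 (n - 1), y1 (n - 1), z1 (n - 1)) ∧
      w 0 0 n (x1 N, y1 N, z1 N) = (x1 n, y1 n, z1 n))
    (hj12 : ∀ n, 1 ≤ n → n ≤ K 0 1 →
      w 0 1 n (x2 0, y2 0, z2 0) =
        (x1 (K 0 0 + n - 1), y1 (K 0 0 + n - 1), z1 (K 0 0 + n - 1)) ∧
      w 0 1 n (x2 M, y2 M, z2 M) = (x1 (K 0 0 + n), y1 (K 0 0 + n), z1 (K 0 0 + n)))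
    (hj21 : ∀ n, 1 ≤ n → n ≤ K 1 0 →
      w 1 0 n (x1 0, y1 0, z1 0) = (x2 (n - 1), y2 (n - 1), z2 (n - 1)) ∧
      w 1 0 n (x1 N, y1 N, z1 N) = (x2 n, y2 n, z2 n))
    (hj22 : ∀ n, 1 ≤ n → n ≤ K 1 1 →
      w 1 1 n (x2 0, y2 0, z2 0) =
        (x2 (K 1 0 + n - 1), y2 (K 1 0 + n - 1), z2 (K 1 0 + n - 1)) ∧
      w 1 1 n (x2 M, y2 M, z2 M) = (x2 (K 1 0 + n), y2 (K 1 0 + n), z2 (K 1 0 + n)))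
    (T : ((ℝ → ℝ × ℝ) × (ℝ → ℝ × ℝ)) → ((ℝ → ℝ × ℝ) × (ℝ → ℝ × ℝ)))
    (hT : ∀ u v : ℝ → ℝ × ℝ, (ContinuousOn u (Set.Icc (x1 0) (x1 N)) ∧ u (x1 0) = (y1 0, z1 0) ∧ u (x1 N) = (y1 N, z1 N)) → (ContinuousOn v (Set.Icc (x2 0) (x2 M)) ∧ v (x2 0) = (y2 0, z2 0) ∧ v (x2 M) = (y2 M, z2 M)) →
      (∀ n, 1 ≤ n → n ≤ K 0 0 → ∀ x ∈ Set.Icc (x1 0) (x1 N),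
      (T (u, v)).1 (a 0 0 n * x + b 0 0 n) =
        (c 0 0 n * x + α 0 0 n * (u x).1 + β 0 0 n * (u x).2 + d 0 0 n,
         e 0 0 n * x + γ 0 0 n * (u x).2 + f 0 0 n)) ∧
    (∀ n, 1 ≤ n → n ≤ K 0 1 → ∀ x ∈ Set.Icc (x2 0) (x2 M),
      (T (u, v)).1 (a 0 1 n * x + b 0 1 n) =
        (c 0 1 n * x + α 0 1 n * (v x).1 + β 0 1 n * (v x).2 + d 0 1 n,
         e 0 1 n * x + γ 0 1 n * (v x).2 + f 0 1 n)) ∧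
    (∀ n, 1 ≤ n → n ≤ K 1 0 → ∀ x ∈ Set.Icc (x1 0) (x1 N),
      (T (u, v)).2 (a 1 0 n * x + b 1 0 n) =
        (c 1 0 n * x + α 1 0 n * (u x).1 + β 1 0 n * (u x).2 + d 1 0 n,
         e 1 0 n * x + γ 1 0 n * (u x).2 + f 1 0 n)) ∧
    (∀ n, 1 ≤ n → n ≤ K 1 1 → ∀ x ∈ Set.Icc (x2 0) (x2 M),
      (T (u, v)).2 (a 1 1 n * x + b 1 1 n) =
        (c 1 1 n * x + α 1 1 n * (v x).1 + β 1 1 n * (v x).2 + d 1 1 n,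
         e 1 1 n * x + γ 1 1 n * (v x).2 + f 1 1 n))) :
    ∃ f0 h0 : ℝ → ℝ × ℝ,
      (ContinuousOn f0 (Set.Icc (x1 0) (x1 N)) ∧ f0 (x1 0) = (y1 0, z1 0) ∧ f0 (x1 N) = (y1 N, z1 N)) ∧
      (ContinuousOn h0 (Set.Icc (x2 0) (x2 M)) ∧ h0 (x2 0) = (y2 0, z2 0) ∧ h0 (x2 M) = (y2 M, z2 M)) ∧
      (∀ x ∈ Set.Icc (x1 0) (x1 N), (T (f0, h0)).1 x = f0 x) ∧
      (∀ x ∈ Set.Icc (x2 0) (x2 M), (T (f0, h0)).2 x = h0 x) ∧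
      ∀ f0' h0' : ℝ → ℝ × ℝ,
        (ContinuousOn f0' (Set.Icc (x1 0) (x1 N)) ∧ f0' (x1 0) = (y1 0, z1 0) ∧ f0' (x1 N) = (y1 N, z1 N)) →
        (ContinuousOn h0' (Set.Icc (x2 0) (x2 M)) ∧ h0' (x2 0) = (y2 0, z2 0) ∧ h0' (x2 M) = (y2 M, z2 M)) →
        (∀ x ∈ Set.Icc (x1 0) (x1 N), (T (f0', h0')).1 x = f0' x) →
        (∀ x ∈ Set.Icc (x2 0) (x2 M), (T (f0', h0')).2 x = h0' x) →
        (∀ x ∈ Set.Icc (x1 0) (x1 N), f0' x = f0 x) ∧ (∀ x ∈ Set.Icc (x2 0) (x2 M), h0' x = h0 x) :=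
  stmt_8_general N M hN hM x1 y1 z1 x2 y2 z2 hx1 hx2 K hK1 hK2 a b c d e f α β γ hα hβγ w hw hj11
    hj12 hj21 hj22 T hT
end

section
/- The fixed point (f_0, h_0) of T interpolates the generalized data: f_0(x_n^1) = (y_n^1, z_n^1) for all 0 ≤ n ≤ N, and h_0(x_m^2) = (y_m^2, z_m^2) for all 0 ≤ m ≤ M. -/
open Set

theorem stmt_9
    (N M : ℕ) (hN : 2 ≤ N) (hM : 2 ≤ M)
    (x1 y1 z1 x2 y2 z2 : ℕ → ℝ)
    (hx1 : ∀ i, i < N → x1 i < x1 (i + 1))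
    (hx2 : ∀ j, j < M → x2 j < x2 (j + 1))
    (hstar1 : ∀ i, 1 ≤ i → i ≤ N → x1 i - x1 (i - 1) < x2 M - x2 0)
    (hstar2 : ∀ j, 1 ≤ j → j ≤ M → x2 j - x2 (j - 1) < x1 N - x1 0)
    (K : Fin 2 → Fin 2 → ℕ)
    (hK1 : K 0 0 + K 0 1 = N) (hK2 : K 1 0 + K 1 1 = M)
    (a b c d e f α β γ : Fin 2 → Fin 2 → ℕ → ℝ)
    (hα : ∀ r s n, 1 ≤ n → n ≤ K r s → |α r s n| < 1)
    (hγ : ∀ r s n, 1 ≤ n → n ≤ K r s → |γ r s n| < 1)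
    (hβγ : ∀ r s n, 1 ≤ n → n ≤ K r s → |β r s n| + |γ r s n| < 1)
    (w : Fin 2 → Fin 2 → ℕ → ℝ × ℝ × ℝ → ℝ × ℝ × ℝ)
    (hw : ∀ r s n p, w r s n p =
      (a r s n * p.1 + b r s n,
       c r s n * p.1 + α r s n * p.2.1 + β r s n * p.2.2 + d r s n,
       e r s n * p.1 + γ r s n * p.2.2 + f r s n))
    (hj11 : ∀ n, 1 ≤ n → n ≤ K 0 0 →
      w 0 0 n (x1 0, y1 0, z1 0) = (x1 (n - 1), y1 (n - 1), z1 (n - 1)) ∧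
      w 0 0 n (x1 N, y1 N, z1 N) = (x1 n, y1 n, z1 n))
    (hj12 : ∀ n, 1 ≤ n → n ≤ K 0 1 →
      w 0 1 n (x2 0, y2 0, z2 0) =
        (x1 (K 0 0 + n - 1), y1 (K 0 0 + n - 1), z1 (K 0 0 + n - 1)) ∧
      w 0 1 n (x2 M, y2 M, z2 M) = (x1 (K 0 0 + n), y1 (K 0 0 + n), z1 (K 0 0 + n)))
    (hj21 : ∀ n, 1 ≤ n → n ≤ K 1 0 →
      w 1 0 n (x1 0, y1 0, z1 0) = (x2 (n - 1), y2 (n - 1), z2 (n - 1)) ∧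
      w 1 0 n (x1 N, y1 N, z1 N) = (x2 n, y2 n, z2 n))
    (hj22 : ∀ n, 1 ≤ n → n ≤ K 1 1 →
      w 1 1 n (x2 0, y2 0, z2 0) =
        (x2 (K 1 0 + n - 1), y2 (K 1 0 + n - 1), z2 (K 1 0 + n - 1)) ∧
      w 1 1 n (x2 M, y2 M, z2 M) = (x2 (K 1 0 + n), y2 (K 1 0 + n), z2 (K 1 0 + n)))
    (T : ((ℝ → ℝ × ℝ) × (ℝ → ℝ × ℝ)) → ((ℝ → ℝ × ℝ) × (ℝ → ℝ × ℝ)))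
    (hT : ∀ u v : ℝ → ℝ × ℝ, (ContinuousOn u (Set.Icc (x1 0) (x1 N)) ∧ u (x1 0) = (y1 0, z1 0) ∧ u (x1 N) = (y1 N, z1 N)) → (ContinuousOn v (Set.Icc (x2 0) (x2 M)) ∧ v (x2 0) = (y2 0, z2 0) ∧ v (x2 M) = (y2 M, z2 M)) →
      (∀ n, 1 ≤ n → n ≤ K 0 0 → ∀ x ∈ Set.Icc (x1 0) (x1 N),
      (T (u, v)).1 (a 0 0 n * x + b 0 0 n) =
        (c 0 0 n * x + α 0 0 n * (u x).1 + β 0 0 n * (u x).2 + d 0 0 n,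
         e 0 0 n * x + γ 0 0 n * (u x).2 + f 0 0 n)) ∧
    (∀ n, 1 ≤ n → n ≤ K 0 1 → ∀ x ∈ Set.Icc (x2 0) (x2 M),
      (T (u, v)).1 (a 0 1 n * x + b 0 1 n) =
        (c 0 1 n * x + α 0 1 n * (v x).1 + β 0 1 n * (v x).2 + d 0 1 n,
         e 0 1 n * x + γ 0 1 n * (v x).2 + f 0 1 n)) ∧
    (∀ n, 1 ≤ n → n ≤ K 1 0 → ∀ x ∈ Set.Icc (x1 0) (x1 N),
      (T (u, v)).2 (a 1 0 n * x + b 1 0 n) =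
        (c 1 0 n * x + α 1 0 n * (u x).1 + β 1 0 n * (u x).2 + d 1 0 n,
         e 1 0 n * x + γ 1 0 n * (u x).2 + f 1 0 n)) ∧
    (∀ n, 1 ≤ n → n ≤ K 1 1 → ∀ x ∈ Set.Icc (x2 0) (x2 M),
      (T (u, v)).2 (a 1 1 n * x + b 1 1 n) =
        (c 1 1 n * x + α 1 1 n * (v x).1 + β 1 1 n * (v x).2 + d 1 1 n,
         e 1 1 n * x + γ 1 1 n * (v x).2 + f 1 1 n)))
    (f0 h0 : ℝ → ℝ × ℝ)
    (hf0 : (ContinuousOn f0 (Set.Icc (x1 0) (x1 N)) ∧ f0 (x1 0) = (y1 0, z1 0) ∧ f0 (x1 N) = (y1 N, z1 N)))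
    (hh0 : (ContinuousOn h0 (Set.Icc (x2 0) (x2 M)) ∧ h0 (x2 0) = (y2 0, z2 0) ∧ h0 (x2 M) = (y2 M, z2 M)))
    (hfix1 : ∀ x ∈ Set.Icc (x1 0) (x1 N), (T (f0, h0)).1 x = f0 x)
    (hfix2 : ∀ x ∈ Set.Icc (x2 0) (x2 M), (T (f0, h0)).2 x = h0 x) :
    (∀ n, n ≤ N → f0 (x1 n) = (y1 n, z1 n)) ∧
    (∀ m, m ≤ M → h0 (x2 m) = (y2 m, z2 m)) := by

  simp only [hw, Prod.mk.injEq] at hj11 hj12 hj21 hj22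
  obtain ⟨hf0c, hf0a, hf0b⟩ := hf0
  obtain ⟨hh0c, hh0a, hh0b⟩ := hh0
  have mono1 : ∀ i j : ℕ, i ≤ j → j ≤ N → x1 i ≤ x1 j := by
    intro i j hij hjN
    induction j with
    | zero => obtain rfl : i = 0 := Nat.le_zero.mp hij; exact le_rfl
    | succ j ih =>
      rcases eq_or_lt_of_le hij with rfl | h
      · exact le_rfl
      · exact (ih (Nat.lt_succ_iff.mp h) (by omega)).trans (hx1 j (by omega)).le
  have mono2 : ∀ i j : ℕ, i ≤ j → j ≤ M → x2 i ≤ x2 j := by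
    intro i j hij hjM
    induction j with
    | zero => obtain rfl : i = 0 := Nat.le_zero.mp hij; exact le_rfl
    | succ j ih =>
      rcases eq_or_lt_of_le hij with rfl | h
      · exact le_rfl
      · exact (ih (Nat.lt_succ_iff.mp h) (by omega)).trans (hx2 j (by omega)).le
  obtain ⟨hT1, hT2, hT3, hT4⟩ := hT f0 h0 ⟨hf0c, hf0a, hf0b⟩ ⟨hh0c, hh0a, hh0b⟩
  have hx1N : x1 N ∈ Set.Icc (x1 0) (x1 N) := ⟨mono1 0 N (Nat.zero_le _) le_rfl, le_rfl⟩
  have hx2M : x2 M ∈ Set.Icc (x2 0) (x2 M) := ⟨mono2 0 M (Nat.zero_le _) le_rfl, le_rfl⟩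
  constructor
  · intro n hnN
    rcases Nat.eq_zero_or_pos n with rfl | hpos
    · exact hf0a
    have hxn : x1 n ∈ Set.Icc (x1 0) (x1 N) :=
      ⟨mono1 0 n (Nat.zero_le _) hnN, mono1 n N hnN le_rfl⟩
    by_cases hc : n ≤ K 0 0
    · obtain ⟨-, g1, g2, g3⟩ := hj11 n hpos hc
      have := hT1 n hpos hc (x1 N) hx1N
      rw [g1, hf0b, hfix1 _ hxn] at this
      simpa [g2, g3, Prod.ext_iff] using this
    · set n' := n - K 0 0 with hn'
      have h1' : 1 ≤ n' := by omega
      have h2' : n' ≤ K 0 1 := by omega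
      have hne : K 0 0 + n' = n := by omega
      obtain ⟨-, g1, g2, g3⟩ := hj12 n' h1' h2'
      rw [hne] at g1 g2 g3
      have := hT2 n' h1' h2' (x2 M) hx2M
      rw [g1, hh0b, hfix1 _ hxn] at this
      simpa [g2, g3, Prod.ext_iff] using this
  · intro m hmM
    rcases Nat.eq_zero_or_pos m with rfl | hpos
    · exact hh0a
    have hxm : x2 m ∈ Set.Icc (x2 0) (x2 M) :=
      ⟨mono2 0 m (Nat.zero_le _) hmM, mono2 m M hmM le_rfl⟩
    by_cases hc : m ≤ K 1 0
    · obtain ⟨-, g1, g2, g3⟩ := hj21 m hpos hc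
      have := hT3 m hpos hc (x1 N) hx1N
      rw [g1, hf0b, hfix2 _ hxm] at this
      simpa [g2, g3, Prod.ext_iff] using this
    · set m' := m - K 1 0 with hm'
      have h1' : 1 ≤ m' := by omega
      have h2' : m' ≤ K 1 1 := by omega
      have hne : K 1 0 + m' = m := by omega
      obtain ⟨-, g1, g2, g3⟩ := hj22 m' h1' h2'
      rw [hne] at g1 g2 g3
      have := hT4 m' h1' h2' (x2 M) hx2M
      rw [g1, hh0b, hfix2 _ hxm] at this
      simpa [g2, g3, Prod.ext_iff] using this
end

section
/- Let F = {(x, f_0(x)) : x ∈ [x_0^1, x_N^1]} ⊂ ℝ³ and H = {(x, h_0(x)) : x ∈ [x_0^2, x_M^2]} ⊂ ℝ³ be the graphs of the fixed point (f_0, h_0) of T. Then F and H are nonempty compact sets satisfying F = (⋃_{n=1}^{K^{11}} w_n^{11}(F)) ∪ (⋃_{n=1}^{K^{12}} w_n^{12}(H)) and H = (⋃_{n=1}^{K^{21}} w_n^{21}(F)) ∪ (⋃_{n=1}^{K^{22}} w_n^{22}(H)). -/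
/-! The fixed-point equation says that `w_n^{rs}` sends the point `(x, k x)` of the graph of
the source function `k` to `(L x, g (L x))`, a point of the graph of the target function `g`,
where `L = L_n^{rs}`. The join-up conditions make `L` map the source interval onto the `n`-th
subinterval of the target partition (increasingly, since both are nondegenerate), so `w_n^{rs}`
maps the source graph onto the piece of the target graph over that subinterval, and these pieces
cover the target graph. Nonemptiness and compactness hold because a graph over a compact interval
is a continuous image of it. -/

open Set

theorem exists_mem_Icc_sub_one_of_mem_Icc {α : Type*} [LinearOrder α] {x : ℕ → α} {N : ℕ}
    (hN : 1 ≤ N) {t : α} (ht : t ∈ Icc (x 0) (x N)) :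
    ∃ m ∈ Icc 1 N, t ∈ Icc (x (m - 1)) (x m) := by
  classical
  -- `m` is the first index `≥ 1` with `t ≤ x m`; minimality gives `x (m - 1) < t` unless `m = 1`.
  have hex : ∃ m, 1 ≤ m ∧ t ≤ x m := ⟨N, hN, ht.2⟩
  obtain ⟨hm1, htm⟩ := Nat.find_spec hex
  refine ⟨Nat.find hex, ⟨hm1, Nat.find_min' hex ⟨hN, ht.2⟩⟩, ?_, htm⟩
  rcases hm1.eq_or_lt with h | h
  · rw [← h]
    exact ht.1
  · exact (not_le.1 fun h' => Nat.find_min hex (by omega) ⟨by omega, h'⟩).le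

theorem Icc_eq_union_biUnion_Icc {α : Type*} [LinearOrder α] {x : ℕ → α} {N K₁ K₂ : ℕ}
    (hK : K₁ + K₂ = N) (hN : 1 ≤ N) (hx : MonotoneOn x (Iic N)) :
    Icc (x 0) (x N) =
      (⋃ n ∈ Icc 1 K₁, Icc (x (n - 1)) (x n)) ∪
        ⋃ n ∈ Icc 1 K₂, Icc (x (K₁ + n - 1)) (x (K₁ + n)) := by
  have hxle : ∀ {i j}, i ≤ j → j ≤ N → x i ≤ x j := fun hij hj =>
    hx (mem_Iic.2 (hij.trans hj)) (mem_Iic.2 hj) hij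
  ext t
  simp only [mem_union, mem_iUnion₂, exists_prop]
  constructor
  · intro ht
    obtain ⟨m, ⟨hm1, hmN⟩, htm⟩ := exists_mem_Icc_sub_one_of_mem_Icc hN ht
    by_cases hmK : m ≤ K₁
    · exact Or.inl ⟨m, ⟨hm1, hmK⟩, htm⟩
    · refine Or.inr ⟨m - K₁, ⟨by omega, by omega⟩, ?_⟩
      rwa [show K₁ + (m - K₁) = m by omega]
  · rintro (⟨n, ⟨hn1, hn2⟩, ht⟩ | ⟨n, ⟨hn1, hn2⟩, ht⟩) <;>
      exact Icc_subset_Icc (hxle (by omega) (by omega)) (hxle (by omega) le_rfl) ht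

theorem graph_Icc_eq_union_of_blocks {α β : Type*} [LinearOrder α] {g : α → β} {x : ℕ → α}
    {N K₁ K₂ : ℕ} {F₁ F₂ : ℕ → Set (α × β)}
    (hK : K₁ + K₂ = N) (hN : 1 ≤ N) (hx : MonotoneOn x (Iic N))
    (hF₁ : ∀ n ∈ Icc 1 K₁, F₁ n = (fun t => (t, g t)) '' Icc (x (n - 1)) (x n))
    (hF₂ : ∀ n ∈ Icc 1 K₂, F₂ n = (fun t => (t, g t)) '' Icc (x (K₁ + n - 1)) (x (K₁ + n))) :
    (fun t => (t, g t)) '' Icc (x 0) (x N) = (⋃ n ∈ Icc 1 K₁, F₁ n) ∪ ⋃ n ∈ Icc 1 K₂, F₂ n := by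
  rw [iUnion₂_congr hF₁, iUnion₂_congr hF₂, Icc_eq_union_biUnion_Icc hK hN hx, image_union,
    image_iUnion₂, image_iUnion₂]

theorem image_graph_eq_graph_image {α β γ : Type*} {W : α × β → α × γ} {k : α → β} {g : α → γ}
    {L : α → α} {s : Set α} (hW : ∀ x ∈ s, W (x, k x) = (L x, g (L x))) :
    W '' ((fun x => (x, k x)) '' s) = (fun t => (t, g t)) '' (L '' s) := by
  rw [image_image, image_image]
  exact image_congr hW

theorem image_affine_Icc_of_endpoints {a b p q u v : ℝ} (hpq : p < q) (huv : u < v)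
    (hp : a * p + b = u) (hq : a * q + b = v) :
    (fun x => a * x + b) '' Icc p q = Icc u v := by
  have ha : 0 < a := by nlinarith
  rw [image_affine_Icc' ha, hp, hq]

theorem image_graph_of_affine_fixedPoint {g k : ℝ → ℝ × ℝ} {W : ℝ × ℝ × ℝ → ℝ × ℝ × ℝ}
    {a b c d e f α β γ p q u v yp zp yq zq yu zu yv zv : ℝ}
    (hW : ∀ P : ℝ × ℝ × ℝ, W P =
      (a * P.1 + b, c * P.1 + α * P.2.1 + β * P.2.2 + d, e * P.1 + γ * P.2.2 + f))
    (hpq : p < q) (huv : u < v)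
    (hp : W (p, yp, zp) = (u, yu, zu)) (hq : W (q, yq, zq) = (v, yv, zv))
    (hfix : ∀ x ∈ Icc p q, g (a * x + b) =
      (c * x + α * (k x).1 + β * (k x).2 + d, e * x + γ * (k x).2 + f)) :
    W '' ((fun x => (x, k x)) '' Icc p q) = (fun t => (t, g t)) '' Icc u v := by
  rw [hW] at hp hq
  rw [image_graph_eq_graph_image (g := g) (L := fun x => a * x + b)
      fun x hx => by rw [hW, hfix x hx],
    image_affine_Icc_of_endpoints hpq huv (congrArg Prod.fst hp) (congrArg Prod.fst hq)]

theorem stmt_11_general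
    (N M : ℕ) (hN : 2 ≤ N) (hM : 2 ≤ M)
    (x1 y1 z1 x2 y2 z2 : ℕ → ℝ)
    (hx1 : ∀ i, i < N → x1 i < x1 (i + 1))
    (hx2 : ∀ j, j < M → x2 j < x2 (j + 1))
    (K : Fin 2 → Fin 2 → ℕ)
    (hK1 : K 0 0 + K 0 1 = N) (hK2 : K 1 0 + K 1 1 = M)
    (a b c d e f α β γ : Fin 2 → Fin 2 → ℕ → ℝ)
    (w : Fin 2 → Fin 2 → ℕ → ℝ × ℝ × ℝ → ℝ × ℝ × ℝ)
    (hw : ∀ r s n p, w r s n p =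
      (a r s n * p.1 + b r s n,
       c r s n * p.1 + α r s n * p.2.1 + β r s n * p.2.2 + d r s n,
       e r s n * p.1 + γ r s n * p.2.2 + f r s n))
    (hj11 : ∀ n, 1 ≤ n → n ≤ K 0 0 →
      w 0 0 n (x1 0, y1 0, z1 0) = (x1 (n - 1), y1 (n - 1), z1 (n - 1)) ∧
      w 0 0 n (x1 N, y1 N, z1 N) = (x1 n, y1 n, z1 n))
    (hj12 : ∀ n, 1 ≤ n → n ≤ K 0 1 →
      w 0 1 n (x2 0, y2 0, z2 0) =
        (x1 (K 0 0 + n - 1), y1 (K 0 0 + n - 1), z1 (K 0 0 + n - 1)) ∧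
      w 0 1 n (x2 M, y2 M, z2 M) = (x1 (K 0 0 + n), y1 (K 0 0 + n), z1 (K 0 0 + n)))
    (hj21 : ∀ n, 1 ≤ n → n ≤ K 1 0 →
      w 1 0 n (x1 0, y1 0, z1 0) = (x2 (n - 1), y2 (n - 1), z2 (n - 1)) ∧
      w 1 0 n (x1 N, y1 N, z1 N) = (x2 n, y2 n, z2 n))
    (hj22 : ∀ n, 1 ≤ n → n ≤ K 1 1 →
      w 1 1 n (x2 0, y2 0, z2 0) =
        (x2 (K 1 0 + n - 1), y2 (K 1 0 + n - 1), z2 (K 1 0 + n - 1)) ∧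
      w 1 1 n (x2 M, y2 M, z2 M) = (x2 (K 1 0 + n), y2 (K 1 0 + n), z2 (K 1 0 + n)))
    (f0 h0 : ℝ → ℝ × ℝ)
    (hf0 : (ContinuousOn f0 (Set.Icc (x1 0) (x1 N)) ∧ f0 (x1 0) = (y1 0, z1 0) ∧ f0 (x1 N) = (y1 N, z1 N)))
    (hh0 : (ContinuousOn h0 (Set.Icc (x2 0) (x2 M)) ∧ h0 (x2 0) = (y2 0, z2 0) ∧ h0 (x2 M) = (y2 M, z2 M)))
    (hfix : (∀ n, 1 ≤ n → n ≤ K 0 0 → ∀ x ∈ Set.Icc (x1 0) (x1 N),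
      f0 (a 0 0 n * x + b 0 0 n) =
        (c 0 0 n * x + α 0 0 n * (f0 x).1 + β 0 0 n * (f0 x).2 + d 0 0 n,
         e 0 0 n * x + γ 0 0 n * (f0 x).2 + f 0 0 n)) ∧
    (∀ n, 1 ≤ n → n ≤ K 0 1 → ∀ x ∈ Set.Icc (x2 0) (x2 M),
      f0 (a 0 1 n * x + b 0 1 n) =
        (c 0 1 n * x + α 0 1 n * (h0 x).1 + β 0 1 n * (h0 x).2 + d 0 1 n,
         e 0 1 n * x + γ 0 1 n * (h0 x).2 + f 0 1 n)) ∧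
    (∀ n, 1 ≤ n → n ≤ K 1 0 → ∀ x ∈ Set.Icc (x1 0) (x1 N),
      h0 (a 1 0 n * x + b 1 0 n) =
        (c 1 0 n * x + α 1 0 n * (f0 x).1 + β 1 0 n * (f0 x).2 + d 1 0 n,
         e 1 0 n * x + γ 1 0 n * (f0 x).2 + f 1 0 n)) ∧
    (∀ n, 1 ≤ n → n ≤ K 1 1 → ∀ x ∈ Set.Icc (x2 0) (x2 M),
      h0 (a 1 1 n * x + b 1 1 n) =
        (c 1 1 n * x + α 1 1 n * (h0 x).1 + β 1 1 n * (h0 x).2 + d 1 1 n,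
         e 1 1 n * x + γ 1 1 n * (h0 x).2 + f 1 1 n))) :
    ((fun x => (x, f0 x)) '' Set.Icc (x1 0) (x1 N)).Nonempty ∧
    IsCompact ((fun x => (x, f0 x)) '' Set.Icc (x1 0) (x1 N)) ∧
    ((fun x => (x, h0 x)) '' Set.Icc (x2 0) (x2 M)).Nonempty ∧
    IsCompact ((fun x => (x, h0 x)) '' Set.Icc (x2 0) (x2 M)) ∧
    ((fun x => (x, f0 x)) '' Set.Icc (x1 0) (x1 N) =
      (⋃ n ∈ Set.Icc 1 (K 0 0), w 0 0 n '' ((fun x => (x, f0 x)) '' Set.Icc (x1 0) (x1 N))) ∪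
      (⋃ n ∈ Set.Icc 1 (K 0 1), w 0 1 n '' ((fun x => (x, h0 x)) '' Set.Icc (x2 0) (x2 M)))) ∧
    ((fun x => (x, h0 x)) '' Set.Icc (x2 0) (x2 M) =
      (⋃ n ∈ Set.Icc 1 (K 1 0), w 1 0 n '' ((fun x => (x, f0 x)) '' Set.Icc (x1 0) (x1 N))) ∪
      (⋃ n ∈ Set.Icc 1 (K 1 1), w 1 1 n '' ((fun x => (x, h0 x)) '' Set.Icc (x2 0) (x2 M)))) := by
  obtain ⟨hfix₁₁, hfix₁₂, hfix₂₁, hfix₂₂⟩ := hfix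
  have hx1mono := strictMonoOn_Iic_of_lt_succ hx1
  have hx2mono := strictMonoOn_Iic_of_lt_succ hx2
  have hlt1 : ∀ {i j}, i < j → j ≤ N → x1 i < x1 j := fun hij hj =>
    hx1mono (mem_Iic.2 (hij.le.trans hj)) (mem_Iic.2 hj) hij
  have hlt2 : ∀ {i j}, i < j → j ≤ M → x2 i < x2 j := fun hij hj =>
    hx2mono (mem_Iic.2 (hij.le.trans hj)) (mem_Iic.2 hj) hij
  have hN1 : x1 0 < x1 N := hlt1 (by omega) le_rfl
  have hM1 : x2 0 < x2 M := hlt2 (by omega) le_rfl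
  refine ⟨⟨_, mem_image_of_mem _ (left_mem_Icc.2 hN1.le)⟩,
    isCompact_Icc.image_of_continuousOn (continuousOn_id.prodMk hf0.1),
    ⟨_, mem_image_of_mem _ (left_mem_Icc.2 hM1.le)⟩,
    isCompact_Icc.image_of_continuousOn (continuousOn_id.prodMk hh0.1),
    graph_Icc_eq_union_of_blocks hK1 (by omega) hx1mono.monotoneOn
      (fun n ⟨hn1, hn2⟩ => ?_) (fun n ⟨hn1, hn2⟩ => ?_),
    graph_Icc_eq_union_of_blocks hK2 (by omega) hx2mono.monotoneOn
      (fun n ⟨hn1, hn2⟩ => ?_) (fun n ⟨hn1, hn2⟩ => ?_)⟩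
  · exact image_graph_of_affine_fixedPoint (hw 0 0 n) hN1 (hlt1 (by omega) (by omega))
      (hj11 n hn1 hn2).1 (hj11 n hn1 hn2).2 (hfix₁₁ n hn1 hn2)
  · exact image_graph_of_affine_fixedPoint (hw 0 1 n) hM1 (hlt1 (by omega) (by omega))
      (hj12 n hn1 hn2).1 (hj12 n hn1 hn2).2 (hfix₁₂ n hn1 hn2)
  · exact image_graph_of_affine_fixedPoint (hw 1 0 n) hN1 (hlt2 (by omega) (by omega))
      (hj21 n hn1 hn2).1 (hj21 n hn1 hn2).2 (hfix₂₁ n hn1 hn2)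
  · exact image_graph_of_affine_fixedPoint (hw 1 1 n) hM1 (hlt2 (by omega) (by omega))
      (hj22 n hn1 hn2).1 (hj22 n hn1 hn2).2 (hfix₂₂ n hn1 hn2)

theorem stmt_11
    (N M : ℕ) (hN : 2 ≤ N) (hM : 2 ≤ M)
    (x1 y1 z1 x2 y2 z2 : ℕ → ℝ)
    (hx1 : ∀ i, i < N → x1 i < x1 (i + 1))
    (hx2 : ∀ j, j < M → x2 j < x2 (j + 1))
    (hstar1 : ∀ i, 1 ≤ i → i ≤ N → x1 i - x1 (i - 1) < x2 M - x2 0)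
    (hstar2 : ∀ j, 1 ≤ j → j ≤ M → x2 j - x2 (j - 1) < x1 N - x1 0)
    (K : Fin 2 → Fin 2 → ℕ)
    (hK1 : K 0 0 + K 0 1 = N) (hK2 : K 1 0 + K 1 1 = M)
    (a b c d e f α β γ : Fin 2 → Fin 2 → ℕ → ℝ)
    (hα : ∀ r s n, 1 ≤ n → n ≤ K r s → |α r s n| < 1)
    (hγ : ∀ r s n, 1 ≤ n → n ≤ K r s → |γ r s n| < 1)
    (hβγ : ∀ r s n, 1 ≤ n → n ≤ K r s → |β r s n| + |γ r s n| < 1)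
    (w : Fin 2 → Fin 2 → ℕ → ℝ × ℝ × ℝ → ℝ × ℝ × ℝ)
    (hw : ∀ r s n p, w r s n p =
      (a r s n * p.1 + b r s n,
       c r s n * p.1 + α r s n * p.2.1 + β r s n * p.2.2 + d r s n,
       e r s n * p.1 + γ r s n * p.2.2 + f r s n))
    (hj11 : ∀ n, 1 ≤ n → n ≤ K 0 0 →
      w 0 0 n (x1 0, y1 0, z1 0) = (x1 (n - 1), y1 (n - 1), z1 (n - 1)) ∧
      w 0 0 n (x1 N, y1 N, z1 N) = (x1 n, y1 n, z1 n))
    (hj12 : ∀ n, 1 ≤ n → n ≤ K 0 1 →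
      w 0 1 n (x2 0, y2 0, z2 0) =
        (x1 (K 0 0 + n - 1), y1 (K 0 0 + n - 1), z1 (K 0 0 + n - 1)) ∧
      w 0 1 n (x2 M, y2 M, z2 M) = (x1 (K 0 0 + n), y1 (K 0 0 + n), z1 (K 0 0 + n)))
    (hj21 : ∀ n, 1 ≤ n → n ≤ K 1 0 →
      w 1 0 n (x1 0, y1 0, z1 0) = (x2 (n - 1), y2 (n - 1), z2 (n - 1)) ∧
      w 1 0 n (x1 N, y1 N, z1 N) = (x2 n, y2 n, z2 n))
    (hj22 : ∀ n, 1 ≤ n → n ≤ K 1 1 →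
      w 1 1 n (x2 0, y2 0, z2 0) =
        (x2 (K 1 0 + n - 1), y2 (K 1 0 + n - 1), z2 (K 1 0 + n - 1)) ∧
      w 1 1 n (x2 M, y2 M, z2 M) = (x2 (K 1 0 + n), y2 (K 1 0 + n), z2 (K 1 0 + n)))
    (f0 h0 : ℝ → ℝ × ℝ)
    (hf0 : (ContinuousOn f0 (Set.Icc (x1 0) (x1 N)) ∧ f0 (x1 0) = (y1 0, z1 0) ∧ f0 (x1 N) = (y1 N, z1 N)))
    (hh0 : (ContinuousOn h0 (Set.Icc (x2 0) (x2 M)) ∧ h0 (x2 0) = (y2 0, z2 0) ∧ h0 (x2 M) = (y2 M, z2 M)))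
    (hfix : (∀ n, 1 ≤ n → n ≤ K 0 0 → ∀ x ∈ Set.Icc (x1 0) (x1 N),
      f0 (a 0 0 n * x + b 0 0 n) =
        (c 0 0 n * x + α 0 0 n * (f0 x).1 + β 0 0 n * (f0 x).2 + d 0 0 n,
         e 0 0 n * x + γ 0 0 n * (f0 x).2 + f 0 0 n)) ∧
    (∀ n, 1 ≤ n → n ≤ K 0 1 → ∀ x ∈ Set.Icc (x2 0) (x2 M),
      f0 (a 0 1 n * x + b 0 1 n) =
        (c 0 1 n * x + α 0 1 n * (h0 x).1 + β 0 1 n * (h0 x).2 + d 0 1 n,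
         e 0 1 n * x + γ 0 1 n * (h0 x).2 + f 0 1 n)) ∧
    (∀ n, 1 ≤ n → n ≤ K 1 0 → ∀ x ∈ Set.Icc (x1 0) (x1 N),
      h0 (a 1 0 n * x + b 1 0 n) =
        (c 1 0 n * x + α 1 0 n * (f0 x).1 + β 1 0 n * (f0 x).2 + d 1 0 n,
         e 1 0 n * x + γ 1 0 n * (f0 x).2 + f 1 0 n)) ∧
    (∀ n, 1 ≤ n → n ≤ K 1 1 → ∀ x ∈ Set.Icc (x2 0) (x2 M),
      h0 (a 1 1 n * x + b 1 1 n) =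
        (c 1 1 n * x + α 1 1 n * (h0 x).1 + β 1 1 n * (h0 x).2 + d 1 1 n,
         e 1 1 n * x + γ 1 1 n * (h0 x).2 + f 1 1 n))) :
    ((fun x => (x, f0 x)) '' Set.Icc (x1 0) (x1 N)).Nonempty ∧
    IsCompact ((fun x => (x, f0 x)) '' Set.Icc (x1 0) (x1 N)) ∧
    ((fun x => (x, h0 x)) '' Set.Icc (x2 0) (x2 M)).Nonempty ∧
    IsCompact ((fun x => (x, h0 x)) '' Set.Icc (x2 0) (x2 M)) ∧
    ((fun x => (x, f0 x)) '' Set.Icc (x1 0) (x1 N) =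
      (⋃ n ∈ Set.Icc 1 (K 0 0), w 0 0 n '' ((fun x => (x, f0 x)) '' Set.Icc (x1 0) (x1 N))) ∪
      (⋃ n ∈ Set.Icc 1 (K 0 1), w 0 1 n '' ((fun x => (x, h0 x)) '' Set.Icc (x2 0) (x2 M)))) ∧
    ((fun x => (x, h0 x)) '' Set.Icc (x2 0) (x2 M) =
      (⋃ n ∈ Set.Icc 1 (K 1 0), w 1 0 n '' ((fun x => (x, f0 x)) '' Set.Icc (x1 0) (x1 N))) ∪
      (⋃ n ∈ Set.Icc 1 (K 1 1), w 1 1 n '' ((fun x => (x, h0 x)) '' Set.Icc (x2 0) (x2 M)))) :=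
  stmt_11_general N M hN hM x1 y1 z1 x2 y2 z2 hx1 hx2 K hK1 hK2 a b c d e f α β γ w hw hj11 hj12
    hj21 hj22 f0 h0 hf0 hh0 hfix
end
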